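/- arXiv:2403.02326 — 11 statements merged into one kernel-verified Lean document; each statement's English description precedes it below -/
import Mathlib

section
/- Let τ > 0, let X be a real Banach space and U a real separable Hilbert space, and let B : U → X be a bounded linear operator. Let R(t,s) ∈ L(X), for 0 ≤ s ≤ t ≤ τ, be a family of bounded linear operators such that (t,s) ↦ R(t,s)x is continuous for every x ∈ X, (t,s) ↦ R(t,s) is continuous in the operator norm on the set {(t,s) : 0 ≤ s < t ≤ τ}, and R(t,s) is a compact operator whenever t − s > 0. Then for every t ∈ (0,τ], the bounded linear operator Φ_t : L²([0,τ];U) → X defined by Φ_t(g) = ∫₀ᵗ R(t,s) B g(s) ds is a compact operator. -/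
/-!
Cut the integral at some `a < t`. For `s ∈ [0, a]` the operators `R(t,s) ∘ B` form a
norm-compact family of compact operators, so the images of the unit ball under all of them lie
in one compact convex set `D`. Writing the integrand as `‖g s‖ • R(t,s) B (g s / ‖g s‖)` shows
that the integral over `(0, a]` is a weighted average of points of `D`, hence lies in
`√(μ (0, a]) • D`. On `(a, t]` the operators are uniformly bounded (Banach–Steinhaus applied to
the strongly continuous family), so by Cauchy–Schwarz that part of the integral has norm
`O(√(t - a))` on the unit ball. The image of the unit ball is thus within every `δ > 0` of a
compact set, hence totally bounded.
-/

open MeasureTheory Set Metric Filter Topology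
open scoped ENNReal NNReal Pointwise

theorem Metric.totallyBounded_of_forall_subset_thickening {α : Type*} [PseudoMetricSpace α]
    {s : Set α} (h : ∀ ε > 0, ∃ t, TotallyBounded t ∧ s ⊆ thickening ε t) :
    TotallyBounded s := by
  refine totallyBounded_iff.2 fun ε hε => ?_
  obtain ⟨t, ht, hst⟩ := h (ε / 2) (half_pos hε)
  obtain ⟨F, hF, htF⟩ := totallyBounded_iff.1 ht (ε / 2) (half_pos hε)
  refine ⟨F, hF, fun x hx => ?_⟩
  obtain ⟨z, hz, hxz⟩ := mem_thickening_iff.1 (hst hx)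
  obtain ⟨y, hy, hzy⟩ := mem_iUnion₂.1 (htF hz)
  exact mem_iUnion₂.2 ⟨y, hy, mem_ball.2 (by linarith [dist_triangle x z y, mem_ball.1 hzy])⟩

theorem isCompactOperator_of_forall_subset_thickening {E F : Type*} [SeminormedAddCommGroup E]
    [PseudoMetricSpace F] [CompleteSpace F] {f : E → F}
    (h : ∀ ε > 0, ∃ K, IsCompact K ∧ f '' closedBall 0 1 ⊆ thickening ε K) :
    IsCompactOperator f := by
  have htb : TotallyBounded (f '' closedBall 0 1) :=
    totallyBounded_of_forall_subset_thickening fun ε hε =>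
      let ⟨K, hK, hsub⟩ := h ε hε
      ⟨K, hK.totallyBounded, hsub⟩
  exact ⟨_, htb.closure.isCompact_of_isClosed isClosed_closure,
    mem_of_superset (closedBall_mem_nhds 0 one_pos) fun x hx =>
      subset_closure (mem_image_of_mem f hx)⟩

section OperatorFamily

variable {𝕜 E F : Type*} [NontriviallyNormedField 𝕜] [SeminormedAddCommGroup E] [NormedSpace 𝕜 E]
  [SeminormedAddCommGroup F] [NormedSpace 𝕜 F]

theorem IsCompact.totallyBounded_biUnion_image_closedBall {Q : Set (E →L[𝕜] F)}
    (hQ : IsCompact Q) (hc : ∀ T ∈ Q, IsCompactOperator T) :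
    TotallyBounded (⋃ T ∈ Q, T '' closedBall 0 1) := by
  refine totallyBounded_of_forall_subset_thickening fun ε hε => ?_
  obtain ⟨G, hGQ, hG, hQG⟩ := hQ.finite_cover_balls hε
  refine ⟨⋃ T ∈ G, T '' closedBall 0 1, (totallyBounded_biUnion hG).2 fun T hT => ?_, ?_⟩
  · obtain ⟨K, hK, hTK⟩ :=
      (hc T (hGQ hT)).image_closedBall_subset_compact (f := (T : E →ₗ[𝕜] F)) 1
    exact hK.totallyBounded.subset hTK
  · simp only [iUnion_subset_iff]
    rintro T hT _ ⟨x, hx, rfl⟩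
    obtain ⟨S, hSG, hTS⟩ := mem_iUnion₂.1 (hQG hT)
    refine mem_thickening_iff.2 ⟨S x, mem_biUnion hSG (mem_image_of_mem S hx), ?_⟩
    calc dist (T x) (S x) = ‖(T - S) x‖ := by rw [dist_eq_norm, sub_apply]
      _ ≤ ‖T - S‖ * 1 := (T - S).le_opNorm_of_le (mem_closedBall_zero_iff.1 hx)
      _ < ε := by rw [mul_one, ← dist_eq_norm]; exact hTS

theorem IsCompact.exists_bound_of_continuousOn_apply [CompleteSpace E] {α : Type*}
    [TopologicalSpace α] {S : Set α} (hS : IsCompact S) {K : α → E →L[𝕜] F}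
    (hK : ∀ x, ContinuousOn (fun a => K a x) S) : ∃ M, ∀ a ∈ S, ‖K a‖ ≤ M := by
  obtain ⟨M, hM⟩ := banach_steinhaus (g := fun a : S => K a) fun x =>
    let ⟨C, hC⟩ := hS.exists_bound_of_continuousOn (hK x)
    ⟨C, fun a => hC a a.2⟩
  exact ⟨M, fun a ha => hM ⟨a, ha⟩⟩

end OperatorFamily

theorem Convex.smul_set_subset_smul_set_of_le {𝕜 E : Type*} [Field 𝕜] [LinearOrder 𝕜]
    [IsStrictOrderedRing 𝕜] [AddCommGroup E] [Module 𝕜 E] {D : Set E} (hD : Convex 𝕜 D)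
    (h0 : (0 : E) ∈ D) {c C : 𝕜} (hc : 0 ≤ c) (hcC : c ≤ C) : c • D ⊆ C • D := by
  rcases hc.eq_or_lt with rfl | hc
  · rintro _ ⟨d, -, rfl⟩
    exact ⟨0, h0, by simp⟩
  · rintro _ ⟨d, hd, rfl⟩
    obtain ⟨e, he, rfl⟩ := hD.mem_smul_of_zero_mem h0 hd ((one_le_div hc).2 hcC)
    exact ⟨e, he, by simp only [smul_smul, mul_div_cancel₀ _ hc.ne']⟩

section LpOnFiniteMeasureSet

variable {α E : Type*} [MeasurableSpace α] {μ : Measure α} [NormedAddCommGroup E] {A : Set α}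

theorem MeasureTheory.Lp.integrableOn_of_measure_ne_top {p : ℝ≥0∞} (hp : 1 ≤ p) (g : Lp E p μ)
    (hA : μ A ≠ ∞) : IntegrableOn g A μ := by
  have : IsFiniteMeasure (μ.restrict A) := isFiniteMeasure_restrict.2 hA
  exact ((Lp.memLp g).restrict A).integrable hp

theorem setIntegral_norm_le_sqrt_measureReal_mul_norm (g : Lp E 2 μ)
    (hA : μ A ≠ ∞) : ∫ s in A, ‖g s‖ ∂μ ≤ √(μ.real A) * ‖g‖ := by
  have hg : AEStronglyMeasurable g (μ.restrict A) := (Lp.aestronglyMeasurable g).restrict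
  have holder := eLpNorm_le_eLpNorm_mul_rpow_measure_univ (p := 1) (q := 2) one_le_two hg
  rw [Measure.restrict_apply_univ] at holder
  norm_num at holder
  rw [integral_norm_eq_lintegral_enorm hg, ← eLpNorm_one_eq_lintegral_enorm, Lp.norm_def,
    Real.sqrt_eq_rpow, measureReal_def, ENNReal.toReal_rpow, mul_comm, ← ENNReal.toReal_mul]
  refine ENNReal.toReal_mono (ENNReal.mul_ne_top (Lp.eLpNorm_ne_top g)
    (ENNReal.rpow_ne_top_of_nonneg (by norm_num) hA)) (holder.trans ?_)
  exact mul_le_mul_left (eLpNorm_mono_measure _ Measure.restrict_le_self) _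

end LpOnFiniteMeasureSet

section Integration

variable {α E F : Type*} [MeasurableSpace α] {μ : Measure α}
  [NormedAddCommGroup E] [NormedSpace ℝ E] [NormedAddCommGroup F] [NormedSpace ℝ F]
  {K : α → E →L[ℝ] F} {A : Set α} {M : ℝ}

theorem Convex.integral_smul_mem_smul [CompleteSpace F] {D : Set F} (hD : Convex ℝ D)
    (hDc : IsClosed D) (hDne : D.Nonempty) {w : α → ℝ≥0} (hw : AEMeasurable w μ)
    (hwi : Integrable (fun s => (w s : ℝ)) μ) {u : α → F} (hu : ∀ᵐ s ∂μ, u s ∈ D)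
    (hwu : Integrable (fun s => w s • u s) μ) :
    ∫ s, w s • u s ∂μ ∈ (∫ s, (w s : ℝ) ∂μ) • D := by
  set ν := μ.withDensity fun s => (w s : ℝ≥0∞)
  have : IsFiniteMeasure ν := isFiniteMeasure_withDensity (by simpa using hwi.2.ne)
  have hint : ∫ s, w s • u s ∂μ = ∫ s, u s ∂ν := (integral_withDensity_eq_integral_smul₀ hw u).symm
  have hmass : ∫ s, (w s : ℝ) ∂μ = ν.real univ := by
    simpa [ν, NNReal.smul_def] using
      (integral_withDensity_eq_integral_smul₀ hw fun _ => (1 : ℝ)).symm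
  rw [hint, hmass]
  rcases eq_or_ne ν 0 with hν | hν
  · rw [hν, measureReal_zero_apply, zero_smul_set hDne, integral_zero_measure]
    exact Set.zero_mem_zero
  · have : NeZero ν := ⟨hν⟩
    have huν : Integrable u ν := (integrable_withDensity_iff_integrable_smul₀ hw).2 hwu
    have hDν : ∀ᵐ s ∂ν, u s ∈ D := (withDensity_absolutelyContinuous μ _).ae_le hu
    rw [← measure_smul_average]
    exact smul_mem_smul_set (hD.average_mem hDc hDν huν)

theorem integral_apply_mem_smul_of_mapsTo [CompleteSpace F] {D : Set F} (hD : Convex ℝ D)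
    (hDc : IsClosed D) (hDne : D.Nonempty) {T : α → E →L[ℝ] F} {f : α → E}
    (hTD : ∀ᵐ s ∂μ, MapsTo (T s) (closedBall 0 1) D) (hf : Integrable f μ)
    (hTf : Integrable (fun s => T s (f s)) μ) :
    ∫ s, T s (f s) ∂μ ∈ (∫ s, ‖f s‖ ∂μ) • D := by
  have hsplit : ∀ s, ‖f s‖₊ • (‖f s‖⁻¹ • T s (f s)) = T s (f s) := by
    intro s
    rcases eq_or_ne (f s) 0 with h | h
    · simp [h]
    · rw [NNReal.smul_def, coe_nnnorm, smul_smul, mul_inv_cancel₀ (norm_ne_zero_iff.2 h),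
        one_smul]
  have hmem : ∀ᵐ s ∂μ, ‖f s‖⁻¹ • T s (f s) ∈ D := by
    filter_upwards [hTD] with s hs
    rw [← map_smul]
    refine hs (mem_closedBall_zero_iff.2 ?_)
    rw [norm_smul, norm_inv, norm_norm]
    exact inv_mul_le_one_of_le₀ le_rfl (norm_nonneg _)
  simpa only [hsplit, coe_nnnorm] using hD.integral_smul_mem_smul hDc hDne
    hf.aestronglyMeasurable.nnnorm.aemeasurable (by simpa using hf.norm) hmem
    (by simpa only [hsplit] using hTf)

theorem integrableOn_apply_of_norm_le (hK : AEStronglyMeasurable K (μ.restrict A))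
    (hAm : MeasurableSet A) (hA : μ A ≠ ∞) (hKM : ∀ s ∈ A, ‖K s‖ ≤ M) (g : Lp E 2 μ) :
    IntegrableOn (fun s => K s (g s)) A μ := by
  have hg := Lp.integrableOn_of_measure_ne_top one_le_two g hA
  refine (hg.norm.const_mul M).mono'
    ((ContinuousLinearMap.id ℝ (E →L[ℝ] F)).aestronglyMeasurable_comp₂ hK hg.1) ?_
  filter_upwards [ae_restrict_mem hAm] with s hs
  exact (K s).le_of_opNorm_le (hKM s hs) _

theorem norm_setIntegral_apply_le (hM : 0 ≤ M) (hAm : MeasurableSet A) (hA : μ A ≠ ∞)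
    (hKM : ∀ s ∈ A, ‖K s‖ ≤ M) (g : Lp E 2 μ) :
    ‖∫ s in A, K s (g s) ∂μ‖ ≤ M * √(μ.real A) * ‖g‖ :=
  calc ‖∫ s in A, K s (g s) ∂μ‖ ≤ ∫ s in A, M * ‖g s‖ ∂μ := by
        refine norm_integral_le_of_norm_le
          ((Lp.integrableOn_of_measure_ne_top one_le_two g hA).norm.const_mul M) ?_
        filter_upwards [ae_restrict_mem hAm] with s hs
        exact (K s).le_of_opNorm_le (hKM s hs) _
    _ = M * ∫ s in A, ‖g s‖ ∂μ := integral_const_mul _ _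
    _ ≤ M * (√(μ.real A) * ‖g‖) := by
        gcongr
        exact setIntegral_norm_le_sqrt_measureReal_mul_norm g hA
    _ = M * √(μ.real A) * ‖g‖ := (mul_assoc _ _ _).symm

theorem exists_isCompact_forall_setIntegral_apply_mem [CompleteSpace F] (hAm : MeasurableSet A)
    (hA : μ A ≠ ∞) {Q : Set (E →L[ℝ] F)} (hQ : IsCompact Q) (hQne : Q.Nonempty)
    (hQc : ∀ T ∈ Q, IsCompactOperator T) (hKQ : ∀ s ∈ A, K s ∈ Q)
    (hK : AEStronglyMeasurable K (μ.restrict A)) :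
    ∃ D, IsCompact D ∧ ∀ g : Lp E 2 μ, ‖g‖ ≤ 1 → ∫ s in A, K s (g s) ∂μ ∈ D := by
  set S := ⋃ T ∈ Q, T '' closedBall 0 1
  have hS : TotallyBounded S := hQ.totallyBounded_biUnion_image_closedBall hQc
  have hconv : Convex ℝ (closure (convexHull ℝ S)) := (convex_convexHull ℝ S).closure
  have hsub : ∀ T ∈ Q, MapsTo T (closedBall 0 1) (closure (convexHull ℝ S)) := fun T hT x hx =>
    subset_closure (subset_convexHull ℝ S (mem_biUnion hT (mem_image_of_mem T hx)))
  have h0 : (0 : F) ∈ closure (convexHull ℝ S) := by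
    simpa using hsub _ hQne.some_mem (mem_closedBall_self zero_le_one)
  obtain ⟨M, hM⟩ := hQ.isBounded.exists_norm_le
  refine ⟨√(μ.real A) • closure (convexHull ℝ S),
    ((totallyBounded_convexHull.2 hS).closure.isCompact_of_isClosed isClosed_closure).smul _,
    fun g hg => hconv.smul_set_subset_smul_set_of_le h0 (integral_nonneg fun _ => norm_nonneg _)
      ?_ (integral_apply_mem_smul_of_mapsTo hconv isClosed_closure ⟨0, h0⟩ ?_
        (Lp.integrableOn_of_measure_ne_top one_le_two g hA)
        (integrableOn_apply_of_norm_le hK hAm hA (fun s hs => hM _ (hKQ s hs)) g))⟩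
  · calc ∫ s in A, ‖g s‖ ∂μ ≤ √(μ.real A) * ‖g‖ :=
          setIntegral_norm_le_sqrt_measureReal_mul_norm g hA
      _ ≤ √(μ.real A) := mul_le_of_le_one_right (Real.sqrt_nonneg _) hg
  · filter_upwards [ae_restrict_mem hAm] with s hs using hsub _ (hKQ s hs)

end Integration

theorem tendsto_measure_Ioc_nhdsLT (μ : Measure ℝ) [IsFiniteMeasureOnCompacts μ]
    [NullSingletonClass μ] (t : ℝ) : Tendsto (fun a => μ (Ioc a t)) (𝓝[<] t) (𝓝 0) := by
  have hlen : Tendsto (fun a => t - a) (𝓝[<] t) (𝓝 0) := by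
    simpa using (tendsto_const_nhds.sub tendsto_id : Tendsto (fun a => t - a) (𝓝 t) _).mono_left
      nhdsWithin_le_nhds
  refine tendsto_of_tendsto_of_tendsto_of_le_of_le tendsto_const_nhds
    ((tendsto_measure_Icc μ t).comp hlen) (fun _ => zero_le) fun a => measure_mono ?_
  intro s hs
  constructor <;> linarith [hs.1, hs.2]

theorem isCompactOperator_setIntegral_Ioc_apply {E F : Type*} [NormedAddCommGroup E]
    [NormedSpace ℝ E] [NormedAddCommGroup F] [NormedSpace ℝ F] [CompleteSpace F]
    {μ : Measure ℝ} [IsFiniteMeasure μ] [NullSingletonClass μ] {K : ℝ → E →L[ℝ] F} {b t M : ℝ}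
    (hbt : b < t) (hK_cont : ContinuousOn K (Ico b t)) (hK_bdd : ∀ s ∈ Ioc b t, ‖K s‖ ≤ M)
    (hK_cpt : ∀ s ∈ Ico b t, IsCompactOperator (K s)) :
    IsCompactOperator (fun g : Lp E 2 μ => ∫ s in Ioc b t, K s (g s) ∂μ) := by
  have hM : 0 ≤ M := (norm_nonneg _).trans (hK_bdd t ⟨hbt, le_rfl⟩)
  have hK_meas : AEStronglyMeasurable K (μ.restrict (Ioc b t)) := by
    rw [← Measure.restrict_congr_set (Ioo_ae_eq_Ioc (μ := μ))]
    exact (hK_cont.mono Ioo_subset_Ico_self).aestronglyMeasurable measurableSet_Ioo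
  refine isCompactOperator_of_forall_subset_thickening fun δ hδ => ?_
  have hsmall : ∀ᶠ a in 𝓝[<] t, M * √(μ.real (Ioc a t)) < δ := by
    have := (((ENNReal.tendsto_toReal ENNReal.zero_ne_top).comp
      (tendsto_measure_Ioc_nhdsLT μ t)).sqrt).const_mul M
    simp only [ENNReal.toReal_zero, Real.sqrt_zero, mul_zero] at this
    exact this.eventually (gt_mem_nhds hδ)
  obtain ⟨a, hsmall, hba, hat⟩ := (hsmall.and (Ioo_mem_nhdsLT hbt)).exists
  have hK_cont' : ContinuousOn K (Icc b a) := hK_cont.mono (Icc_subset_Ico_right hat)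
  obtain ⟨D, hD, hmem⟩ := exists_isCompact_forall_setIntegral_apply_mem (μ := μ) (K := K)
    (A := Ioc b a) measurableSet_Ioc (measure_ne_top _ _) (isCompact_Icc.image_of_continuousOn hK_cont')
    ((nonempty_Icc.2 hba.le).image K)
    (forall_mem_image.2 fun s hs => hK_cpt s ⟨hs.1, hs.2.trans_lt hat⟩)
    (fun s hs => mem_image_of_mem K (Ioc_subset_Icc_self hs))
    ((hK_cont'.mono Ioc_subset_Icc_self).aestronglyMeasurable measurableSet_Ioc)
  refine ⟨D, hD, ?_⟩
  rintro _ ⟨g, hg, rfl⟩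
  rw [mem_closedBall_zero_iff] at hg
  have hint := integrableOn_apply_of_norm_le hK_meas measurableSet_Ioc (measure_ne_top _ _) hK_bdd g
  have hsplit : ∫ s in Ioc b t, K s (g s) ∂μ =
      ∫ s in Ioc b a, K s (g s) ∂μ + ∫ s in Ioc a t, K s (g s) ∂μ := by
    rw [← setIntegral_union (Ioc_disjoint_Ioc_of_le le_rfl) measurableSet_Ioc
      (hint.mono_set (Ioc_subset_Ioc_right hat.le)) (hint.mono_set (Ioc_subset_Ioc_left hba.le)),
      Ioc_union_Ioc_eq_Ioc hba.le hat.le]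
  refine mem_thickening_iff.2 ⟨_, hmem g hg, ?_⟩
  simp only [dist_eq_norm, hsplit, add_sub_cancel_left]
  calc ‖∫ s in Ioc a t, K s (g s) ∂μ‖ ≤ M * √(μ.real (Ioc a t)) * ‖g‖ :=
        norm_setIntegral_apply_le hM measurableSet_Ioc (measure_ne_top _ _)
          (fun s hs => hK_bdd s (Ioc_subset_Ioc_left hba.le hs)) g
    _ ≤ M * √(μ.real (Ioc a t)) := mul_le_of_le_one_right (by positivity) hg
    _ < δ := hsmall

theorem stmt_0_general
    {X U : Type*} [NormedAddCommGroup X] [NormedSpace ℝ X] [CompleteSpace X]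
    [NormedAddCommGroup U] [InnerProductSpace ℝ U]
    (τ : ℝ)
    (B : U →L[ℝ] X)
    (R : ℝ → ℝ → X →L[ℝ] X)
    -- strong continuity of (t,s) ↦ R(t,s)x on the triangle 0 ≤ s ≤ t ≤ τ
    (hR_strong : ∀ x : X, ContinuousOn (fun p : ℝ × ℝ => R p.1 p.2 x)
      {p : ℝ × ℝ | 0 ≤ p.2 ∧ p.2 ≤ p.1 ∧ p.1 ≤ τ})
    -- operator-norm continuity of (t,s) ↦ R(t,s) on {0 ≤ s < t ≤ τ}
    (hR_norm : ContinuousOn (fun p : ℝ × ℝ => R p.1 p.2)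
      {p : ℝ × ℝ | 0 ≤ p.2 ∧ p.2 < p.1 ∧ p.1 ≤ τ})
    -- compactness of R(t,s) for t - s > 0
    (hR_cpt : ∀ t s : ℝ, 0 ≤ s → s < t → t ≤ τ → IsCompactOperator (R t s)) :
    ∀ t : ℝ, 0 < t → t ≤ τ →
      IsCompactOperator
        (fun g : Lp U 2 ((volume : Measure ℝ).restrict (Set.Icc 0 τ)) =>
          ∫ s in Set.Ioc (0:ℝ) t, R t s (B (g s))
            ∂((volume : Measure ℝ).restrict (Set.Icc 0 τ))) := by
  intro t ht htτ
  have hslice : Continuous fun s : ℝ => (t, s) := Continuous.prodMk_right t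
  obtain ⟨M, hM⟩ := isCompact_Icc.exists_bound_of_continuousOn_apply fun x =>
    (hR_strong x).comp hslice.continuousOn fun s (hs : s ∈ Icc 0 t) => ⟨hs.1, hs.2, htτ⟩
  have : IsFiniteMeasure ((volume : Measure ℝ).restrict (Icc 0 τ)) :=
    isFiniteMeasure_restrict.2 measure_Icc_lt_top.ne
  exact isCompactOperator_setIntegral_Ioc_apply (K := fun s => (R t s).comp B) ht
    ((hR_norm.comp hslice.continuousOn fun s hs => ⟨hs.1, hs.2, htτ⟩).clm_comp continuousOn_const)
    (fun s hs => (ContinuousLinearMap.opNorm_comp_le _ _).trans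
      (mul_le_mul_of_nonneg_right (hM s (Ioc_subset_Icc_self hs)) (norm_nonneg B)))
    (fun s hs => (hR_cpt t s hs.1 hs.2 htτ).comp_clm B)

/-- For every `t ∈ (0, τ]`, the bounded linear operator
`Φ_t : L²([0,τ];U) → X`, `Φ_t g = ∫₀ᵗ R(t,s) B g(s) ds`, is a compact operator. -/
theorem stmt_0
    {X U : Type*} [NormedAddCommGroup X] [NormedSpace ℝ X] [CompleteSpace X]
    [NormedAddCommGroup U] [InnerProductSpace ℝ U] [CompleteSpace U]
    [TopologicalSpace.SeparableSpace U]
    (τ : ℝ) (hτ : 0 < τ)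
    (B : U →L[ℝ] X)
    (R : ℝ → ℝ → X →L[ℝ] X)
    -- strong continuity of (t,s) ↦ R(t,s)x on the triangle 0 ≤ s ≤ t ≤ τ
    (hR_strong : ∀ x : X, ContinuousOn (fun p : ℝ × ℝ => R p.1 p.2 x)
      {p : ℝ × ℝ | 0 ≤ p.2 ∧ p.2 ≤ p.1 ∧ p.1 ≤ τ})
    -- operator-norm continuity of (t,s) ↦ R(t,s) on {0 ≤ s < t ≤ τ}
    (hR_norm : ContinuousOn (fun p : ℝ × ℝ => R p.1 p.2)
      {p : ℝ × ℝ | 0 ≤ p.2 ∧ p.2 < p.1 ∧ p.1 ≤ τ})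
    -- compactness of R(t,s) for t - s > 0
    (hR_cpt : ∀ t s : ℝ, 0 ≤ s → s < t → t ≤ τ → IsCompactOperator (R t s)) :
    ∀ t : ℝ, 0 < t → t ≤ τ →
      IsCompactOperator
        (fun g : Lp U 2 ((volume : Measure ℝ).restrict (Set.Icc 0 τ)) =>
          ∫ s in Set.Ioc (0:ℝ) t, R t s (B (g s))
            ∂((volume : Measure ℝ).restrict (Set.Icc 0 τ))) :=
  stmt_0_general τ B R hR_strong hR_norm hR_cpt
end

section
/- Let τ > 0 and let X be a real Banach space. Let U(t,s), R(t,s) ∈ L(X), for 0 ≤ s ≤ t ≤ τ, be two families of bounded linear operators such that: (t,s) ↦ U(t,s)x and (t,s) ↦ R(t,s)x are continuous for every x ∈ X; both families are uniformly bounded in operator norm; both (t,s) ↦ U(t,s) and (t,s) ↦ R(t,s) are continuous in operator norm on {(t,s) : 0 ≤ s < t ≤ τ}; U(t,t) = I and U(t,r)U(r,s) = U(t,s) whenever 0 ≤ s ≤ r ≤ t ≤ τ. Suppose there exist families Q(r,s), P(r,s) ∈ L(X) (0 ≤ s ≤ r ≤ τ), uniformly bounded in operator norm and with (r,s) ↦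 Q(r,s)x and (r,s) ↦ P(r,s)x continuous for each x ∈ X, such that for all 0 ≤ s ≤ t ≤ τ and x ∈ X: R(t,s)x = U(t,s)x + ∫ₛᵗ U(t,r)Q(r,s)x dr and U(t,s)x = R(t,s)x + ∫ₛᵗ R(t,r)P(r,s)x dr. Then U(t,s) is a compact operator for all t − s > 0 if and only if R(t,s) is a compact operator for all t − s > 0. -/
/-!
Both directions are one statement: if `B(t,s)x = A(t,s)x + ∫ₛᵗ A(t,r)G(r,s)x dr` with `A(t,r)`
compact and norm-continuous in `r` on `[s,t)`, then `B(t,s)` is compact. Only the integral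
term needs an argument. Let `Kᵈ = ∫ₛᵈ A(t,r)G(r,s) dr`, a strong integral, and let `π` be the
quotient map modulo the closed subspace of compact operators. For `d` slightly above `c`,
`Kᵈ - Kᶜ` lies within `sup_{[c,d]} ‖A(t,r) - A(t,c)‖ · ‖G‖ · (d - c)` of the compact operator
`A(t,c) ∘ ∫_c^d G(r,s) dr`, so `d ↦ π(Kᵈ)` has right derivative zero on `[s,t)`. Being
continuous on `[s,t]`, it is constant, equal to `π(Kˢ) = 0`.
-/

open Set Filter Topology Interval

section

variable {𝕜 α F G : Type*} [NontriviallyNormedField 𝕜] [TopologicalSpace α]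
  [NormedAddCommGroup F] [NormedSpace 𝕜 F] [NormedAddCommGroup G] [NormedSpace 𝕜 G]

theorem Continuous.clm_apply_of_bounded {V : α → F →L[𝕜] G} {w : α → F} {C : ℝ}
    (hw : Continuous w) (hV : ∀ y, Continuous fun a => V a y) (hC : ∀ a, ‖V a‖ ≤ C) :
    Continuous fun a => V a (w a) := by
  refine continuous_iff_continuousAt.2 fun a₀ => ?_
  have hsmall : Tendsto (fun a => V a (w a - w a₀)) (𝓝 a₀) (𝓝 0) := by
    refine squeeze_zero_norm (fun a => (V a).le_of_opNorm_le (hC a) _) ?_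
    simpa using ((hw.tendsto a₀).sub_const (w a₀)).norm.const_mul C
  simpa [ContinuousAt] using hsmall.add ((hV (w a₀)).tendsto a₀)

end

section StrongIntegral

variable {E G : Type*} [NormedAddCommGroup E] [NormedSpace ℝ E] [NormedAddCommGroup G]
  [NormedSpace ℝ G] {Φ : ℝ → E →L[ℝ] G} {C : ℝ}

noncomputable def strongIntervalIntegral (hΦ : ∀ x, Continuous fun r => Φ r x)
    (hC : ∀ r, ‖Φ r‖ ≤ C) (a b : ℝ) : E →L[ℝ] G :=
  LinearMap.mkContinuous
    { toFun := fun x => ∫ r in a..b, Φ r x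
      map_add' := fun x y => by
        simp only [map_add]
        exact intervalIntegral.integral_add ((hΦ x).intervalIntegrable _ _)
          ((hΦ y).intervalIntegrable _ _)
      map_smul' := fun c x => by
        simp only [map_smul, RingHom.id_apply]
        exact intervalIntegral.integral_smul c _ }
    (C * |b - a|)
    fun x => by
      simpa [mul_right_comm] using intervalIntegral.norm_integral_le_of_norm_le_const
        fun r _ => (Φ r).le_of_opNorm_le (hC r) x

theorem ContinuousLinearMap.opNorm_le_of_eq_intervalIntegral {T : E →L[ℝ] G} {a b C' : ℝ}
    (hT : ∀ x, T x = ∫ r in a..b, Φ r x) (hC' : ∀ r ∈ Ι a b, ‖Φ r‖ ≤ C') :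
    ‖T‖ ≤ C' * |b - a| := by
  have hnonneg : 0 ≤ C' * |b - a| := by
    rcases eq_or_ne a b with rfl | hab
    · simp
    obtain ⟨r, hr⟩ := nonempty_uIoc.2 hab
    exact mul_nonneg ((norm_nonneg _).trans (hC' r hr)) (abs_nonneg _)
  refine T.opNorm_le_bound hnonneg fun x => ?_
  simpa [hT, mul_right_comm] using intervalIntegral.norm_integral_le_of_norm_le_const
    fun r hr => (Φ r).le_of_opNorm_le (hC' r hr) x

variable (hΦ : ∀ x, Continuous fun r => Φ r x) (hC : ∀ r, ‖Φ r‖ ≤ C)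

@[simp]
theorem strongIntervalIntegral_apply (a b : ℝ) (x : E) :
    strongIntervalIntegral hΦ hC a b x = ∫ r in a..b, Φ r x :=
  rfl

theorem strongIntervalIntegral_add_adjacent (a b c : ℝ) :
    strongIntervalIntegral hΦ hC a b + strongIntervalIntegral hΦ hC b c =
      strongIntervalIntegral hΦ hC a c := by
  ext x
  exact intervalIntegral.integral_add_adjacent_intervals ((hΦ x).intervalIntegrable _ _)
    ((hΦ x).intervalIntegrable _ _)

theorem continuous_strongIntervalIntegral (a : ℝ) :
    Continuous (strongIntervalIntegral hΦ hC a) := by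
  refine (LipschitzWith.of_dist_le' (K := C) fun b b' => ?_).continuous
  rw [dist_eq_norm, ← strongIntervalIntegral_add_adjacent hΦ hC a b' b, add_sub_cancel_left,
    Real.dist_eq]
  exact ContinuousLinearMap.opNorm_le_of_eq_intervalIntegral (fun _ => rfl) fun r _ => hC r

end StrongIntegral

section Compactness

variable {E F G : Type*} [NormedAddCommGroup E] [NormedSpace ℝ E] [NormedAddCommGroup F]
  [NormedSpace ℝ F] [CompleteSpace F] [NormedAddCommGroup G] [NormedSpace ℝ G] [CompleteSpace G]
  {V : ℝ → F →L[ℝ] G} {W : ℝ → E →L[ℝ] F} {CW CΦ : ℝ}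

-- Makes the quotient by the compact operators a normed space.
instance isClosed_compactOperator :
    IsClosed (compactOperator (RingHom.id ℝ) E G : Set (E →L[ℝ] G)) :=
  isClosed_setOfPred_isCompactOperator

local notation "𝒦" => compactOperator (RingHom.id ℝ) E G

theorem norm_strongIntervalIntegral_comp_sub_le (hW : ∀ x, Continuous fun r => W r x)
    (hCW : ∀ r, ‖W r‖ ≤ CW) (hΦ : ∀ x, Continuous fun r => (V r).comp (W r) x)
    (hCΦ : ∀ r, ‖(V r).comp (W r)‖ ≤ CΦ) {c d η : ℝ} (hη : ∀ r ∈ Ι c d, ‖V r - V c‖ ≤ η) :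
    ‖strongIntervalIntegral hΦ hCΦ c d - (V c).comp (strongIntervalIntegral hW hCW c d)‖ ≤
      η * CW * |d - c| := by
  refine ContinuousLinearMap.opNorm_le_of_eq_intervalIntegral
    (Φ := fun r => (V r - V c).comp (W r)) (fun x => ?_) fun r hr => ?_
  · simp only [FunLike.coe_sub, Pi.sub_apply, ContinuousLinearMap.coe_comp,
      Function.comp_apply, strongIntervalIntegral_apply]
    rw [← (V c).intervalIntegral_comp_comm ((hW x).intervalIntegrable _ _)]
    exact (intervalIntegral.integral_sub ((hΦ x).intervalIntegrable _ _)
      (((V c).continuous.comp (hW x)).intervalIntegrable _ _)).symm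
  · exact (ContinuousLinearMap.opNorm_comp_le _ _).trans
      (mul_le_mul (hη r hr) (hCW r) (norm_nonneg _) ((norm_nonneg _).trans (hη r hr)))

theorem hasDerivWithinAt_mkQ_strongIntervalIntegral (hW : ∀ x, Continuous fun r => W r x)
    (hCW : ∀ r, ‖W r‖ ≤ CW) (hΦ : ∀ x, Continuous fun r => (V r).comp (W r) x)
    (hCΦ : ∀ r, ‖(V r).comp (W r)‖ ≤ CΦ) (a : ℝ) {c : ℝ} (hVc : IsCompactOperator (V c))
    (hVn : ContinuousWithinAt V (Ici c) c) :
    HasDerivWithinAt (fun d => (𝒦).mkQ (strongIntervalIntegral hΦ hCΦ a d)) 0 (Ici c) c := by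
  refine (hasDerivWithinAt_iff_isLittleO (𝕜 := ℝ) (F := (E →L[ℝ] G) ⧸ 𝒦)).2 ?_
  refine Asymptotics.isLittleO_iff.2 fun ε hε => ?_
  have hCW0 : 0 ≤ CW := (norm_nonneg _).trans (hCW 0)
  obtain ⟨δ, hδ, hVδ⟩ := Metric.continuousWithinAt_iff.1 hVn (ε / (CW + 1)) (by positivity)
  filter_upwards [inter_mem_nhdsWithin (Ici c) (Metric.ball_mem_nhds c hδ)] with d ⟨hcd, hdδ⟩
  have hV_near : ∀ r ∈ Ι c d, ‖V r - V c‖ ≤ ε / (CW + 1) := by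
    intro r hr
    rw [uIoc_of_le hcd] at hr
    rw [← dist_eq_norm]
    refine (hVδ hr.1.le ?_).le
    rw [Real.dist_eq, abs_of_pos (sub_pos.2 hr.1)]
    exact (sub_le_sub_right hr.2 c).trans_lt ((le_abs_self _).trans_lt hdδ)
  have hcompact : (V c).comp (strongIntervalIntegral hW hCW c d) ∈ 𝒦 := hVc.comp_clm _
  calc ‖(𝒦).mkQ (strongIntervalIntegral hΦ hCΦ a d) -
        (𝒦).mkQ (strongIntervalIntegral hΦ hCΦ a c) -
        (d - c) • (0 : _)‖
      = ‖(𝒦).mkQ (strongIntervalIntegral hΦ hCΦ c d -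
          (V c).comp (strongIntervalIntegral hW hCW c d))‖ := by
        rw [← strongIntervalIntegral_add_adjacent hΦ hCΦ a c d]
        simp [(Submodule.Quotient.mk_eq_zero _).2 hcompact]
    _ ≤ ε / (CW + 1) * CW * |d - c| :=
        (Submodule.Quotient.norm_mk_le _ _).trans
          (norm_strongIntervalIntegral_comp_sub_le hW hCW hΦ hCΦ hV_near)
    _ ≤ ε * ‖d - c‖ := by
        rw [Real.norm_eq_abs]
        gcongr
        rw [div_mul_eq_mul_div, div_le_iff₀ (by positivity)]
        nlinarith

theorem isCompactOperator_intervalIntegral_of_continuous {CV a b : ℝ}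
    (hV : ∀ y, Continuous fun r => V r y) (hCV : ∀ r, ‖V r‖ ≤ CV)
    (hW : ∀ x, Continuous fun r => W r x) (hCW : ∀ r, ‖W r‖ ≤ CW) (hab : a ≤ b)
    (hVn : ContinuousOn V (Ico a b)) (hVc : ∀ r ∈ Ico a b, IsCompactOperator (V r)) :
    IsCompactOperator fun x => ∫ r in a..b, V r (W r x) := by
  have hΦ : ∀ x, Continuous fun r => (V r).comp (W r) x :=
    fun x => (hW x).clm_apply_of_bounded hV hCV
  have hCΦ : ∀ r, ‖(V r).comp (W r)‖ ≤ CV * CW := fun r =>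
    (ContinuousLinearMap.opNorm_comp_le _ _).trans
      (mul_le_mul (hCV r) (hCW r) (norm_nonneg _) ((norm_nonneg _).trans (hCV r)))
  have hderiv (c : ℝ) (hc : c ∈ Ico a b) :=
    hasDerivWithinAt_mkQ_strongIntervalIntegral hW hCW hΦ hCΦ a (hVc c hc)
      ((continuousWithinAt_Ico_iff_Ici hc.2).1 ((hVn c hc).mono (Ico_subset_Ico_left hc.1)))
  have hcont : Continuous fun d => (𝒦).mkQ (strongIntervalIntegral hΦ hCΦ a d) :=
    (𝒦).mkQL.continuous.comp (continuous_strongIntervalIntegral hΦ hCΦ a)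
  have hconst := constant_of_has_deriv_right_zero (E := (E →L[ℝ] G) ⧸ 𝒦) hcont.continuousOn
    hderiv b ⟨hab, le_rfl⟩
  have hzero : strongIntervalIntegral hΦ hCΦ a a = 0 := by ext; simp
  rw [hzero, map_zero, Submodule.mkQ_apply, Submodule.Quotient.mk_eq_zero] at hconst
  exact hconst

theorem isCompactOperator_intervalIntegral {CV a b : ℝ} (hab : a ≤ b)
    (hV : ∀ y, ContinuousOn (fun r => V r y) (Icc a b)) (hCV : ∀ r ∈ Icc a b, ‖V r‖ ≤ CV)
    (hW : ∀ x, ContinuousOn (fun r => W r x) (Icc a b)) (hCW : ∀ r ∈ Icc a b, ‖W r‖ ≤ CW)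
    (hVn : ContinuousOn V (Ico a b)) (hVc : ∀ r ∈ Ico a b, IsCompactOperator (V r)) :
    IsCompactOperator fun x => ∫ r in a..b, V r (W r x) := by
  set π : ℝ → ℝ := fun r => projIcc a b hab r
  have hπ : Continuous π := continuous_subtype_val.comp continuous_projIcc
  have hπ_mem (r : ℝ) : π r ∈ Icc a b := (projIcc a b hab r).2
  have hπ_eq {r : ℝ} (hr : r ∈ Icc a b) : π r = r := congrArg Subtype.val (projIcc_of_mem hab hr)
  have hint : (fun x => ∫ r in a..b, V r (W r x)) =
      fun x => ∫ r in a..b, V (π r) (W (π r) x) := by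
    funext x
    refine intervalIntegral.integral_congr fun r hr => ?_
    rw [uIcc_of_le hab] at hr
    simp only [hπ_eq hr]
  rw [hint]
  refine isCompactOperator_intervalIntegral_of_continuous
    (fun y => (hV y).comp_continuous hπ hπ_mem) (fun r => hCV _ (hπ_mem r))
    (fun x => (hW x).comp_continuous hπ hπ_mem) (fun r => hCW _ (hπ_mem r)) hab
    (hVn.congr fun r hr => by simp only [hπ_eq (Ico_subset_Icc_self hr)])
    fun r hr => by simpa only [hπ_eq (Ico_subset_Icc_self hr)] using hVc r hr

end Compactness

theorem isCompactOperator_of_eq_add_intervalIntegral {X : Type*} [NormedAddCommGroup X]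
    [NormedSpace ℝ X] [CompleteSpace X] {τ MA MG : ℝ} {A B G : ℝ → ℝ → X →L[ℝ] X}
    (hA_strong : ∀ x : X, ContinuousOn (fun p : ℝ × ℝ => A p.1 p.2 x)
      {p : ℝ × ℝ | 0 ≤ p.2 ∧ p.2 ≤ p.1 ∧ p.1 ≤ τ})
    (hG_strong : ∀ x : X, ContinuousOn (fun p : ℝ × ℝ => G p.1 p.2 x)
      {p : ℝ × ℝ | 0 ≤ p.2 ∧ p.2 ≤ p.1 ∧ p.1 ≤ τ})
    (hMA : ∀ t s : ℝ, 0 ≤ s → s ≤ t → t ≤ τ → ‖A t s‖ ≤ MA)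
    (hMG : ∀ r s : ℝ, 0 ≤ s → s ≤ r → r ≤ τ → ‖G r s‖ ≤ MG)
    (hA_norm : ContinuousOn (fun p : ℝ × ℝ => A p.1 p.2)
      {p : ℝ × ℝ | 0 ≤ p.2 ∧ p.2 < p.1 ∧ p.1 ≤ τ})
    (hrep : ∀ t s : ℝ, 0 ≤ s → s ≤ t → t ≤ τ → ∀ x : X,
      B t s x = A t s x + ∫ r in s..t, A t r (G r s x))
    (hAc : ∀ t s : ℝ, 0 ≤ s → s < t → t ≤ τ → IsCompactOperator (A t s))
    {t s : ℝ} (hs : 0 ≤ s) (hst : s < t) (htτ : t ≤ τ) :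
    IsCompactOperator (B t s) := by
  have hslice_t : Continuous fun r : ℝ => (t, r) := continuous_const.prodMk continuous_id
  have hslice_s : Continuous fun r : ℝ => (r, s) := continuous_id.prodMk continuous_const
  have hint : IsCompactOperator fun x => ∫ r in s..t, A t r (G r s x) :=
    isCompactOperator_intervalIntegral hst.le
      (fun y => (hA_strong y).comp hslice_t.continuousOn fun r hr => ⟨hs.trans hr.1, hr.2, htτ⟩)
      (fun r hr => hMA t r (hs.trans hr.1) hr.2 htτ)
      (fun y => (hG_strong y).comp hslice_s.continuousOn fun r hr => ⟨hs, hr.1, hr.2.trans htτ⟩)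
      (fun r hr => hMG r s hs hr.1 (hr.2.trans htτ))
      (hA_norm.comp hslice_t.continuousOn fun r hr => ⟨hs.trans hr.1, hr.2, htτ⟩)
      fun r hr => hAc t r (hs.trans hr.1) hr.2 htτ
  rw [show ⇑(B t s) = _ from funext (hrep t s hs hst.le htτ)]
  exact (hAc t s hs hst htτ).add hint

theorem stmt_2_general
    {X : Type*} [NormedAddCommGroup X] [NormedSpace ℝ X] [CompleteSpace X]
    (τ : ℝ)
    (U R Q P : ℝ → ℝ → X →L[ℝ] X)
    -- strong continuity on the triangle 0 ≤ s ≤ t ≤ τ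
    (hU_strong : ∀ x : X, ContinuousOn (fun p : ℝ × ℝ => U p.1 p.2 x)
      {p : ℝ × ℝ | 0 ≤ p.2 ∧ p.2 ≤ p.1 ∧ p.1 ≤ τ})
    (hR_strong : ∀ x : X, ContinuousOn (fun p : ℝ × ℝ => R p.1 p.2 x)
      {p : ℝ × ℝ | 0 ≤ p.2 ∧ p.2 ≤ p.1 ∧ p.1 ≤ τ})
    -- uniform boundedness in operator norm
    (MU MR MQ MP : ℝ)
    (hMU : ∀ t s : ℝ, 0 ≤ s → s ≤ t → t ≤ τ → ‖U t s‖ ≤ MU)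
    (hMR : ∀ t s : ℝ, 0 ≤ s → s ≤ t → t ≤ τ → ‖R t s‖ ≤ MR)
    (hMQ : ∀ r s : ℝ, 0 ≤ s → s ≤ r → r ≤ τ → ‖Q r s‖ ≤ MQ)
    (hMP : ∀ r s : ℝ, 0 ≤ s → s ≤ r → r ≤ τ → ‖P r s‖ ≤ MP)
    -- operator-norm continuity on {0 ≤ s < t ≤ τ}
    (hU_norm : ContinuousOn (fun p : ℝ × ℝ => U p.1 p.2)
      {p : ℝ × ℝ | 0 ≤ p.2 ∧ p.2 < p.1 ∧ p.1 ≤ τ})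
    (hR_norm : ContinuousOn (fun p : ℝ × ℝ => R p.1 p.2)
      {p : ℝ × ℝ | 0 ≤ p.2 ∧ p.2 < p.1 ∧ p.1 ≤ τ})
    -- strong continuity of Q and P on the triangle
    (hQ_strong : ∀ x : X, ContinuousOn (fun p : ℝ × ℝ => Q p.1 p.2 x)
      {p : ℝ × ℝ | 0 ≤ p.2 ∧ p.2 ≤ p.1 ∧ p.1 ≤ τ})
    (hP_strong : ∀ x : X, ContinuousOn (fun p : ℝ × ℝ => P p.1 p.2 x)
      {p : ℝ × ℝ | 0 ≤ p.2 ∧ p.2 ≤ p.1 ∧ p.1 ≤ τ})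
    -- the two integral representations
    (hRU : ∀ t s : ℝ, 0 ≤ s → s ≤ t → t ≤ τ → ∀ x : X,
      R t s x = U t s x + ∫ r in s..t, U t r (Q r s x))
    (hUR : ∀ t s : ℝ, 0 ≤ s → s ≤ t → t ≤ τ → ∀ x : X,
      U t s x = R t s x + ∫ r in s..t, R t r (P r s x)) :
    (∀ t s : ℝ, 0 ≤ s → s < t → t ≤ τ → IsCompactOperator (U t s)) ↔
    (∀ t s : ℝ, 0 ≤ s → s < t → t ≤ τ → IsCompactOperator (R t s)) :=
  ⟨fun hU _ _ hs hst htτ => isCompactOperator_of_eq_add_intervalIntegral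
      hU_strong hQ_strong hMU hMQ hU_norm hRU hU hs hst htτ,
    fun hR _ _ hs hst htτ => isCompactOperator_of_eq_add_intervalIntegral
      hR_strong hP_strong hMR hMP hR_norm hUR hR hs hst htτ⟩

/-- Given the mutual integral representations
`R(t,s)x = U(t,s)x + ∫ₛᵗ U(t,r)Q(r,s)x dr` and
`U(t,s)x = R(t,s)x + ∫ₛᵗ R(t,r)P(r,s)x dr`,
`U(t,s)` is compact for all `t - s > 0` iff `R(t,s)` is compact for all `t - s > 0`. -/
theorem stmt_2
    {X : Type*} [NormedAddCommGroup X] [NormedSpace ℝ X] [CompleteSpace X]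
    (τ : ℝ) (hτ : 0 < τ)
    (U R Q P : ℝ → ℝ → X →L[ℝ] X)
    -- strong continuity on the triangle 0 ≤ s ≤ t ≤ τ
    (hU_strong : ∀ x : X, ContinuousOn (fun p : ℝ × ℝ => U p.1 p.2 x)
      {p : ℝ × ℝ | 0 ≤ p.2 ∧ p.2 ≤ p.1 ∧ p.1 ≤ τ})
    (hR_strong : ∀ x : X, ContinuousOn (fun p : ℝ × ℝ => R p.1 p.2 x)
      {p : ℝ × ℝ | 0 ≤ p.2 ∧ p.2 ≤ p.1 ∧ p.1 ≤ τ})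
    -- uniform boundedness in operator norm
    (MU MR MQ MP : ℝ)
    (hMU : ∀ t s : ℝ, 0 ≤ s → s ≤ t → t ≤ τ → ‖U t s‖ ≤ MU)
    (hMR : ∀ t s : ℝ, 0 ≤ s → s ≤ t → t ≤ τ → ‖R t s‖ ≤ MR)
    (hMQ : ∀ r s : ℝ, 0 ≤ s → s ≤ r → r ≤ τ → ‖Q r s‖ ≤ MQ)
    (hMP : ∀ r s : ℝ, 0 ≤ s → s ≤ r → r ≤ τ → ‖P r s‖ ≤ MP)
    -- operator-norm continuity on {0 ≤ s < t ≤ τ}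
    (hU_norm : ContinuousOn (fun p : ℝ × ℝ => U p.1 p.2)
      {p : ℝ × ℝ | 0 ≤ p.2 ∧ p.2 < p.1 ∧ p.1 ≤ τ})
    (hR_norm : ContinuousOn (fun p : ℝ × ℝ => R p.1 p.2)
      {p : ℝ × ℝ | 0 ≤ p.2 ∧ p.2 < p.1 ∧ p.1 ≤ τ})
    -- evolution-system properties of U
    (hU_id : ∀ t : ℝ, 0 ≤ t → t ≤ τ → U t t = ContinuousLinearMap.id ℝ X)
    (hU_comp : ∀ t r s : ℝ, 0 ≤ s → s ≤ r → r ≤ t → t ≤ τ →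
      (U t r).comp (U r s) = U t s)
    -- strong continuity of Q and P on the triangle
    (hQ_strong : ∀ x : X, ContinuousOn (fun p : ℝ × ℝ => Q p.1 p.2 x)
      {p : ℝ × ℝ | 0 ≤ p.2 ∧ p.2 ≤ p.1 ∧ p.1 ≤ τ})
    (hP_strong : ∀ x : X, ContinuousOn (fun p : ℝ × ℝ => P p.1 p.2 x)
      {p : ℝ × ℝ | 0 ≤ p.2 ∧ p.2 ≤ p.1 ∧ p.1 ≤ τ})
    -- the two integral representations
    (hRU : ∀ t s : ℝ, 0 ≤ s → s ≤ t → t ≤ τ → ∀ x : X,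
      R t s x = U t s x + ∫ r in s..t, U t r (Q r s x))
    (hUR : ∀ t s : ℝ, 0 ≤ s → s ≤ t → t ≤ τ → ∀ x : X,
      U t s x = R t s x + ∫ r in s..t, R t r (P r s x)) :
    (∀ t s : ℝ, 0 ≤ s → s < t → t ≤ τ → IsCompactOperator (U t s)) ↔
    (∀ t s : ℝ, 0 ≤ s → s < t → t ≤ τ → IsCompactOperator (R t s)) :=
  stmt_2_general τ U R Q P hU_strong hR_strong MU MR MQ MP hMU hMR hMQ hMP hU_norm hR_norm hQ_strong
    hP_strong hRU hUR
end

section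
/- Let τ > 0, 0 < β < 1, N' > 0 and q ≥ 0, and let X be a real Banach space. Let S(t,s) ∈ L(X) be defined for 0 ≤ s < t ≤ τ with ‖S(t,s)‖ ≤ N'·(t−s)^{−β}, such that for each fixed t the map r ↦ S(t,r)x is continuous on [0,t) for every x ∈ X. Let Q(r,s) ∈ L(X) (0 ≤ s ≤ r ≤ τ) be a family with (r,s) ↦ Q(r,s)x continuous for every x ∈ X and ‖Q(r,s)‖ ≤ q. Then for all 0 ≤ s < t ≤ τ and all x ∈ X, the Bochner integral ∫ₛᵗ S(t,r)Q(r,s)x dr exists and ‖S(t,s)x + ∫ₛᵗ S(t,r)Q(r,s)x dr‖ ≤ ((1 + qτ)N'/(1−β)) · (t−s)^{−β} · ‖x‖. -/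
/-!
The integrand `r ↦ S(t,r) Q(r,s) x` is continuous on `(s,t)`: strong continuity of `S(t,·)`
combines with continuity of `Q(·,s) x` because `‖S(t,r)‖ ≤ N'(t-r)^{-β}` is locally bounded there.
It is dominated by `q N' ‖x‖ (t-r)^{-β}`, which is integrable since `β < 1`, with integral
`q N' ‖x‖ (t-s)^{1-β}/(1-β) ≤ q τ N' ‖x‖ (t-s)^{-β}/(1-β)`; adding `‖S(t,s) x‖ ≤ N'(t-s)^{-β}‖x‖`
and using `1 ≤ 1/(1-β)` gives the bound.
-/

open MeasureTheory Filter Set Topology Interval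

section OperatorFamilies

variable {α 𝕜 E F : Type*} [NontriviallyNormedField 𝕜]
  [SeminormedAddCommGroup E] [NormedSpace 𝕜 E] [SeminormedAddCommGroup F] [NormedSpace 𝕜 F]

theorem Filter.Tendsto.clm_apply_of_isBoundedUnder {l : Filter α} {A : α → E →L[𝕜] F}
    {g : α → E} {x : E} {y : F} (hA : Tendsto (fun a => A a x) l (𝓝 y))
    (hAb : IsBoundedUnder (· ≤ ·) l fun a => ‖A a‖) (hg : Tendsto g l (𝓝 x)) :
    Tendsto (fun a => A a (g a)) l (𝓝 y) := by
  obtain ⟨M, hM⟩ := hAb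
  have hsmall : Tendsto (fun a => A a (g a - x)) l (𝓝 0) := by
    refine squeeze_zero_norm' (a := fun a => M * ‖g a - x‖) ?_ ?_
    · filter_upwards [eventually_map.mp hM] with a ha
      exact (A a).le_of_opNorm_le ha _
    · simpa using (hg.sub_const x).norm.const_mul M
  simpa [map_sub] using hA.add hsmall

theorem ContinuousOn.clm_apply_of_norm_le [TopologicalSpace α] {A : α → E →L[𝕜] F} {g : α → E}
    {B : α → ℝ} {s : Set α} (hA : ∀ x, ContinuousOn (fun a => A a x) s) (hg : ContinuousOn g s)
    (hB : ContinuousOn B s) (hAB : ∀ a ∈ s, ‖A a‖ ≤ B a) :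
    ContinuousOn (fun a => A a (g a)) s := fun a ha =>
  (hA (g a) a ha).tendsto.clm_apply_of_isBoundedUnder
    ((hB a ha).tendsto.isBoundedUnder_le.mono_le (eventually_nhdsWithin_of_forall hAB))
    (hg a ha).tendsto

end OperatorFamilies

theorem intervalIntegrable_sub_rpow {a s t : ℝ} (ha : -1 < a) :
    IntervalIntegrable (fun r => (t - r) ^ a) volume s t := by
  simpa using
    ((intervalIntegral.intervalIntegrable_rpow' (a := 0) (b := t - s) ha).comp_sub_left t).symm

theorem integral_sub_rpow {a s t : ℝ} (ha : -1 < a) :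
    ∫ r in s..t, (t - r) ^ a = (t - s) ^ (a + 1) / (a + 1) := by
  rw [intervalIntegral.integral_comp_sub_left (fun u => u ^ a), sub_self,
    integral_rpow (Or.inl ha), Real.zero_rpow (by linarith), sub_zero]

theorem intervalIntegrable_of_norm_le_sub_rpow {E : Type*} [NormedAddCommGroup E] {f : ℝ → E}
    {a C s t : ℝ} (ha : -1 < a) (hst : s ≤ t) (hf : ContinuousOn f (Ioo s t))
    (hb : ∀ r ∈ Ioo s t, ‖f r‖ ≤ C * (t - r) ^ a) :
    IntervalIntegrable f volume s t := by
  have hIoo : volume.restrict (Ι s t) = volume.restrict (Ioo s t) := by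
    rw [uIoc_of_le hst, Measure.restrict_congr_set Ioo_ae_eq_Ioc]
  refine ((intervalIntegrable_sub_rpow ha).const_mul C).mono_fun' ?_ ?_
  · rw [hIoo]; exact hf.aestronglyMeasurable measurableSet_Ioo
  · rw [hIoo]; exact (ae_restrict_mem measurableSet_Ioo).mono hb

theorem norm_integral_le_of_norm_le_sub_rpow {E : Type*} [NormedAddCommGroup E] [NormedSpace ℝ E]
    {f : ℝ → E} {a C s t : ℝ} (ha : -1 < a) (hst : s ≤ t)
    (hb : ∀ r ∈ Ioo s t, ‖f r‖ ≤ C * (t - r) ^ a) :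
    ‖∫ r in s..t, f r‖ ≤ C * ((t - s) ^ (a + 1) / (a + 1)) := by
  rw [← integral_sub_rpow ha, ← intervalIntegral.integral_const_mul]
  refine intervalIntegral.norm_integral_le_of_norm_le hst ?_
    ((intervalIntegrable_sub_rpow ha).const_mul C)
  filter_upwards [Measure.ae_ne volume t] with r hrt hr
  exact hb r ⟨hr.1, lt_of_le_of_ne hr.2 hrt⟩

theorem mul_rpow_neg_add_mul_rpow_div_le {β N q τ d c : ℝ} (hβ0 : 0 < β) (hβ1 : β < 1)
    (hN : 0 ≤ N) (hq : 0 ≤ q) (hc : 0 ≤ c) (hd : 0 < d) (hdτ : d ≤ τ) :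
    N * d ^ (-β) * c + q * N * c * (d ^ (-β + 1) / (-β + 1)) ≤
      (1 + q * τ) * N / (1 - β) * d ^ (-β) * c := by
  have hβ1' : 0 < 1 - β := by linarith
  calc N * d ^ (-β) * c + q * N * c * (d ^ (-β + 1) / (-β + 1))
      = N * d ^ (-β) * c / (1 - β) * ((1 - β) + q * d) := by
        rw [Real.rpow_add_one hd.ne', neg_add_eq_sub]
        field_simp
    _ ≤ N * d ^ (-β) * c / (1 - β) * (1 + q * τ) := by gcongr; linarith
    _ = (1 + q * τ) * N / (1 - β) * d ^ (-β) * c := by ring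

theorem stmt_3_general
    {X : Type*} [NormedAddCommGroup X] [NormedSpace ℝ X]
    (τ : ℝ)
    (β : ℝ) (hβ0 : 0 < β) (hβ1 : β < 1)
    (N' : ℝ) (hN' : 0 < N') (q : ℝ) (hq : 0 ≤ q)
    (S : ℝ → ℝ → X →L[ℝ] X) (Q : ℝ → ℝ → X →L[ℝ] X)
    -- norm bound on S on {0 ≤ s < t ≤ τ}
    (hS_bound : ∀ t s : ℝ, 0 ≤ s → s < t → t ≤ τ → ‖S t s‖ ≤ N' * (t - s) ^ (-β))
    -- for each fixed t, r ↦ S(t,r)x is continuous on [0, t)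
    (hS_cont : ∀ t : ℝ, ∀ x : X, ContinuousOn (fun r => S t r x) (Set.Ico 0 t))
    -- Q is strongly continuous on the triangle and uniformly bounded by q
    (hQ_strong : ∀ x : X, ContinuousOn (fun p : ℝ × ℝ => Q p.1 p.2 x)
      {p : ℝ × ℝ | 0 ≤ p.2 ∧ p.2 ≤ p.1 ∧ p.1 ≤ τ})
    (hQ_bound : ∀ r s : ℝ, 0 ≤ s → s ≤ r → r ≤ τ → ‖Q r s‖ ≤ q) :
    ∀ s t : ℝ, 0 ≤ s → s < t → t ≤ τ → ∀ x : X,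
      IntervalIntegrable (fun r => S t r (Q r s x)) volume s t ∧
      ‖S t s x + ∫ r in s..t, S t r (Q r s x)‖ ≤
        ((1 + q * τ) * N' / (1 - β)) * (t - s) ^ (-β) * ‖x‖ := by
  intro s t hs hst htτ x
  have hS_Ioo : ∀ r ∈ Ioo s t, ‖S t r‖ ≤ N' * (t - r) ^ (-β) := fun r hr =>
    hS_bound t r (hs.trans hr.1.le) hr.2 htτ
  have hcont : ContinuousOn (fun r => S t r (Q r s x)) (Ioo s t) :=
    ContinuousOn.clm_apply_of_norm_le
      (fun y => (hS_cont t y).mono fun r hr => ⟨hs.trans hr.1.le, hr.2⟩)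
      ((hQ_strong x).comp (Continuous.prodMk_left s).continuousOn
        fun r hr => ⟨hs, hr.1.le, hr.2.le.trans htτ⟩)
      (fun r hr => ((continuousAt_const.sub continuousAt_id).rpow_const
        (Or.inl (sub_ne_zero.2 hr.2.ne'))).const_mul N' |>.continuousWithinAt)
      hS_Ioo
  have hbound : ∀ r ∈ Ioo s t, ‖S t r (Q r s x)‖ ≤ q * N' * ‖x‖ * (t - r) ^ (-β) := by
    intro r hr
    calc ‖S t r (Q r s x)‖ ≤ N' * (t - r) ^ (-β) * (q * ‖x‖) :=
          (S t r).le_opNorm_of_le ((Q r s).le_of_opNorm_le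
            (hQ_bound r s hs hr.1.le (hr.2.le.trans htτ)) x) |>.trans <|
          mul_le_mul_of_nonneg_right (hS_Ioo r hr) (by positivity)
      _ = q * N' * ‖x‖ * (t - r) ^ (-β) := by ring
  have hβ : -1 < -β := by linarith
  refine ⟨intervalIntegrable_of_norm_le_sub_rpow hβ hst.le hcont hbound, ?_⟩
  calc ‖S t s x + ∫ r in s..t, S t r (Q r s x)‖
      ≤ ‖S t s x‖ + ‖∫ r in s..t, S t r (Q r s x)‖ := norm_add_le _ _
    _ ≤ N' * (t - s) ^ (-β) * ‖x‖ + q * N' * ‖x‖ * ((t - s) ^ (-β + 1) / (-β + 1)) :=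
      add_le_add ((S t s).le_of_opNorm_le (hS_bound t s hs hst htτ) x)
        (norm_integral_le_of_norm_le_sub_rpow hβ hst.le hbound)
    _ ≤ ((1 + q * τ) * N' / (1 - β)) * (t - s) ^ (-β) * ‖x‖ :=
      mul_rpow_neg_add_mul_rpow_div_le hβ0 hβ1 hN'.le hq (norm_nonneg x) (sub_pos.2 hst)
        (by linarith)

/-- If `‖S(t,s)‖ ≤ N'·(t−s)^{−β}` and `‖Q(r,s)‖ ≤ q`, then the Bochner
integral `∫ₛᵗ S(t,r)Q(r,s)x dr` exists and
`‖S(t,s)x + ∫ₛᵗ S(t,r)Q(r,s)x dr‖ ≤ ((1 + qτ)N'/(1−β))·(t−s)^{−β}·‖x‖`. -/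
theorem stmt_3
    {X : Type*} [NormedAddCommGroup X] [NormedSpace ℝ X] [CompleteSpace X]
    (τ : ℝ) (hτ : 0 < τ)
    (β : ℝ) (hβ0 : 0 < β) (hβ1 : β < 1)
    (N' : ℝ) (hN' : 0 < N') (q : ℝ) (hq : 0 ≤ q)
    (S : ℝ → ℝ → X →L[ℝ] X) (Q : ℝ → ℝ → X →L[ℝ] X)
    -- norm bound on S on {0 ≤ s < t ≤ τ}
    (hS_bound : ∀ t s : ℝ, 0 ≤ s → s < t → t ≤ τ → ‖S t s‖ ≤ N' * (t - s) ^ (-β))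
    -- for each fixed t, r ↦ S(t,r)x is continuous on [0, t)
    (hS_cont : ∀ t : ℝ, ∀ x : X, ContinuousOn (fun r => S t r x) (Set.Ico 0 t))
    -- Q is strongly continuous on the triangle and uniformly bounded by q
    (hQ_strong : ∀ x : X, ContinuousOn (fun p : ℝ × ℝ => Q p.1 p.2 x)
      {p : ℝ × ℝ | 0 ≤ p.2 ∧ p.2 ≤ p.1 ∧ p.1 ≤ τ})
    (hQ_bound : ∀ r s : ℝ, 0 ≤ s → s ≤ r → r ≤ τ → ‖Q r s‖ ≤ q) :
    ∀ s t : ℝ, 0 ≤ s → s < t → t ≤ τ → ∀ x : X,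
      IntervalIntegrable (fun r => S t r (Q r s x)) volume s t ∧
      ‖S t s x + ∫ r in s..t, S t r (Q r s x)‖ ≤
        ((1 + q * τ) * N' / (1 - β)) * (t - s) ^ (-β) * ‖x‖ :=
  stmt_3_general τ β hβ0 hβ1 N' hN' q hq S Q hS_bound hS_cont hQ_strong hQ_bound
end

section
/- Let τ > 0, ε₀ > 0, 0 < β < 1, K > 0, and let X be a real Banach space. On the triangle {(t,s) : 0 ≤ s ≤ t ≤ τ + ε₀} let U, R, Q be families of bounded linear operators on X such that: (t,s) ↦ U(t,s)x, (t,s) ↦ R(t,s)x, (t,s) ↦ Q(t,s)x are continuous for every x; M_U, M_R, M_Q denote finite uniform bounds on their operator norms; U(t,t) = I and U(t,r)U(r,s) = U(t,s) for s ≤ r ≤ t; and R(t,s)x = U(t,s)x + ∫ₛᵗ U(t,r)Q(r,s)x dr for all s ≤ t and x ∈ X. Let A be a closed linear operator in X whose domain contains U(t',r)x for all 0 ≤ r < t' ≤ τ + ε₀ and x ∈ X, and such that ‖A(U(t',r)x)‖ ≤ K·(t'−r)^{−β}·‖x‖. Then there is a constant C̄ (one may take C̄ = K·M_Q·(1 +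 M_R)/(1−β)), independent of ε, s, t and x, such that for all 0 ≤ s ≤ t ≤ τ, 0 < ε ≤ ε₀, and x ∈ X, the element R(t+ε,t)R(t,s)x − R(t+ε,s)x belongs to the domain of A and ‖A(R(t+ε,t)R(t,s)x − R(t+ε,s)x)‖ ≤ C̄ · ε^{1−β} · ‖x‖. -/
open MeasureTheory

lemma my_integral_mem_closed_submodule {E : Type*} [NormedAddCommGroup E] [NormedSpace ℝ E]
    [CompleteSpace E] (p : Submodule ℝ E) (hp : IsClosed (p : Set E))
    {μ : Measure ℝ} [IsFiniteMeasure μ] {f : ℝ → E}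
    (hf : Integrable f μ) (hmem : ∀ᵐ r ∂μ, f r ∈ p) :
    (∫ r, f r ∂μ) ∈ p := by
  rcases eq_or_ne μ 0 with h0 | h0
  · simp [h0]
  · haveI : NeZero μ := ⟨h0⟩
    set c : ENNReal := μ Set.univ with hc
    have hc0 : c ≠ 0 := by simpa [hc] using (NeZero.ne μ)
    have hcT : c ≠ ⊤ := measure_ne_top μ _
    haveI hprob : IsProbabilityMeasure (c⁻¹ • μ) := isProbabilityMeasureSMul
    have h1 : (∫ r, f r ∂(c⁻¹ • μ)) ∈ p :=
      p.convex.integral_mem hp (Measure.ae_smul_measure hmem _)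
        (hf.smul_measure (ENNReal.inv_ne_top.2 hc0))
    have h2 : ∫ r, f r ∂μ = c.toReal • ∫ r, f r ∂(c⁻¹ • μ) := by
      rw [integral_smul_measure, smul_smul, ENNReal.toReal_inv,
        mul_inv_cancel₀ (ENNReal.toReal_ne_zero.2 ⟨hc0, hcT⟩), one_smul]
    rw [h2]
    exact p.smul_mem _ h1

lemma my_strong_apply_cont {X : Type*} [NormedAddCommGroup X] [NormedSpace ℝ X]
    {S : Set ℝ} {F : ℝ → X →L[ℝ] X} {M : ℝ}
    (hF : ∀ x : X, ContinuousOn (fun r => F r x) S)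
    (hM : ∀ r ∈ S, ‖F r‖ ≤ M)
    {w : ℝ → X} (hw : ContinuousOn w S) :
    ContinuousOn (fun r => F r (w r)) S := by
  intro r₀ hr₀
  have h1 : Filter.Tendsto (fun r => F r (w r₀)) (nhdsWithin r₀ S) (nhds (F r₀ (w r₀))) :=
    hF (w r₀) r₀ hr₀
  have h2 : Filter.Tendsto (fun r => F r (w r - w r₀)) (nhdsWithin r₀ S) (nhds 0) := by
    have hb : ∀ᶠ r in nhdsWithin r₀ S, ‖F r (w r - w r₀)‖ ≤ M * ‖w r - w r₀‖ := by
      filter_upwards [self_mem_nhdsWithin] with r hr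
      calc ‖F r (w r - w r₀)‖ ≤ ‖F r‖ * ‖w r - w r₀‖ := (F r).le_opNorm _
        _ ≤ M * ‖w r - w r₀‖ :=
          mul_le_mul_of_nonneg_right (hM r hr) (norm_nonneg _)
    have hw0 : Filter.Tendsto (fun r => M * ‖w r - w r₀‖) (nhdsWithin r₀ S) (nhds 0) := by
      have : Filter.Tendsto (fun r => w r - w r₀) (nhdsWithin r₀ S) (nhds (w r₀ - w r₀)) :=
        Filter.Tendsto.sub (hw r₀ hr₀) tendsto_const_nhds
      rw [sub_self] at this
      simpa using (this.norm.const_mul M)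
    exact squeeze_zero_norm' hb hw0
  have h3 := h1.add h2
  rw [add_zero] at h3
  refine h3.congr fun r => ?_
  simp [map_sub]

set_option maxHeartbeats 1000000

/-- With `R(t,s)x = U(t,s)x + ∫ₛᵗ U(t,r)Q(r,s)x dr`, a closed operator `A`
whose domain contains each `U(t',r)x` with `‖A U(t',r)x‖ ≤ K (t'−r)^{−β} ‖x‖` satisfies,
for `C̄ = K·M_Q·(1+M_R)/(1−β)`:
`R(t+ε,t)R(t,s)x − R(t+ε,s)x ∈ D(A)` and
`‖A(R(t+ε,t)R(t,s)x − R(t+ε,s)x)‖ ≤ C̄ ε^{1−β} ‖x‖`. -/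
theorem stmt_4
    {X : Type*} [NormedAddCommGroup X] [NormedSpace ℝ X] [CompleteSpace X]
    (τ ε₀ : ℝ) (hτ : 0 < τ) (hε₀ : 0 < ε₀)
    (β : ℝ) (hβ0 : 0 < β) (hβ1 : β < 1) (K : ℝ) (hK : 0 < K)
    (U R Q : ℝ → ℝ → X →L[ℝ] X)
    -- strong continuity on the triangle 0 ≤ s ≤ t ≤ τ + ε₀
    (hU_strong : ∀ x : X, ContinuousOn (fun p : ℝ × ℝ => U p.1 p.2 x)
      {p : ℝ × ℝ | 0 ≤ p.2 ∧ p.2 ≤ p.1 ∧ p.1 ≤ τ + ε₀})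
    (hR_strong : ∀ x : X, ContinuousOn (fun p : ℝ × ℝ => R p.1 p.2 x)
      {p : ℝ × ℝ | 0 ≤ p.2 ∧ p.2 ≤ p.1 ∧ p.1 ≤ τ + ε₀})
    (hQ_strong : ∀ x : X, ContinuousOn (fun p : ℝ × ℝ => Q p.1 p.2 x)
      {p : ℝ × ℝ | 0 ≤ p.2 ∧ p.2 ≤ p.1 ∧ p.1 ≤ τ + ε₀})
    -- uniform bounds in operator norm
    (MU MR MQ : ℝ)
    (hMU : ∀ t s : ℝ, 0 ≤ s → s ≤ t → t ≤ τ + ε₀ → ‖U t s‖ ≤ MU)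
    (hMR : ∀ t s : ℝ, 0 ≤ s → s ≤ t → t ≤ τ + ε₀ → ‖R t s‖ ≤ MR)
    (hMQ : ∀ r s : ℝ, 0 ≤ s → s ≤ r → r ≤ τ + ε₀ → ‖Q r s‖ ≤ MQ)
    -- evolution-system properties of U
    (hU_id : ∀ t : ℝ, 0 ≤ t → t ≤ τ + ε₀ → U t t = ContinuousLinearMap.id ℝ X)
    (hU_comp : ∀ t r s : ℝ, 0 ≤ s → s ≤ r → r ≤ t → t ≤ τ + ε₀ →
      (U t r).comp (U r s) = U t s)
    -- the representation R = U + ∫ U Q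
    (hRU : ∀ t s : ℝ, 0 ≤ s → s ≤ t → t ≤ τ + ε₀ → ∀ x : X,
      R t s x = U t s x + ∫ r in s..t, U t r (Q r s x))
    -- A is a closed (possibly unbounded) linear operator in X
    (A : X →ₗ.[ℝ] X) (hA_closed : IsClosed (A.graph : Set (X × X)))
    -- domain condition and bound for A ∘ U
    (hdom : ∀ t' r : ℝ, 0 ≤ r → r < t' → t' ≤ τ + ε₀ → ∀ x : X, U t' r x ∈ A.domain)
    (hAU_bound : ∀ (t' r : ℝ) (h0 : 0 ≤ r) (h1 : r < t') (h2 : t' ≤ τ + ε₀) (x : X),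
      ‖A ⟨U t' r x, hdom t' r h0 h1 h2 x⟩‖ ≤ K * (t' - r) ^ (-β) * ‖x‖) :
    ∀ s t ε : ℝ, 0 ≤ s → s ≤ t → t ≤ τ → 0 < ε → ε ≤ ε₀ → ∀ x : X,
      ∃ hmem : R (t + ε) t (R t s x) - R (t + ε) s x ∈ A.domain,
        ‖A ⟨R (t + ε) t (R t s x) - R (t + ε) s x, hmem⟩‖ ≤
          (K * MQ * (1 + MR) / (1 - β)) * ε ^ (1 - β) * ‖x‖ := by
  intro s t ε hs0 hst htτ hε hεε₀ x
  set t' := t + ε with ht'def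
  have h0t : 0 ≤ t := hs0.trans hst
  have htt' : t < t' := by rw [ht'def]; linarith
  have ht'le : t' ≤ τ + ε₀ := by rw [ht'def]; linarith
  have htle : t ≤ τ + ε₀ := by linarith
  set y := R t s x with hy
  -- continuity helpers
  have hUrow : ∀ (a : ℝ), a ≤ τ + ε₀ → ∀ v : X,
      ContinuousOn (fun r => U a r v) {r : ℝ | 0 ≤ r ∧ r ≤ a} := by
    intro a ha v
    have hcont : Continuous (fun r : ℝ => ((a, r) : ℝ × ℝ)) := by continuity
    exact (hU_strong v).comp hcont.continuousOn (fun r hr => ⟨hr.1, hr.2, ha⟩)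
  have hQcol : ∀ (b : ℝ), 0 ≤ b → ∀ v : X,
      ContinuousOn (fun r => Q r b v) {r : ℝ | b ≤ r ∧ r ≤ τ + ε₀} := by
    intro b hb v
    have hcont : Continuous (fun r : ℝ => ((r, b) : ℝ × ℝ)) := by continuity
    exact (hQ_strong v).comp hcont.continuousOn (fun r hr => ⟨hb, hr.1, hr.2⟩)
  have key_cont : ∀ (a b : ℝ), 0 ≤ b → b ≤ a → a ≤ τ + ε₀ → ∀ v : X,
      ContinuousOn (fun r => U a r (Q r b v)) (Set.Icc b a) := by
    intro a b hb hba ha v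
    refine my_strong_apply_cont (M := MU) (fun u => (hUrow a ha u).mono ?_)
      (fun r hr => hMU a r (hb.trans hr.1) hr.2 ha) ((hQcol b hb v).mono ?_)
    · exact fun r hr => ⟨hb.trans hr.1, hr.2⟩
    · exact fun r hr => ⟨hr.1, hr.2.trans ha⟩
  set z : ℝ → X := fun r => Q r t y - Q r s x with hzdef
  have hzcont : ContinuousOn z (Set.Icc t t') := by
    refine ContinuousOn.sub (((hQcol t h0t y).mono ?_)) (((hQcol s hs0 x).mono ?_))
    · exact fun r hr => ⟨hr.1, hr.2.trans ht'le⟩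
    · exact fun r hr => ⟨hst.trans hr.1, hr.2.trans ht'le⟩
  have hfcont : ContinuousOn (fun r => U t' r (z r)) (Set.Icc t t') := by
    refine my_strong_apply_cont (M := MU) (fun u => (hUrow t' ht'le u).mono ?_)
      (fun r hr => hMU t' r (h0t.trans hr.1) hr.2 ht'le) hzcont
    exact fun r hr => ⟨h0t.trans hr.1, hr.2⟩
  -- interval integrabilities
  have hI1 : IntervalIntegrable (fun r => U t r (Q r s x)) volume s t := by
    refine ContinuousOn.intervalIntegrable ?_
    rw [Set.uIcc_of_le hst]; exact key_cont t s hs0 hst htle x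
  have hI2 : ContinuousOn (fun r => U t' r (Q r s x)) (Set.Icc s t') :=
    key_cont t' s hs0 (hst.trans htt'.le) ht'le x
  have hI2st : IntervalIntegrable (fun r => U t' r (Q r s x)) volume s t := by
    refine ContinuousOn.intervalIntegrable ?_
    rw [Set.uIcc_of_le hst]
    exact hI2.mono (fun r hr => ⟨hr.1, hr.2.trans htt'.le⟩)
  have hI2tt' : IntervalIntegrable (fun r => U t' r (Q r s x)) volume t t' := by
    refine ContinuousOn.intervalIntegrable ?_
    rw [Set.uIcc_of_le htt'.le]
    exact hI2.mono (fun r hr => ⟨hst.trans hr.1, hr.2⟩)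
  have hI3 : IntervalIntegrable (fun r => U t' r (Q r t y)) volume t t' := by
    refine ContinuousOn.intervalIntegrable ?_
    rw [Set.uIcc_of_le htt'.le]; exact key_cont t' t h0t htt'.le ht'le y
  -- representation identities
  have comp_apply : ∀ r, s ≤ r → r ≤ t → ∀ v : X, U t' t (U t r v) = U t' r v := by
    intro r h1 h2 v
    have hc := hU_comp t' t r (hs0.trans h1) h2 htt'.le ht'le
    calc U t' t (U t r v) = ((U t' t).comp (U t r)) v := rfl
      _ = U t' r v := by rw [hc]
  have e_Utt'y : U t' t y = U t' s x + ∫ r in s..t, U t' r (Q r s x) := by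
    rw [hy, hRU t s hs0 hst htle x, map_add,
      ← ContinuousLinearMap.intervalIntegral_comp_comm (U t' t) hI1]
    congr 1
    · exact comp_apply s le_rfl hst x
    · refine intervalIntegral.integral_congr fun r hr => ?_
      rw [Set.uIcc_of_le hst] at hr
      exact comp_apply r hr.1 hr.2 _
  have e_split : (∫ r in s..t', U t' r (Q r s x)) =
      (∫ r in s..t, U t' r (Q r s x)) + ∫ r in t..t', U t' r (Q r s x) :=
    (intervalIntegral.integral_add_adjacent_intervals hI2st hI2tt').symm
  have hD : R t' t y - R t' s x = ∫ r in t..t', U t' r (z r) := by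
    have h34 : (∫ r in t..t', U t' r (z r)) =
        (∫ r in t..t', U t' r (Q r t y)) - ∫ r in t..t', U t' r (Q r s x) := by
      rw [← intervalIntegral.integral_sub hI3 hI2tt']
      exact intervalIntegral.integral_congr fun r hr => by simp [hzdef, map_sub]
    rw [hRU t' t h0t htt'.le ht'le y, hRU t' s hs0 (hst.trans htt'.le) ht'le x,
      e_Utt'y, e_split, h34]
    abel
  have hD2 : R t' t y - R t' s x = ∫ r in Set.Ioo t t', U t' r (z r) := by
    rw [hD, intervalIntegral.integral_of_le htt'.le, ← integral_Ioc_eq_integral_Ioo]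
  -- the function g = A ∘ (U ∘ z)
  have hdomf : ∀ r, 0 ≤ r → r < t' → U t' r (z r) ∈ A.domain :=
    fun r h0 h1 => hdom t' r h0 h1 ht'le (z r)
  set g : ℝ → X := fun r =>
    if h : 0 ≤ r ∧ r < t' then A ⟨U t' r (z r), hdomf r h.1 h.2⟩ else 0 with hgdef
  have hgval : ∀ r (h0 : 0 ≤ r) (h1 : r < t'),
      g r = A ⟨U t' r (z r), hdomf r h0 h1⟩ := by
    intro r h0 h1
    simp only [hgdef]
    rw [dif_pos ⟨h0, h1⟩]
  -- continuity of g on Ioo t t'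
  have hgcont : ContinuousOn g (Set.Ioo t t') := by
    intro r₀ hr₀
    obtain ⟨hr₀1, hr₀2⟩ := hr₀
    obtain ⟨m, hr₀m, hmt'⟩ : ∃ m, r₀ < m ∧ m < t' := ⟨(r₀ + t') / 2, by linarith, by linarith⟩
    have h0m : 0 ≤ m := le_of_lt (lt_of_le_of_lt h0t (lt_trans hr₀1 hr₀m))
    have hmle : m ≤ τ + ε₀ := hmt'.le.trans ht'le
    have hdm : ∀ v : X, U t' m v ∈ A.domain := fun v => hdom t' m h0m hmt' ht'le v
    set B : X →ₗ[ℝ] X :=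
      A.toFun.comp (LinearMap.codRestrict A.domain (U t' m).toLinearMap hdm) with hBdef
    have hBapp : ∀ v : X, B v = A ⟨U t' m v, hdm v⟩ := fun v => rfl
    have hgraph : (B.graph : Set (X × X)) =
        (fun p : X × X => (U t' m p.1, p.2)) ⁻¹' (A.graph : Set (X × X)) := by
      ext p
      simp only [Set.mem_preimage, SetLike.mem_coe, LinearMap.mem_graph_iff,
        LinearPMap.mem_graph_iff]
      constructor
      · intro h
        exact ⟨⟨U t' m p.1, hdm p.1⟩, rfl, h.symm⟩
      · rintro ⟨w, hw1, hw2⟩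
        rw [show w = ⟨U t' m p.1, hdm p.1⟩ from Subtype.ext hw1] at hw2
        exact hw2.symm
    have hBclosed : IsClosed (B.graph : Set (X × X)) := by
      rw [hgraph]
      exact hA_closed.preimage
        (((U t' m).continuous.comp continuous_fst).prodMk continuous_snd)
    have hBcont : Continuous B := B.continuous_of_isClosed_graph hBclosed
    have hφcont : ContinuousOn (fun r => B (U m r (z r))) (Set.Icc t m) := by
      apply hBcont.comp_continuousOn
      refine my_strong_apply_cont (M := MU) (fun v => (hUrow m hmle v).mono ?_)
        (fun r hr => hMU m r (h0t.trans hr.1) hr.2 hmle) (hzcont.mono ?_)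
      · exact fun r hr => ⟨h0t.trans hr.1, hr.2⟩
      · exact fun r hr => ⟨hr.1, hr.2.trans hmt'.le⟩
    have hat : ContinuousAt (fun r => B (U m r (z r))) r₀ :=
      hφcont.continuousAt (Icc_mem_nhds hr₀1 hr₀m)
    have hEq : ∀ r ∈ Set.Ioo t m, g r = B (U m r (z r)) := by
      intro r hr
      have h0r : 0 ≤ r := h0t.trans hr.1.le
      have hrt' : r < t' := hr.2.trans hmt'
      have hcomp : U t' r (z r) = U t' m (U m r (z r)) := by
        have hc := hU_comp t' m r h0r hr.2.le hmt'.le ht'le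
        calc U t' r (z r) = ((U t' m).comp (U m r)) (z r) := by rw [hc]
          _ = U t' m (U m r (z r)) := rfl
      rw [hgval r h0r hrt', hBapp]
      exact congrArg (fun q : A.domain => A q) (Subtype.ext hcomp)
    have hEv : g =ᶠ[nhdsWithin r₀ (Set.Ioo t t')] fun r => B (U m r (z r)) := by
      apply Filter.Eventually.filter_mono nhdsWithin_le_nhds
      filter_upwards [Ioo_mem_nhds hr₀1 hr₀m] with r hr using hEq r hr
    exact (hat.continuousWithinAt).congr_of_eventuallyEq hEv (hEq r₀ ⟨hr₀1, hr₀m⟩)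
  -- bounds
  have hMQ0 : 0 ≤ MQ := (norm_nonneg _).trans (hMQ t t h0t le_rfl htle)
  have hynorm : ‖y‖ ≤ MR * ‖x‖ :=
    le_trans ((R t s).le_opNorm x)
      (mul_le_mul_of_nonneg_right (hMR t s hs0 hst htle) (norm_nonneg x))
  have hzbound : ∀ r, t ≤ r → r ≤ τ + ε₀ → ‖z r‖ ≤ MQ * (1 + MR) * ‖x‖ := by
    intro r h1 h2
    have hQt : ‖Q r t y‖ ≤ MQ * ‖y‖ :=
      le_trans ((Q r t).le_opNorm y)
        (mul_le_mul_of_nonneg_right (hMQ r t h0t h1 h2) (norm_nonneg y))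
    have hQs : ‖Q r s x‖ ≤ MQ * ‖x‖ :=
      le_trans ((Q r s).le_opNorm x)
        (mul_le_mul_of_nonneg_right (hMQ r s hs0 (hst.trans h1) h2) (norm_nonneg x))
    calc ‖z r‖ ≤ ‖Q r t y‖ + ‖Q r s x‖ := norm_sub_le _ _
      _ ≤ MQ * (MR * ‖x‖) + MQ * ‖x‖ :=
        add_le_add (hQt.trans (mul_le_mul_of_nonneg_left hynorm hMQ0)) hQs
      _ = MQ * (1 + MR) * ‖x‖ := by ring
  have hmemae : ∀ r ∈ Set.Ioo t t',
      ((U t' r (z r), g r) ∈ (A.graph : Set (X × X))) ∧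
        ‖g r‖ ≤ K * (MQ * (1 + MR) * ‖x‖) * (t' - r) ^ (-β) := by
    intro r hr
    have h0r : 0 ≤ r := h0t.trans hr.1.le
    have hrt' : r < t' := hr.2
    rw [hgval r h0r hrt']
    constructor
    · exact A.mem_graph ⟨U t' r (z r), hdomf r h0r hrt'⟩
    · calc ‖A ⟨U t' r (z r), hdomf r h0r hrt'⟩‖
          ≤ K * (t' - r) ^ (-β) * ‖z r‖ := hAU_bound t' r h0r hrt' ht'le (z r)
        _ ≤ K * (t' - r) ^ (-β) * (MQ * (1 + MR) * ‖x‖) :=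
          mul_le_mul_of_nonneg_left (hzbound r hr.1.le (hrt'.le.trans ht'le))
            (mul_nonneg hK.le (Real.rpow_nonneg (by linarith [hr.2]) _))
        _ = K * (MQ * (1 + MR) * ‖x‖) * (t' - r) ^ (-β) := by ring
  -- integrability
  have hbddII : IntervalIntegrable (fun r : ℝ => (t' - r) ^ (-β)) volume t t' := by
    have h1 : IntervalIntegrable (fun u : ℝ => u ^ (-β)) volume 0 ε :=
      intervalIntegral.intervalIntegrable_rpow' (by linarith)
    have h2 := (h1.comp_sub_left t').symm
    have h3 : t' - (0:ℝ) = t' := by ring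
    have h4 : t' - ε = t := by rw [ht'def]; ring
    rwa [h3, h4] at h2
  have hbddInt : IntegrableOn
      (fun r : ℝ => K * (MQ * (1 + MR) * ‖x‖) * (t' - r) ^ (-β)) (Set.Ioo t t') volume := by
    have h3 := hbddII.const_mul (K * (MQ * (1 + MR) * ‖x‖))
    exact ((intervalIntegrable_iff_integrableOn_Ioc_of_le htt'.le).mp h3).mono_set
      Set.Ioo_subset_Ioc_self
  have hgInt : IntegrableOn g (Set.Ioo t t') volume := by
    refine Integrable.mono' hbddInt (hgcont.aestronglyMeasurable measurableSet_Ioo) ?_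
    filter_upwards [ae_restrict_mem measurableSet_Ioo] with r hr using (hmemae r hr).2
  have hfInt : IntegrableOn (fun r => U t' r (z r)) (Set.Ioo t t') volume :=
    (hfcont.integrableOn_compact isCompact_Icc).mono_set Set.Ioo_subset_Icc_self
  haveI : IsFiniteMeasure (volume.restrict (Set.Ioo t t')) := by
    constructor
    rw [Measure.restrict_apply_univ]
    rw [Real.volume_Ioo]
    exact ENNReal.ofReal_lt_top
  -- the pair integral lies in the graph
  have hpair : ((∫ r in Set.Ioo t t', U t' r (z r)), ∫ r in Set.Ioo t t', g r) ∈ A.graph := by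
    have hint : Integrable (fun r => (U t' r (z r), g r))
        (volume.restrict (Set.Ioo t t')) := hfInt.prodMk hgInt
    have hmm := my_integral_mem_closed_submodule A.graph hA_closed hint ?_
    · rwa [integral_pair hfInt hgInt] at hmm
    · filter_upwards [ae_restrict_mem measurableSet_Ioo] with r hr using (hmemae r hr).1
  obtain ⟨w, hw1, hw2⟩ := A.mem_graph_iff.mp hpair
  have hw1' : (w : X) = ∫ r in Set.Ioo t t', U t' r (z r) := hw1
  have hw2' : A w = ∫ r in Set.Ioo t t', g r := hw2
  have hdomInt : (∫ r in Set.Ioo t t', U t' r (z r)) ∈ A.domain := hw1' ▸ w.2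
  have hAval : A ⟨∫ r in Set.Ioo t t', U t' r (z r), hdomInt⟩ = ∫ r in Set.Ioo t t', g r := by
    rw [← hw2']
    exact congrArg (fun q : A.domain => A q) (Subtype.ext hw1'.symm)
  -- norm estimate
  have hnorm : ‖∫ r in Set.Ioo t t', g r‖ ≤
      ∫ r in Set.Ioo t t', K * (MQ * (1 + MR) * ‖x‖) * (t' - r) ^ (-β) := by
    refine norm_integral_le_of_norm_le hbddInt ?_
    filter_upwards [ae_restrict_mem measurableSet_Ioo] with r hr using (hmemae r hr).2
  have hval : (∫ r in Set.Ioo t t', K * (MQ * (1 + MR) * ‖x‖) * (t' - r) ^ (-β)) =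
      K * (MQ * (1 + MR) * ‖x‖) * (ε ^ (1 - β) / (1 - β)) := by
    rw [← integral_Ioc_eq_integral_Ioo, ← intervalIntegral.integral_of_le htt'.le,
      intervalIntegral.integral_const_mul]
    congr 1
    have hcs := intervalIntegral.integral_comp_sub_left (a := t) (b := t')
      (fun u : ℝ => u ^ (-β)) t'
    rw [hcs, sub_self, show t' - t = ε by rw [ht'def]; ring,
      integral_rpow (Or.inl (by linarith)),
      Real.zero_rpow (by linarith : -β + (1:ℝ) ≠ 0),
      show -β + (1:ℝ) = 1 - β by ring]
    ring
  -- conclude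
  rw [hD2]
  refine ⟨hdomInt, ?_⟩
  rw [hAval]
  calc ‖∫ r in Set.Ioo t t', g r‖
      ≤ ∫ r in Set.Ioo t t', K * (MQ * (1 + MR) * ‖x‖) * (t' - r) ^ (-β) := hnorm
    _ = K * (MQ * (1 + MR) * ‖x‖) * (ε ^ (1 - β) / (1 - β)) := hval
    _ = (K * MQ * (1 + MR) / (1 - β)) * ε ^ (1 - β) * ‖x‖ := by ring
end

section
/- Let τ > 0, let X be a separable reflexive real Banach space such that X and its dual X* are strictly convex, and U a real separable Hilbert space; let B : U → X be a bounded linear operator and R(t,s) ∈ L(X) (0 ≤ s ≤ t ≤ τ) a strongly continuous, uniformly bounded family. Let J : X → X* be a duality mapping, and assume the norm of X satisfies, for all x, z ∈ X, the Gateaux differentiability property lim_{ε→0} (‖x+εz‖² − ‖x‖²)/(2ε) = ⟨J(x), z⟩. Fix λ > 0 and x₀, d ∈ X. If u* ∈ L²([0,τ];U) minimizes the cost functional G_λ(u) = ‖R(τ,0)x₀ + ∫₀^τ R(τ,s)Bu(s)ds − d‖²_X + λ∫₀^τ ‖u(t)‖²_U dt, and x*(τ) = R(τ,0)x₀ + ∫₀^τ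 R(τ,s)Bu*(s)ds, then u*(t) = −(1/λ)·B*R(τ,t)*J(x*(τ) − d) for almost every t ∈ [0,τ]. -/
/-!
Perturbing `u*` along `v ∈ L²` and differentiating the cost at `ε = 0` (the terminal term through
the Gateaux derivative `J`) gives the Euler–Lagrange equation
`⟨J(x*(τ) - d), ∫ R(τ,s) B v(s) ds⟩ + λ ⟪u*, v⟫_{L²} = 0`.
Taking `v = 1_A • u` with `u ∈ U` constant and moving `J(x*(τ) - d)` under the integral shows that
`⟪λ u*(t) + B* R(τ,t)* J(x*(τ) - d), u⟫` integrates to zero over every `A`, so it vanishes a.e.;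
as `U` is separable, `λ u*(t) + B* R(τ,t)* J(x*(τ) - d) = 0` a.e.
Strong continuity and the uniform bound on `R` make `s ↦ R(τ,s) B v(s)` Bochner integrable for
every `v ∈ L²`.
-/

open MeasureTheory Filter Topology Set
open scoped RealInnerProductSpace

section StronglyContinuousFamily

variable {α 𝕜 E F : Type*} [TopologicalSpace α] [NontriviallyNormedField 𝕜]
  [SeminormedAddCommGroup E] [NormedSpace 𝕜 E] [SeminormedAddCommGroup F] [NormedSpace 𝕜 F]
  {T : α → E →L[𝕜] F} {s : Set α} {M : ℝ}

theorem continuousOn_clm_apply_of_norm_le (hT : ∀ x, ContinuousOn (fun a => T a x) s)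
    (hM : ∀ a ∈ s, ‖T a‖ ≤ M) : ContinuousOn (fun p : α × E => T p.1 p.2) (s ×ˢ univ) := by
  rintro ⟨a₀, x₀⟩ ⟨ha₀, -⟩
  have h_fixed : ContinuousWithinAt (fun p : α × E => T p.1 x₀) (s ×ˢ univ) (a₀, x₀) :=
    (hT x₀ a₀ ha₀).comp (g := fun a => T a x₀) (x := (a₀, x₀)) continuousWithinAt_fst
      fun _ hp => (mem_prod.1 hp).1
  have h_small : Tendsto (fun p : α × E => T p.1 (p.2 - x₀)) (𝓝[s ×ˢ univ] (a₀, x₀)) (𝓝 0) := by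
    refine squeeze_zero_norm' (a := fun p => M * ‖p.2 - x₀‖) ?_ ?_
    · filter_upwards [self_mem_nhdsWithin] with p hp
      exact (T p.1).le_of_opNorm_le (hM p.1 hp.1) _
    · have : Continuous fun p : α × E => M * ‖p.2 - x₀‖ := by fun_prop
      simpa using (this.tendsto (a₀, x₀)).mono_left nhdsWithin_le_nhds
  simpa [ContinuousWithinAt] using h_small.add h_fixed

end StronglyContinuousFamily

section IntervalFamily

variable {E F : Type*} [NormedAddCommGroup E] [NormedSpace ℝ E] [NormedAddCommGroup F]
  [NormedSpace ℝ F] {T : ℝ → E →L[ℝ] F} {a b M : ℝ} {μ : Measure ℝ} {g : ℝ → E}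

theorem aestronglyMeasurable_clm_apply_of_continuousOn (hab : a ≤ b)
    (hμ : ∀ᵐ s ∂μ, s ∈ Icc a b) (hT : ∀ x, ContinuousOn (fun s => T s x) (Icc a b))
    (hM : ∀ s ∈ Icc a b, ‖T s‖ ≤ M) (hg : AEStronglyMeasurable g μ) :
    AEStronglyMeasurable (fun s => T s (g s)) μ := by
  have h_joint := continuousOn_clm_apply_of_norm_le hT hM
  have h_ext : Continuous fun p : ℝ × E => T (projIcc a b hab p.1) p.2 :=
    h_joint.comp_continuous (f := fun p : ℝ × E => ((projIcc a b hab p.1 : ℝ), p.2))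
      (by fun_prop) fun p => ⟨Subtype.mem _, mem_univ _⟩
  refine (h_ext.comp_aestronglyMeasurable (aestronglyMeasurable_id.prodMk hg)).congr ?_
  filter_upwards [hμ] with s hs
  simp [projIcc_of_mem hab hs]

theorem integrable_clm_apply_of_continuousOn (hab : a ≤ b)
    (hμ : ∀ᵐ s ∂μ, s ∈ Icc a b) (hT : ∀ x, ContinuousOn (fun s => T s x) (Icc a b))
    (hM : ∀ s ∈ Icc a b, ‖T s‖ ≤ M) (hg : Integrable g μ) :
    Integrable (fun s => T s (g s)) μ := by
  refine (hg.norm.const_mul M).mono'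
    (aestronglyMeasurable_clm_apply_of_continuousOn hab hμ hT hM hg.1) ?_
  filter_upwards [hμ] with s hs
  exact (T s).le_of_opNorm_le (hM s hs) _

end IntervalFamily

theorem hasDerivAt_norm_sq_add_smul {E : Type*} [SeminormedAddCommGroup E] [NormedSpace ℝ E]
    {x z : E} {c : ℝ}
    (h : Tendsto (fun ε : ℝ => (‖x + ε • z‖ ^ 2 - ‖x‖ ^ 2) / (2 * ε)) (𝓝[≠] 0) (𝓝 c)) :
    HasDerivAt (fun ε : ℝ => ‖x + ε • z‖ ^ 2) (2 * c) 0 := by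
  rw [hasDerivAt_iff_tendsto_slope]
  refine (h.const_mul 2).congr fun ε => ?_
  rw [slope_def_field, zero_smul, add_zero, sub_zero, mul_div_assoc']
  exact mul_div_mul_left _ ε two_ne_zero

theorem IsMinOn.euler_lagrange_norm_sq_add_mul_norm_sq {H E : Type*} [NormedAddCommGroup H]
    [InnerProductSpace ℝ H] [SeminormedAddCommGroup E] [NormedSpace ℝ E] (L : H →ₗ[ℝ] E)
    (a : E) (φ : StrongDual ℝ E) (lam : ℝ) (u : H)
    (hφ : ∀ z, Tendsto (fun ε : ℝ => (‖a + L u + ε • z‖ ^ 2 - ‖a + L u‖ ^ 2) / (2 * ε))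
      (𝓝[≠] 0) (𝓝 (φ z)))
    (hmin : IsMinOn (fun w => ‖a + L w‖ ^ 2 + lam * ‖w‖ ^ 2) univ u) (v : H) :
    φ (L v) + lam * ⟪u, v⟫ = 0 := by
  have h_cost : HasDerivAt (fun ε : ℝ => ‖a + L u + ε • L v‖ ^ 2 + lam * ‖u + ε • v‖ ^ 2)
      (2 * φ (L v) + lam * (2 * ⟪u, v⟫)) 0 := by
    have h_path : HasDerivAt (fun ε : ℝ => u + ε • v) v 0 :=
      ((hasDerivAt_id 0).smul_const v).const_add u |>.congr_deriv (one_smul ℝ v)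
    refine ((hasDerivAt_norm_sq_add_smul (hφ (L v))).add
      (h_path.norm_sq.const_mul lam)).congr_deriv ?_
    simp
  have h_min : IsLocalMin (fun ε : ℝ => ‖a + L u + ε • L v‖ ^ 2 + lam * ‖u + ε • v‖ ^ 2) 0 :=
    Filter.Eventually.of_forall fun ε => by
      simpa [add_assoc] using isMinOn_univ_iff.1 hmin (u + ε • v)
  linarith [h_min.hasDerivAt_eq_zero h_cost]

section IntegralApply

variable {α E F : Type*} [MeasurableSpace α] {μ : Measure α} {p : ENNReal}
  [NormedAddCommGroup E] [NormedSpace ℝ E] [NormedAddCommGroup F] [NormedSpace ℝ F]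

noncomputable def Lp.integralApply (T : α → E →L[ℝ] F)
    (hT : ∀ v : Lp E p μ, Integrable (fun s => T s (v s)) μ) : Lp E p μ →ₗ[ℝ] F where
  toFun v := ∫ s, T s (v s) ∂μ
  map_add' u v := by
    rw [← integral_add (hT u) (hT v)]
    refine integral_congr_ae ?_
    filter_upwards [Lp.coeFn_add u v] with s hs
    rw [hs, Pi.add_apply, map_add]
  map_smul' c v := by
    rw [RingHom.id_apply, ← integral_smul]
    refine integral_congr_ae ?_
    filter_upwards [Lp.coeFn_smul c v] with s hs
    rw [hs, Pi.smul_apply, map_smul]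

theorem Lp.integralApply_apply (T : α → E →L[ℝ] F)
    (hT : ∀ v : Lp E p μ, Integrable (fun s => T s (v s)) μ) (v : Lp E p μ) :
    Lp.integralApply T hT v = ∫ s, T s (v s) ∂μ :=
  rfl

theorem Lp.integralApply_indicatorConstLp (T : α → E →L[ℝ] F)
    (hT : ∀ v : Lp E p μ, Integrable (fun s => T s (v s)) μ) {A : Set α} (hA : MeasurableSet A)
    (hμA : μ A ≠ ⊤) (x : E) :
    Lp.integralApply T hT (indicatorConstLp p hA hμA x) = ∫ s in A, T s x ∂μ := by
  rw [Lp.integralApply_apply, ← integral_indicator hA]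
  refine integral_congr_ae ?_
  filter_upwards [indicatorConstLp_coeFn (p := p) (hs := hA) (hμs := hμA) (c := x)] with s hs
  by_cases hsA : s ∈ A <;> simp [hs, hsA]

end IntegralApply

theorem ae_eq_zero_of_forall_setIntegral_inner_eq_zero {α E : Type*} [MeasurableSpace α]
    {μ : Measure α} [NormedAddCommGroup E] [InnerProductSpace ℝ E]
    [TopologicalSpace.SeparableSpace E] {f : α → E}
    (hf : ∀ x, Integrable (fun s => ⟪f s, x⟫) μ)
    (h_zero : ∀ x A, MeasurableSet A → μ A < ⊤ → ∫ s in A, ⟪f s, x⟫ ∂μ = 0) : f =ᵐ[μ] 0 := by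
  refine ae_eq_zero_of_forall_inner (𝕜 := ℝ) fun x => ?_
  simp_rw [real_inner_comm _ x]
  exact (hf x).ae_eq_zero_of_forall_setIntegral_eq_zero fun A hA hμA => h_zero x A hA hμA

theorem L2.norm_sq_eq_integral_norm_sq {α E : Type*} [MeasurableSpace α] {μ : Measure α}
    [NormedAddCommGroup E] [InnerProductSpace ℝ E] (u : Lp E 2 μ) :
    ‖u‖ ^ 2 = ∫ t, ‖u t‖ ^ 2 ∂μ := by
  simp_rw [← real_inner_self_eq_norm_sq, L2.inner_def]

theorem Lp.ae_smul_add_eq_zero_of_euler_lagrange {α E F : Type*} [MeasurableSpace α]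
    {μ : Measure α} [IsFiniteMeasure μ] [NormedAddCommGroup E] [InnerProductSpace ℝ E]
    [TopologicalSpace.SeparableSpace E] [NormedAddCommGroup F] [NormedSpace ℝ F] [CompleteSpace F]
    (T : α → E →L[ℝ] F) (hT : ∀ v : Lp E 2 μ, Integrable (fun s => T s (v s)) μ)
    (φ : StrongDual ℝ F) (Ψ : α → E) (hΨ : ∀ t x, ⟪Ψ t, x⟫ = φ (T t x)) (lam : ℝ)
    (w : Lp E 2 μ) (hEL : ∀ v, φ (Lp.integralApply T hT v) + lam * ⟪w, v⟫ = 0) :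
    ∀ᵐ t ∂μ, lam • w t + Ψ t = 0 := by
  have hT_const : ∀ x, Integrable (fun s => T s x) μ := fun x =>
    (hT ((memLp_const x).toLp _)).congr <| by
      filter_upwards [(memLp_const x).coeFn_toLp] with s hs
      rw [hs]
  have hw_int : ∀ x, Integrable (fun t => lam * ⟪w t, x⟫) μ := fun x =>
    (((Lp.memLp w).inner_const x).integrable one_le_two).const_mul lam
  have h_inner : ∀ x t, ⟪lam • w t + Ψ t, x⟫ = lam * ⟪w t, x⟫ + φ (T t x) := fun x t => by
    rw [inner_add_left, real_inner_smul_left, hΨ]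
  refine ae_eq_zero_of_forall_setIntegral_inner_eq_zero (fun x => ?_) fun x A hA hμA => ?_
  · exact ((hw_int x).add (φ.integrable_comp (hT_const x))).congr
      (ae_of_all _ fun t => (h_inner x t).symm)
  · have h := hEL (indicatorConstLp 2 hA hμA.ne x)
    rw [Lp.integralApply_indicatorConstLp, real_inner_comm,
      L2.inner_indicatorConstLp_eq_setIntegral_inner,
      ← φ.integral_comp_comm (hT_const x).integrableOn] at h
    simp_rw [real_inner_comm _ x] at h
    simp_rw [h_inner]
    rw [integral_add (hw_int x).integrableOn (φ.integrable_comp (hT_const x)).integrableOn,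
      integral_const_mul]
    linarith

theorem stmt_6_general
    {X U : Type*} [NormedAddCommGroup X] [NormedSpace ℝ X] [CompleteSpace X]
    [NormedAddCommGroup U] [InnerProductSpace ℝ U]
    [TopologicalSpace.SeparableSpace U]
    (τ : ℝ) (hτ : 0 < τ)
    (B : U →L[ℝ] X)
    (R : ℝ → ℝ → X →L[ℝ] X)
    -- strong continuity of (t,s) ↦ R(t,s)x on the triangle 0 ≤ s ≤ t ≤ τ
    (hR_strong : ∀ x : X, ContinuousOn (fun p : ℝ × ℝ => R p.1 p.2 x)
      {p : ℝ × ℝ | 0 ≤ p.2 ∧ p.2 ≤ p.1 ∧ p.1 ≤ τ})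
    -- uniform boundedness in operator norm
    (MR : ℝ) (hMR : ∀ t s : ℝ, 0 ≤ s → s ≤ t → t ≤ τ → ‖R t s‖ ≤ MR)
    -- J is a duality mapping of X
    (J : X → StrongDual ℝ X)
    -- Gateaux differentiability of the square of the norm with derivative J
    (hGateaux : ∀ x z : X,
      Filter.Tendsto (fun ε : ℝ => (‖x + ε • z‖ ^ 2 - ‖x‖ ^ 2) / (2 * ε))
        (nhdsWithin 0 {(0:ℝ)}ᶜ) (nhds (J x z)))
    -- B* x* is the Riesz representative of u ↦ ⟨x*, Bu⟩
    (Bstar : StrongDual ℝ X → U)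
    (hBstar : ∀ (φ : StrongDual ℝ X) (u : U), ⟪Bstar φ, u⟫ = φ (B u))
    (lam : ℝ) (hlam : 0 < lam) (x₀ d : X)
    -- u* minimizes the cost functional G_λ
    (ustar : Lp U 2 ((volume : Measure ℝ).restrict (Set.Icc 0 τ)))
    (hmin : ∀ u : Lp U 2 ((volume : Measure ℝ).restrict (Set.Icc 0 τ)),
      ‖R τ 0 x₀ +
          (∫ s, R τ s (B (ustar s)) ∂((volume : Measure ℝ).restrict (Set.Icc 0 τ))) - d‖ ^ 2
        + lam * ∫ t, ‖ustar t‖ ^ 2 ∂((volume : Measure ℝ).restrict (Set.Icc 0 τ)) ≤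
      ‖R τ 0 x₀ +
          (∫ s, R τ s (B (u s)) ∂((volume : Measure ℝ).restrict (Set.Icc 0 τ))) - d‖ ^ 2
        + lam * ∫ t, ‖u t‖ ^ 2 ∂((volume : Measure ℝ).restrict (Set.Icc 0 τ)))
    -- x*(τ) : the terminal state for the control u*
    (xstar : X)
    (hxstar : xstar = R τ 0 x₀ +
      ∫ s, R τ s (B (ustar s)) ∂((volume : Measure ℝ).restrict (Set.Icc 0 τ))) :
    ∀ᵐ t ∂((volume : Measure ℝ).restrict (Set.Icc 0 τ)),
      ustar t = (-(1 / lam)) • Bstar ((J (xstar - d)).comp (R τ t)) := by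
  have hμ : ∀ᵐ s ∂(volume.restrict (Icc 0 τ)), s ∈ Icc 0 τ := ae_restrict_mem measurableSet_Icc
  have hfin : IsFiniteMeasure (volume.restrict (Icc 0 τ)) := inferInstance
  generalize (volume : Measure ℝ).restrict (Icc 0 τ) = μ at ustar hmin hxstar hμ hfin ⊢
  have hRB_cont : ∀ x, ContinuousOn (fun s => (R τ s).comp B x) (Icc 0 τ) := fun x =>
    (hR_strong (B x)).comp (f := fun s => (τ, s)) (by fun_prop) fun _ hs => ⟨hs.1, hs.2, le_rfl⟩
  have hRB_bound : ∀ s ∈ Icc 0 τ, ‖(R τ s).comp B‖ ≤ MR * ‖B‖ := fun s hs =>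
    (R τ s).opNorm_comp_le B |>.trans <| by gcongr; exact hMR τ s hs.1 hs.2 le_rfl
  have hRB_int : ∀ v : Lp U 2 μ, Integrable (fun s => (R τ s).comp B (v s)) μ := fun v =>
    integrable_clm_apply_of_continuousOn hτ.le hμ hRB_cont hRB_bound
      ((Lp.memLp v).integrable one_le_two)
  set L := Lp.integralApply (fun s => (R τ s).comp B) hRB_int
  have h_EL : ∀ v, J (xstar - d) (L v) + lam * ⟪ustar, v⟫ = 0 := by
    have h_state : R τ 0 x₀ - d + L ustar = xstar - d := by
      rw [hxstar, Lp.integralApply_apply]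
      abel
    refine IsMinOn.euler_lagrange_norm_sq_add_mul_norm_sq L (R τ 0 x₀ - d) _ lam ustar
      (h_state ▸ hGateaux _) (isMinOn_univ_iff.2 fun w => ?_)
    simpa [L, Lp.integralApply_apply, L2.norm_sq_eq_integral_norm_sq, sub_add_eq_add_sub]
      using hmin w
  have h_pointwise := Lp.ae_smul_add_eq_zero_of_euler_lagrange _ hRB_int (J (xstar - d))
    (fun t => Bstar ((J (xstar - d)).comp (R τ t))) (fun t x => hBstar _ x) lam ustar h_EL
  filter_upwards [h_pointwise] with t ht
  rw [neg_smul, ← smul_neg, ← eq_neg_of_add_eq_zero_left ht, smul_smul, one_div,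
    inv_mul_cancel₀ hlam.ne', one_smul]

/-- if `u*` minimizes
`G_λ(u) = ‖R(τ,0)x₀ + ∫₀^τ R(τ,s)Bu(s)ds − d‖² + λ∫₀^τ‖u(t)‖²dt`, then
`u*(t) = −(1/λ)·B*R(τ,t)*J(x*(τ) − d)` for a.e. `t ∈ [0,τ]`. -/
theorem stmt_6
    {X U : Type*} [NormedAddCommGroup X] [NormedSpace ℝ X] [CompleteSpace X]
    [TopologicalSpace.SeparableSpace X]
    [StrictConvexSpace ℝ X] [StrictConvexSpace ℝ (StrongDual ℝ X)]
    [NormedAddCommGroup U] [InnerProductSpace ℝ U] [CompleteSpace U]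
    [TopologicalSpace.SeparableSpace U]
    -- X is reflexive
    (hrefl : Function.Surjective (NormedSpace.inclusionInDoubleDual ℝ X))
    (τ : ℝ) (hτ : 0 < τ)
    (B : U →L[ℝ] X)
    (R : ℝ → ℝ → X →L[ℝ] X)
    -- strong continuity of (t,s) ↦ R(t,s)x on the triangle 0 ≤ s ≤ t ≤ τ
    (hR_strong : ∀ x : X, ContinuousOn (fun p : ℝ × ℝ => R p.1 p.2 x)
      {p : ℝ × ℝ | 0 ≤ p.2 ∧ p.2 ≤ p.1 ∧ p.1 ≤ τ})
    -- uniform boundedness in operator norm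
    (MR : ℝ) (hMR : ∀ t s : ℝ, 0 ≤ s → s ≤ t → t ≤ τ → ‖R t s‖ ≤ MR)
    -- J is a duality mapping of X
    (J : X → StrongDual ℝ X)
    (hJ_id : ∀ x : X, J x x = ‖x‖ ^ 2)
    (hJ_norm : ∀ x : X, ‖J x‖ = ‖x‖)
    -- Gateaux differentiability of the square of the norm with derivative J
    (hGateaux : ∀ x z : X,
      Filter.Tendsto (fun ε : ℝ => (‖x + ε • z‖ ^ 2 - ‖x‖ ^ 2) / (2 * ε))
        (nhdsWithin 0 {(0:ℝ)}ᶜ) (nhds (J x z)))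
    -- B* x* is the Riesz representative of u ↦ ⟨x*, Bu⟩
    (Bstar : StrongDual ℝ X → U)
    (hBstar : ∀ (φ : StrongDual ℝ X) (u : U), ⟪Bstar φ, u⟫ = φ (B u))
    (lam : ℝ) (hlam : 0 < lam) (x₀ d : X)
    -- u* minimizes the cost functional G_λ
    (ustar : Lp U 2 ((volume : Measure ℝ).restrict (Set.Icc 0 τ)))
    (hmin : ∀ u : Lp U 2 ((volume : Measure ℝ).restrict (Set.Icc 0 τ)),
      ‖R τ 0 x₀ +
          (∫ s, R τ s (B (ustar s)) ∂((volume : Measure ℝ).restrict (Set.Icc 0 τ))) - d‖ ^ 2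
        + lam * ∫ t, ‖ustar t‖ ^ 2 ∂((volume : Measure ℝ).restrict (Set.Icc 0 τ)) ≤
      ‖R τ 0 x₀ +
          (∫ s, R τ s (B (u s)) ∂((volume : Measure ℝ).restrict (Set.Icc 0 τ))) - d‖ ^ 2
        + lam * ∫ t, ‖u t‖ ^ 2 ∂((volume : Measure ℝ).restrict (Set.Icc 0 τ)))
    -- x*(τ) : the terminal state for the control u*
    (xstar : X)
    (hxstar : xstar = R τ 0 x₀ +
      ∫ s, R τ s (B (ustar s)) ∂((volume : Measure ℝ).restrict (Set.Icc 0 τ))) :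
    ∀ᵐ t ∂((volume : Measure ℝ).restrict (Set.Icc 0 τ)),
      ustar t = (-(1 / lam)) • Bstar ((J (xstar - d)).comp (R τ t)) :=
  stmt_6_general τ hτ B R hR_strong MR hMR J hGateaux Bstar hBstar lam hlam x₀ d ustar hmin xstar
    hxstar
end

section
/- Let τ > 0, let X be a separable reflexive real Banach space and U a real separable Hilbert space, let B : U → X be a bounded linear operator, let R(t,s) ∈ L(X) (0 ≤ s ≤ t ≤ τ) be a strongly continuous, uniformly bounded family of bounded linear operators, and fix x₀ ∈ X. Define B_τ : X* → X by B_τ x* = ∫₀^τ R(τ,t) B B* R(τ,t)* x* dt. Then the following are equivalent: (i) the set {R(τ,0)x₀ + ∫₀^τ R(τ,s)Bu(s)ds : u ∈ L²([0,τ];U)} is dense in X (approximate controllability of the linear system on [0,τ]); (ii) ⟨x*, B_τ x*⟩ > 0 for every nonzero x* ∈ X*. -/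
open MeasureTheory
open scoped RealInnerProductSpace

/-!
The control-to-state map `L u = ∫₀^τ R(τ,s) B u(s) ds` from `L²(0,τ;U)` to `X` has as adjoint
`x* ↦ B* R(τ,·)* x*`, so that `⟨x*, B_τ x*⟩ = ‖L* x*‖²`. The reachable set is a translate of
`range L`, and by Hahn–Banach `range L` is dense iff `L*` is injective, i.e. iff
`⟨x*, B_τ x*⟩ > 0` for all `x* ≠ 0`. Since `t ↦ B* R(τ,t)* x*` is only weakly continuous, its
measurability (and that of the integrand of `L`) comes from Pettis' theorem, using separability
of `U` and `X`.
-/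

theorem measurable_of_measurable_dist {α Y : Type*} [MeasurableSpace α] [PseudoMetricSpace Y]
    [TopologicalSpace.SeparableSpace Y] [MeasurableSpace Y] [BorelSpace Y] {f : α → Y}
    (hf : ∀ y, Measurable fun a => dist (f a) y) : Measurable f := by
  refine measurable_of_isClosed fun C hC => ?_
  rcases C.eq_empty_or_nonempty with rfl | hCne
  · exact MeasurableSet.empty
  obtain ⟨t, htC, htc, htd⟩ :=
    (TopologicalSpace.IsSeparable.of_separableSpace C).exists_countable_dense_subset
  have ht : closure t = C := (closure_minimal htC hC).antisymm htd
  have htne : t.Nonempty := closure_nonempty_iff.1 (ht ▸ hCne)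
  have hpre : f ⁻¹' C = {a | Metric.infDist (f a) t = 0} := by
    ext a
    rw [Set.mem_preimage, ← ht, Metric.mem_closure_iff_infDist_zero htne]
    rfl
  have := htc.to_subtype
  simp_rw [hpre, Metric.infDist_eq_iInf]
  exact measurableSet_eq_fun (Measurable.iInf fun y => hf y) measurable_const

section Pettis

variable {E : Type*} [NormedAddCommGroup E] [NormedSpace ℝ E]

theorem exists_seq_strongDual_norm_eq_iSup [TopologicalSpace.SeparableSpace E] :
    ∃ φ : ℕ → StrongDual ℝ E, ∀ x, ‖x‖ = ⨆ n, φ n x := by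
  obtain ⟨d, hd⟩ := TopologicalSpace.exists_dense_seq E
  choose φ hφ₁ hφd using fun n => exists_dual_vector'' ℝ (d n)
  have hle : ∀ n x, φ n x ≤ ‖x‖ := fun n x => calc
    φ n x ≤ ‖φ n x‖ := Real.le_norm_self _
    _ ≤ 1 * ‖x‖ := (φ n).le_of_opNorm_le (hφ₁ n) x
    _ = ‖x‖ := one_mul _
  refine ⟨φ, fun x => le_antisymm (le_of_forall_pos_lt_add fun ε hε => ?_) (ciSup_le (hle · x))⟩
  obtain ⟨n, hn⟩ := Metric.denseRange_iff.1 hd x (ε / 2) (half_pos hε)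
  rw [dist_eq_norm] at hn
  have hdx : ‖d n‖ - ‖x - d n‖ ≤ φ n x := by
    have := hle n (d n - x)
    rw [map_sub, hφd n, norm_sub_rev, RCLike.ofReal_real_eq_id, id] at this
    linarith
  calc ‖x‖ ≤ ‖d n‖ + ‖x - d n‖ := norm_le_insert' x (d n)
    _ < φ n x + ε := by linarith
    _ ≤ (⨆ n, φ n x) + ε := by
        gcongr
        exact le_ciSup ⟨‖x‖, Set.forall_mem_range.2 (hle · x)⟩ n

theorem stronglyMeasurable_of_measurable_norming {α : Type*} [MeasurableSpace α]
    [TopologicalSpace.SeparableSpace E] {φ : ℕ → StrongDual ℝ E} (hφ : ∀ x, ‖x‖ = ⨆ n, φ n x)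
    {f : α → E} (hf : ∀ n, Measurable fun a => φ n (f a)) : StronglyMeasurable f := by
  borelize E
  refine (measurable_of_measurable_dist fun y => ?_).stronglyMeasurable
  simp_rw [dist_eq_norm, hφ, map_sub]
  exact Measurable.iSup fun n => (hf n).sub_const _

/-- The Pettis measurability theorem, for a separable target. -/
theorem aestronglyMeasurable_of_forall_strongDual {α : Type*} [MeasurableSpace α]
    [TopologicalSpace.SeparableSpace E] {μ : Measure α} {f : α → E}
    (hf : ∀ φ : StrongDual ℝ E, AEMeasurable (fun a => φ (f a)) μ) : AEStronglyMeasurable f μ := by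
  obtain ⟨φ, hφ⟩ := exists_seq_strongDual_norm_eq_iSup (E := E)
  -- `Φ` embeds `E` into `ℕ → ℝ`, where a.e.-measurability can be checked coordinatewise.
  set Φ : E → ℕ → ℝ := fun x n => φ n x
  have hΦ : Function.Injective Φ := fun x y hxy => by
    rw [← sub_eq_zero, ← norm_eq_zero, hφ]
    simp only [map_sub, show ∀ n, φ n x = φ n y from congrFun hxy, sub_self, ciSup_const]
  obtain ⟨F, hFm, hFΦ, hfF⟩ := (aemeasurable_pi_lambda (fun a => Φ (f a)) fun n => hf (φ n))
    |>.exists_ae_eq_range_subset (t := Set.range Φ) (ae_of_all _ fun a => ⟨f a, rfl⟩) ⟨_, 0, rfl⟩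
  have hΦF : ∀ a, Φ (Function.invFun Φ (F a)) = F a :=
    fun a => Function.invFun_eq (hFΦ ⟨a, rfl⟩)
  refine ⟨fun a => Function.invFun Φ (F a),
    stronglyMeasurable_of_measurable_norming hφ fun n => ?_, ?_⟩
  · have hF : Measurable fun a => F a n := (measurable_pi_apply n).comp hFm
    convert hF using 2 with a
    exact congrFun (hΦF a) n
  · filter_upwards [hfF] with a ha
    exact hΦ (ha.trans (hΦF a).symm)

end Pettis

theorem Submodule.apply_eq_zero_of_forall_apply_lt {E : Type*} [AddCommGroup E] [Module ℝ E]
    {p : Submodule ℝ E} {f : E →ₗ[ℝ] ℝ} {c : ℝ} (hf : ∀ x ∈ p, f x < c) {x : E} (hx : x ∈ p) :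
    f x = 0 := by
  by_contra hfx
  have := hf _ (p.smul_mem (c / f x) hx)
  rw [map_smul, smul_eq_mul, div_mul_cancel₀ c hfx] at this
  exact this.false

theorem Submodule.dense_iff_forall_strongDual {E : Type*} [AddCommGroup E] [Module ℝ E]
    [TopologicalSpace E] [IsTopologicalAddGroup E] [ContinuousSMul ℝ E] [LocallyConvexSpace ℝ E]
    (p : Submodule ℝ E) :
    Dense (p : Set E) ↔ ∀ φ : StrongDual ℝ E, (∀ x ∈ p, φ x = 0) → φ = 0 := by
  refine ⟨fun hp φ hφ => ContinuousLinearMap.ext fun x => ?_, fun h x => ?_⟩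
  · exact congrFun (Continuous.ext_on hp φ.continuous continuous_const hφ) x
  · by_contra hx
    obtain ⟨f, c, hfc, hcx⟩ := geometric_hahn_banach_closed_point
      (p.topologicalClosure.convex) p.isClosed_topologicalClosure hx
    have hf : f = 0 := h f fun y hy =>
      Submodule.apply_eq_zero_of_forall_apply_lt (f := f.toLinearMap) hfc
        (p.le_topologicalClosure hy)
    have := hfc 0 (Submodule.zero_mem _)
    rw [hf, zero_apply] at this hcx
    linarith

theorem denseRange_iff_of_apply_eq_inner {H E : Type*} [NormedAddCommGroup H]
    [InnerProductSpace ℝ H] [NormedAddCommGroup E] [NormedSpace ℝ E] {L : H → E}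
    {A : StrongDual ℝ E → H}
    (hA : ∀ φ h, φ (L h) = ⟪A φ, h⟫) : DenseRange L ↔ ∀ φ, A φ = 0 → φ = 0 := by
  -- `L` is linear since every `φ ∘ L` is.
  let L' : H →ₗ[ℝ] E :=
    { toFun := L
      map_add' := fun h k => (SeparatingDual.eq_iff_forall_dual_eq (R := ℝ)).2 fun φ => by
        simp [hA, inner_add_right]
      map_smul' := fun r h => (SeparatingDual.eq_iff_forall_dual_eq (R := ℝ)).2 fun φ => by
        simp [hA, real_inner_smul_right] }
  rw [DenseRange, ← show (LinearMap.range L' : Set E) = Set.range L from LinearMap.coe_range L',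
    Submodule.dense_iff_forall_strongDual]
  refine forall_congr' fun φ => imp_congr_left ?_
  simp only [LinearMap.mem_range, forall_exists_index, forall_apply_eq_imp_iff]
  exact ⟨fun h => inner_self_eq_zero.1 ((hA φ _).symm.trans (h _)), fun h k => by simp [L', hA, h]⟩

noncomputable def controlToState {α X U : Type*} [MeasurableSpace α] [NormedAddCommGroup X]
    [NormedSpace ℝ X] [NormedAddCommGroup U] [NormedSpace ℝ U] (T : α → X →L[ℝ] X) (B : U →L[ℝ] X)
    (ν : Measure α) (u : Lp U 2 ν) : X :=
  ∫ s, T s (B (u s)) ∂ν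

section Control

variable {X U : Type*} [NormedAddCommGroup X] [NormedSpace ℝ X] [NormedAddCommGroup U]
  [InnerProductSpace ℝ U] [CompleteSpace U] {B : U →L[ℝ] X} {Bstar : StrongDual ℝ X → U}

theorem norm_riesz_comp_le (hBstar : ∀ φ u, ⟪Bstar φ, u⟫ = φ (B u)) (φ : StrongDual ℝ X)
    (L : X →L[ℝ] X) : ‖Bstar (φ.comp L)‖ ≤ ‖φ‖ * ‖L‖ * ‖B‖ := by
  have hdual : InnerProductSpace.toDual ℝ U (Bstar (φ.comp L)) = (φ.comp L).comp B :=
    ContinuousLinearMap.ext (hBstar _)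
  calc ‖Bstar (φ.comp L)‖ = ‖(φ.comp L).comp B‖ := by
        rw [← (InnerProductSpace.toDual ℝ U).norm_map, hdual]
    _ ≤ ‖φ.comp L‖ * ‖B‖ := ContinuousLinearMap.opNorm_comp_le _ _
    _ ≤ ‖φ‖ * ‖L‖ * ‖B‖ := by gcongr; exact ContinuousLinearMap.opNorm_comp_le _ _

variable [TopologicalSpace.SeparableSpace U] {α : Type*} [TopologicalSpace α] [MeasurableSpace α]
  [OpensMeasurableSpace α] {μ : Measure α} {S : Set α} {T : α → X →L[ℝ] X}

theorem aestronglyMeasurable_riesz_comp (hBstar : ∀ φ u, ⟪Bstar φ, u⟫ = φ (B u))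
    (hS : MeasurableSet S) (hT : ∀ x, ContinuousOn (fun t => T t x) S) (φ : StrongDual ℝ X) :
    AEStronglyMeasurable (fun t => Bstar (φ.comp (T t))) (μ.restrict S) := by
  refine aestronglyMeasurable_of_forall_strongDual fun ψ => ContinuousOn.aemeasurable ?_ hS
  have hψ : ∀ t, ψ (Bstar (φ.comp (T t))) = φ (T t (B ((InnerProductSpace.toDual ℝ U).symm ψ))) :=
    fun t => by rw [← InnerProductSpace.toDual_symm_apply, real_inner_comm, hBstar]; rfl
  simp_rw [hψ]
  exact φ.continuous.comp_continuousOn (hT _)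

variable [IsFiniteMeasure (μ.restrict S)]

theorem memLp_riesz_comp (hBstar : ∀ φ u, ⟪Bstar φ, u⟫ = φ (B u))
    (hS : MeasurableSet S) (hT : ∀ x, ContinuousOn (fun t => T t x) S) {M : ℝ}
    (hM : ∀ t ∈ S, ‖T t‖ ≤ M) (φ : StrongDual ℝ X) :
    MemLp (fun t => Bstar (φ.comp (T t))) 2 (μ.restrict S) := by
  refine .of_bound (aestronglyMeasurable_riesz_comp hBstar hS hT φ) (‖φ‖ * M * ‖B‖) ?_
  filter_upwards [ae_restrict_mem hS] with t ht
  exact (norm_riesz_comp_le hBstar φ (T t)).trans (by gcongr; exact hM t ht)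

theorem integrable_controlToState_integrand [TopologicalSpace.SeparableSpace X]
    (hBstar : ∀ φ u, ⟪Bstar φ, u⟫ = φ (B u))
    (hS : MeasurableSet S) (hT : ∀ x, ContinuousOn (fun t => T t x) S) {M : ℝ}
    (hM : ∀ t ∈ S, ‖T t‖ ≤ M) (u : Lp U 2 (μ.restrict S)) :
    Integrable (fun s => T s (B (u s))) (μ.restrict S) := by
  have hmeas : AEStronglyMeasurable (fun s => T s (B (u s))) (μ.restrict S) := by
    refine aestronglyMeasurable_of_forall_strongDual fun φ => ?_
    have hφ : (fun s => φ (T s (B (u s)))) = fun s => ⟪Bstar (φ.comp (T s)), u s⟫ :=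
      funext fun s => (hBstar (φ.comp (T s)) (u s)).symm
    rw [hφ]
    exact ((aestronglyMeasurable_riesz_comp hBstar hS hT φ).inner
      (Lp.aestronglyMeasurable u)).aemeasurable
  refine (((Lp.memLp u).integrable one_le_two).norm.const_mul (M * ‖B‖)).mono' hmeas ?_
  filter_upwards [ae_restrict_mem hS] with s hs
  calc ‖T s (B (u s))‖ ≤ ‖T s‖ * (‖B‖ * ‖u s‖) := (T s).le_opNorm_of_le (B.le_opNorm _)
    _ ≤ M * (‖B‖ * ‖u s‖) := by gcongr; exact hM s hs
    _ = M * ‖B‖ * ‖u s‖ := (mul_assoc _ _ _).symm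

theorem exists_adjoint_controlToState [CompleteSpace X] [TopologicalSpace.SeparableSpace X]
    (hBstar : ∀ φ u, ⟪Bstar φ, u⟫ = φ (B u))
    (hS : MeasurableSet S) (hT : ∀ x, ContinuousOn (fun t => T t x) S) {M : ℝ}
    (hM : ∀ t ∈ S, ‖T t‖ ≤ M) :
    ∃ A : StrongDual ℝ X → Lp U 2 (μ.restrict S), ∀ φ,
      A φ =ᵐ[μ.restrict S] (fun t => Bstar (φ.comp (T t))) ∧
      ∀ u, φ (controlToState T B (μ.restrict S) u) = ⟪A φ, u⟫ := by
  have hg := memLp_riesz_comp (μ := μ) hBstar hS hT hM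
  refine ⟨fun φ => (hg φ).toLp _, fun φ => ⟨(hg φ).coeFn_toLp, fun u => ?_⟩⟩
  rw [L2.inner_def, controlToState, ← ContinuousLinearMap.integral_comp_comm φ
    (integrable_controlToState_integrand hBstar hS hT hM u)]
  refine integral_congr_ae ?_
  filter_upwards [(hg φ).coeFn_toLp] with s hs
  rw [hs, hBstar]
  rfl

end Control

theorem stmt_8_general
    {X U : Type*} [NormedAddCommGroup X] [NormedSpace ℝ X] [CompleteSpace X]
    [TopologicalSpace.SeparableSpace X]
    [NormedAddCommGroup U] [InnerProductSpace ℝ U] [CompleteSpace U]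
    [TopologicalSpace.SeparableSpace U]
    (τ : ℝ)
    (B : U →L[ℝ] X)
    (R : ℝ → ℝ → X →L[ℝ] X)
    -- strong continuity of (t,s) ↦ R(t,s)x on the triangle 0 ≤ s ≤ t ≤ τ
    (hR_strong : ∀ x : X, ContinuousOn (fun p : ℝ × ℝ => R p.1 p.2 x)
      {p : ℝ × ℝ | 0 ≤ p.2 ∧ p.2 ≤ p.1 ∧ p.1 ≤ τ})
    -- uniform boundedness in operator norm
    (MR : ℝ) (hMR : ∀ t s : ℝ, 0 ≤ s → s ≤ t → t ≤ τ → ‖R t s‖ ≤ MR)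
    (x₀ : X)
    -- B* x* is the Riesz representative of u ↦ ⟨x*, Bu⟩
    (Bstar : StrongDual ℝ X → U)
    (hBstar : ∀ (φ : StrongDual ℝ X) (u : U), ⟪Bstar φ, u⟫ = φ (B u))
    -- the controllability Gramian B_τ
    (Btau : StrongDual ℝ X → X)
    (hBtau : ∀ φ : StrongDual ℝ X,
      Btau φ = ∫ t in Set.Icc (0:ℝ) τ, R τ t (B (Bstar (φ.comp (R τ t))))) :
    Dense {y : X | ∃ u : Lp U 2 ((volume : Measure ℝ).restrict (Set.Icc 0 τ)),
        y = R τ 0 x₀ +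
          ∫ s, R τ s (B (u s)) ∂((volume : Measure ℝ).restrict (Set.Icc 0 τ))} ↔
    ∀ φ : StrongDual ℝ X, φ ≠ 0 → 0 < φ (Btau φ) := by
  set ν := (volume : Measure ℝ).restrict (Set.Icc 0 τ)
  have hT : ∀ x, ContinuousOn (fun t => R τ t x) (Set.Icc 0 τ) := fun x =>
    (hR_strong x).comp (continuous_const.prodMk continuous_id).continuousOn
      fun t (ht : t ∈ Set.Icc 0 τ) => ⟨ht.1, ht.2, le_rfl⟩
  obtain ⟨A, hA⟩ := exists_adjoint_controlToState (μ := volume) hBstar measurableSet_Icc hT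
    fun t ht => hMR τ t ht.1 ht.2 le_rfl
  have hBtau_eq : ∀ φ, φ (Btau φ) = ‖A φ‖ ^ 2 := fun φ => by
    rw [← real_inner_self_eq_norm_sq, ← (hA φ).2, hBtau φ, controlToState]
    congr 1
    refine integral_congr_ae ?_
    filter_upwards [(hA φ).1] with t ht
    rw [ht]
  have hreach : {y | ∃ u : Lp U 2 ν, y = R τ 0 x₀ + ∫ s, R τ s (B (u s)) ∂ν} =
      Homeomorph.addLeft (R τ 0 x₀) '' Set.range (controlToState (R τ) B ν) := by
    ext y
    exact ⟨fun ⟨u, hy⟩ => ⟨_, ⟨u, rfl⟩, hy.symm⟩, fun ⟨_, ⟨u, hu⟩, hy⟩ => ⟨u, hy ▸ hu ▸ rfl⟩⟩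
  rw [hreach, (Homeomorph.addLeft _).isDenseEmbedding.dense_image, ← DenseRange,
    denseRange_iff_of_apply_eq_inner fun φ => (hA φ).2]
  refine forall_congr' fun φ => ?_
  rw [hBtau_eq, sq_pos_iff, norm_ne_zero_iff]
  exact not_imp_not.symm

/-- the linear system is approximately controllable on `[0,τ]`
(the reachable set is dense in `X`) iff `⟨x*, B_τ x*⟩ > 0` for every nonzero `x* ∈ X*`. -/
theorem stmt_8
    {X U : Type*} [NormedAddCommGroup X] [NormedSpace ℝ X] [CompleteSpace X]
    [TopologicalSpace.SeparableSpace X]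
    [NormedAddCommGroup U] [InnerProductSpace ℝ U] [CompleteSpace U]
    [TopologicalSpace.SeparableSpace U]
    -- X is reflexive
    (hrefl : Function.Surjective (NormedSpace.inclusionInDoubleDual ℝ X))
    (τ : ℝ) (hτ : 0 < τ)
    (B : U →L[ℝ] X)
    (R : ℝ → ℝ → X →L[ℝ] X)
    -- strong continuity of (t,s) ↦ R(t,s)x on the triangle 0 ≤ s ≤ t ≤ τ
    (hR_strong : ∀ x : X, ContinuousOn (fun p : ℝ × ℝ => R p.1 p.2 x)
      {p : ℝ × ℝ | 0 ≤ p.2 ∧ p.2 ≤ p.1 ∧ p.1 ≤ τ})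
    -- uniform boundedness in operator norm
    (MR : ℝ) (hMR : ∀ t s : ℝ, 0 ≤ s → s ≤ t → t ≤ τ → ‖R t s‖ ≤ MR)
    (x₀ : X)
    -- B* x* is the Riesz representative of u ↦ ⟨x*, Bu⟩
    (Bstar : StrongDual ℝ X → U)
    (hBstar : ∀ (φ : StrongDual ℝ X) (u : U), ⟪Bstar φ, u⟫ = φ (B u))
    -- the controllability Gramian B_τ
    (Btau : StrongDual ℝ X → X)
    (hBtau : ∀ φ : StrongDual ℝ X,
      Btau φ = ∫ t in Set.Icc (0:ℝ) τ, R τ t (B (Bstar (φ.comp (R τ t))))) :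
    Dense {y : X | ∃ u : Lp U 2 ((volume : Measure ℝ).restrict (Set.Icc 0 τ)),
        y = R τ 0 x₀ +
          ∫ s, R τ s (B (u s)) ∂((volume : Measure ℝ).restrict (Set.Icc 0 τ))} ↔
    ∀ φ : StrongDual ℝ X, φ ≠ 0 → 0 < φ (Btau φ) :=
  stmt_8_general τ B R hR_strong MR hMR x₀ Bstar hBstar Btau hBtau
end

section
/- Let τ > 0, let X be a separable reflexive real Banach space such that X and its dual X* are strictly convex, and let U be a real separable Hilbert space; let B : U → X be a bounded linear operator and R(t,s) ∈ L(X) (0 ≤ s ≤ t ≤ τ) a strongly continuous, uniformly bounded family. Let J : X → X* be a duality mapping, assumed bijective and demicontinuous (norm-to-weak continuous). Define B_τ : X* → X by B_τ x* = ∫₀^τ R(τ,t) B B* R(τ,t)* x* dt, and assume ⟨x*, B_τ x*⟩ > 0 for every nonzero x* ∈ X*. For x ∈ X and λ > 0 let z_λ ∈ X denote the unique solution of λz_λ + B_τ(J(z_λ)) = λx. Then ‖z_λ‖_X → 0 as λ → 0⁺. -/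
/-!
Pairing the equation `λ z + B_τ(J z) = λ x` with `J z` gives
`λ ‖z‖² + ⟨J z, B_τ J z⟩ = λ ⟨J z, x⟩`. Since the Gramian is positive semidefinite, this yields
`‖z‖² ≤ ⟨J z, x⟩`, `‖z‖ ≤ ‖x‖` and `⟨J z, B_τ J z⟩ ≤ λ ‖x‖²`. By Banach–Alaoglu the bounded
family `J z_λ` has weak-* cluster points, and for any such point `ψ` the inequality
`2 ⟨ψ, B_τ φ⟩ ≤ ⟨ψ, B_τ ψ⟩ + ⟨φ, B_τ φ⟩` (from `⟨χ, B_τ ψ⟩ = ∫ (B* R(τ,t)* χ, B* R(τ,t)* ψ) dt`)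
forces `⟨ψ, B_τ ψ⟩ = 0`, so `ψ = 0`. Hence `J z_λ → 0` weak-*, and `‖z_λ‖² ≤ ⟨J z_λ, x⟩ → 0`.
-/

open MeasureTheory Filter Topology
open scoped RealInnerProductSpace

open TopologicalSpace in
theorem StrongDual.exists_seq_separating (𝕜 E : Type*) [RCLike 𝕜] [NormedAddCommGroup E]
    [NormedSpace 𝕜 E] [SeparableSpace E] :
    ∃ φ : ℕ → StrongDual 𝕜 E, ∀ ⦃x y : E⦄, (∀ n, φ n x = φ n y) → x = y := by
  choose φ hφ_norm hφ_apply using fun n => exists_dual_vector'' 𝕜 (denseSeq E n)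
  refine ⟨φ, fun x y hxy => ?_⟩
  set w := x - y
  have hw : ∀ n, φ n w = 0 := fun n => by rw [map_sub, hxy n, sub_self]
  have hle : ∀ n, ‖w‖ ≤ 2 * ‖w - denseSeq E n‖ := by
    intro n
    have hd : ‖denseSeq E n‖ ≤ ‖w - denseSeq E n‖ :=
      calc ‖denseSeq E n‖ = ‖φ n (denseSeq E n - w)‖ := by
            rw [map_sub, hw, sub_zero, hφ_apply, RCLike.norm_ofReal, abs_norm]
        _ ≤ ‖φ n‖ * ‖denseSeq E n - w‖ := (φ n).le_opNorm _
        _ ≤ ‖w - denseSeq E n‖ := by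
            rw [norm_sub_rev]; exact mul_le_of_le_one_left (norm_nonneg _) (hφ_norm n)
    linarith [norm_le_norm_sub_add w (denseSeq E n)]
  have hw0 : ‖w‖ ≤ 2 * ‖w - w‖ :=
    (denseRange_denseSeq E).induction_on (p := fun d => ‖w‖ ≤ 2 * ‖w - d‖) w
      (isClosed_le continuous_const (by fun_prop)) hle
  rwa [sub_self, norm_zero, mul_zero, norm_le_zero_iff, sub_eq_zero] at hw0

theorem aestronglyMeasurable_of_forall_aemeasurable_dual {α E : Type*} [MeasurableSpace α]
    {μ : Measure α} [NormedAddCommGroup E] [NormedSpace ℝ E] [CompleteSpace E]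
    [TopologicalSpace.SeparableSpace E] {f : α → E}
    (hf : ∀ ψ : StrongDual ℝ E, AEMeasurable (fun a => ψ (f a)) μ) :
    AEStronglyMeasurable f μ := by
  borelize E
  obtain ⟨φ, hφ⟩ := StrongDual.exists_seq_separating ℝ E
  have hT : MeasurableEmbedding fun (x : E) (n : ℕ) => φ n x :=
    (continuous_pi fun n => (φ n).continuous).measurableEmbedding
      fun x y hxy => hφ fun n => congrFun hxy n
  exact (hT.aemeasurable_comp_iff.mp (aemeasurable_pi_lambda _ fun n => hf (φ n)))
    |>.aestronglyMeasurable

section Gramian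

variable {α X U : Type*} [MeasurableSpace α] {μ : Measure α}
  [NormedAddCommGroup X] [NormedSpace ℝ X] [NormedAddCommGroup U] [InnerProductSpace ℝ U]
  [CompleteSpace U] {B : U →L[ℝ] X} {S : α → X →L[ℝ] X} {M : ℝ}

variable (B) in
noncomputable def dualAdjoint (φ : StrongDual ℝ X) : U :=
  (InnerProductSpace.toDual ℝ U).symm (φ.comp B)

variable (μ B) in
noncomputable def gramian (S : α → X →L[ℝ] X) (ψ : StrongDual ℝ X) : X :=
  ∫ t, S t (B (dualAdjoint B (ψ.comp (S t)))) ∂μ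

theorem inner_dualAdjoint (φ : StrongDual ℝ X) (u : U) : ⟪dualAdjoint B φ, u⟫ = φ (B u) :=
  InnerProductSpace.toDual_symm_apply

theorem eq_dualAdjoint {Bstar : StrongDual ℝ X → U}
    (hBstar : ∀ (φ : StrongDual ℝ X) (u : U), ⟪Bstar φ, u⟫ = φ (B u)) : Bstar = dualAdjoint B :=
  funext fun φ => ext_inner_right ℝ fun u => by rw [hBstar, inner_dualAdjoint]

theorem norm_dualAdjoint_le (φ : StrongDual ℝ X) : ‖dualAdjoint B φ‖ ≤ ‖φ‖ * ‖B‖ := by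
  rw [dualAdjoint, LinearIsometryEquiv.norm_map]
  exact φ.opNorm_comp_le B

theorem apply_dualAdjoint (φ : StrongDual ℝ X) (ψ : StrongDual ℝ U) :
    ψ (dualAdjoint B φ) = φ (B ((InnerProductSpace.toDual ℝ U).symm ψ)) := by
  rw [← InnerProductSpace.toDual_symm_apply, real_inner_comm, inner_dualAdjoint]

theorem ae_norm_dualAdjoint_comp_le (hS_bdd : ∀ᵐ t ∂μ, ‖S t‖ ≤ M) (χ : StrongDual ℝ X) :
    ∀ᵐ t ∂μ, ‖dualAdjoint B (χ.comp (S t))‖ ≤ ‖χ‖ * M * ‖B‖ :=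
  hS_bdd.mono fun t ht => (norm_dualAdjoint_le _).trans <| by
    gcongr
    exact (χ.opNorm_comp_le _).trans (by gcongr)

variable [TopologicalSpace.SeparableSpace U]

theorem aestronglyMeasurable_dualAdjoint_comp
    (hS : ∀ (v : X) (ψ : StrongDual ℝ X), AEMeasurable (fun t => ψ (S t v)) μ)
    (χ : StrongDual ℝ X) : AEStronglyMeasurable (fun t => dualAdjoint B (χ.comp (S t))) μ :=
  aestronglyMeasurable_of_forall_aemeasurable_dual fun ψ => by
    simpa only [apply_dualAdjoint, ContinuousLinearMap.comp_apply] using hS _ χ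

variable [IsFiniteMeasure μ]

theorem integrable_inner_dualAdjoint_comp
    (hS : ∀ (v : X) (ψ : StrongDual ℝ X), AEMeasurable (fun t => ψ (S t v)) μ)
    (hS_bdd : ∀ᵐ t ∂μ, ‖S t‖ ≤ M) (χ ψ : StrongDual ℝ X) :
    Integrable (fun t => ⟪dualAdjoint B (χ.comp (S t)), dualAdjoint B (ψ.comp (S t))⟫) μ := by
  refine .of_bound ((aestronglyMeasurable_dualAdjoint_comp hS χ).inner
    (aestronglyMeasurable_dualAdjoint_comp hS ψ)) ((‖χ‖ * M * ‖B‖) * (‖ψ‖ * M * ‖B‖)) ?_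
  filter_upwards [ae_norm_dualAdjoint_comp_le (B := B) hS_bdd χ,
    ae_norm_dualAdjoint_comp_le (B := B) hS_bdd ψ]
    with t hχ hψ
  exact (norm_inner_le_norm (𝕜 := ℝ) _ _).trans
    (mul_le_mul hχ hψ (norm_nonneg _) ((norm_nonneg _).trans hχ))

variable [CompleteSpace X] [TopologicalSpace.SeparableSpace X]

theorem integrable_gramian_integrand
    (hS : ∀ (v : X) (ψ : StrongDual ℝ X), AEMeasurable (fun t => ψ (S t v)) μ)
    (hS_bdd : ∀ᵐ t ∂μ, ‖S t‖ ≤ M) (χ : StrongDual ℝ X) :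
    Integrable (fun t => S t (B (dualAdjoint B (χ.comp (S t))))) μ := by
  have hmeas : AEStronglyMeasurable (fun t => S t (B (dualAdjoint B (χ.comp (S t))))) μ :=
    aestronglyMeasurable_of_forall_aemeasurable_dual fun ψ => by
      have h := ((aestronglyMeasurable_dualAdjoint_comp (B := B) hS ψ).inner (𝕜 := ℝ)
        (aestronglyMeasurable_dualAdjoint_comp (B := B) hS χ)).aemeasurable
      simpa only [inner_dualAdjoint, ContinuousLinearMap.comp_apply] using h
  refine .of_bound hmeas (M * ‖B‖ * (‖χ‖ * M * ‖B‖)) ?_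
  filter_upwards [hS_bdd, ae_norm_dualAdjoint_comp_le (B := B) hS_bdd χ] with t hSt hχ
  have hM : 0 ≤ M := (norm_nonneg _).trans hSt
  calc ‖S t (B (dualAdjoint B (χ.comp (S t))))‖
      ≤ ‖S t‖ * (‖B‖ * ‖dualAdjoint B (χ.comp (S t))‖) := (S t).le_opNorm_of_le (B.le_opNorm _)
    _ ≤ M * ‖B‖ * (‖χ‖ * M * ‖B‖) := by rw [← mul_assoc]; gcongr

theorem apply_gramian
    (hS : ∀ (v : X) (ψ : StrongDual ℝ X), AEMeasurable (fun t => ψ (S t v)) μ)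
    (hS_bdd : ∀ᵐ t ∂μ, ‖S t‖ ≤ M) (χ ψ : StrongDual ℝ X) :
    χ (gramian μ B S ψ) =
      ∫ t, ⟪dualAdjoint B (χ.comp (S t)), dualAdjoint B (ψ.comp (S t))⟫ ∂μ := by
  rw [gramian, ← χ.integral_comp_comm (integrable_gramian_integrand hS hS_bdd ψ)]
  simp only [inner_dualAdjoint, ContinuousLinearMap.comp_apply]

theorem gramian_symm
    (hS : ∀ (v : X) (ψ : StrongDual ℝ X), AEMeasurable (fun t => ψ (S t v)) μ)
    (hS_bdd : ∀ᵐ t ∂μ, ‖S t‖ ≤ M) (χ ψ : StrongDual ℝ X) :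
    χ (gramian μ B S ψ) = ψ (gramian μ B S χ) := by
  simp only [apply_gramian hS hS_bdd, real_inner_comm]

theorem two_mul_apply_gramian_le
    (hS : ∀ (v : X) (ψ : StrongDual ℝ X), AEMeasurable (fun t => ψ (S t v)) μ)
    (hS_bdd : ∀ᵐ t ∂μ, ‖S t‖ ≤ M) (χ ψ : StrongDual ℝ X) :
    2 * χ (gramian μ B S ψ) ≤ χ (gramian μ B S χ) + ψ (gramian μ B S ψ) := by
  have hint := integrable_inner_dualAdjoint_comp (B := B) hS hS_bdd
  simp only [apply_gramian hS hS_bdd, ← integral_const_mul,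
    ← integral_add (hint χ χ) (hint ψ ψ)]
  refine integral_mono ((hint χ ψ).const_mul 2) ((hint χ χ).add (hint ψ ψ)) fun t => ?_
  set a := dualAdjoint B (χ.comp (S t))
  set b := dualAdjoint B (ψ.comp (S t))
  have := real_inner_self_nonneg (x := a - b)
  rw [inner_sub_sub_self] at this
  linarith [real_inner_comm a b]

end Gramian

section PositiveOperator

variable {X : Type*} [NormedAddCommGroup X] [NormedSpace ℝ X] {G : StrongDual ℝ X → X}

section Resolvent

variable {φ : StrongDual ℝ X} {x z : X} {lam : ℝ}

theorem apply_resolvent_eq (hφz : φ z = ‖z‖ ^ 2) (h : lam • z + G φ = lam • x) :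
    lam * ‖z‖ ^ 2 + φ (G φ) = lam * φ x := by
  simpa [hφz] using congrArg φ h

theorem norm_sq_le_apply_of_resolvent (hlam : 0 < lam) (hG : 0 ≤ φ (G φ))
    (hφz : φ z = ‖z‖ ^ 2) (h : lam • z + G φ = lam • x) : ‖z‖ ^ 2 ≤ φ x := by
  have := apply_resolvent_eq hφz h
  nlinarith

theorem norm_le_of_resolvent (hlam : 0 < lam) (hG : 0 ≤ φ (G φ)) (hφz : φ z = ‖z‖ ^ 2)
    (hφ : ‖φ‖ = ‖z‖) (h : lam • z + G φ = lam • x) : ‖z‖ ≤ ‖x‖ := by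
  have h1 := norm_sq_le_apply_of_resolvent hlam hG hφz h
  have h2 : φ x ≤ ‖z‖ * ‖x‖ := hφ ▸ (le_abs_self _).trans (φ.le_opNorm x)
  nlinarith [norm_nonneg z, norm_nonneg x]

theorem apply_le_of_resolvent (hlam : 0 < lam) (hG : 0 ≤ φ (G φ)) (hφz : φ z = ‖z‖ ^ 2)
    (hφ : ‖φ‖ = ‖z‖) (h : lam • z + G φ = lam • x) : φ (G φ) ≤ lam * ‖x‖ ^ 2 := by
  have h1 := apply_resolvent_eq hφz h
  have h2 : φ x ≤ ‖z‖ * ‖x‖ := hφ ▸ (le_abs_self _).trans (φ.le_opNorm x)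
  have h3 : ‖z‖ * ‖x‖ ≤ ‖x‖ ^ 2 := by
    rw [sq]; gcongr; exact norm_le_of_resolvent hlam hG hφz hφ h
  nlinarith [sq_nonneg ‖z‖]

end Resolvent

theorem eq_zero_of_tendsto_toWeakDual (hsymm : ∀ χ ψ : StrongDual ℝ X, χ (G ψ) = ψ (G χ))
    (hle : ∀ χ ψ : StrongDual ℝ X, 2 * χ (G ψ) ≤ χ (G χ) + ψ (G ψ))
    (hpos : ∀ χ : StrongDual ℝ X, χ ≠ 0 → 0 < χ (G χ))
    {ι : Type*} {l : Filter ι} [l.NeBot] {φ : ι → StrongDual ℝ X} {ψ : StrongDual ℝ X}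
    (hφ : Tendsto (fun i => StrongDual.toWeakDual (φ i)) l (𝓝 (StrongDual.toWeakDual ψ)))
    (hG : Tendsto (fun i => φ i (G (φ i))) l (𝓝 0)) : ψ = 0 := by
  have hψ : Tendsto (fun i => ψ (G (φ i))) l (𝓝 (ψ (G ψ))) := by
    simp only [hsymm ψ]
    exact ((WeakDual.eval_continuous (G ψ)).tendsto _).comp hφ
  have hle_lim : 2 * ψ (G ψ) ≤ ψ (G ψ) + 0 :=
    le_of_tendsto_of_tendsto (hψ.const_mul 2) (tendsto_const_nhds.add hG)
      (Eventually.of_forall fun i => hle ψ (φ i))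
  by_contra hne
  linarith [hpos ψ hne]

theorem tendsto_toWeakDual_zero (hsymm : ∀ χ ψ : StrongDual ℝ X, χ (G ψ) = ψ (G χ))
    (hle : ∀ χ ψ : StrongDual ℝ X, 2 * χ (G ψ) ≤ χ (G χ) + ψ (G ψ))
    (hpos : ∀ χ : StrongDual ℝ X, χ ≠ 0 → 0 < χ (G χ))
    {ι : Type*} {l : Filter ι} {φ : ι → StrongDual ℝ X} {C : ℝ} (hbdd : ∀ᶠ i in l, ‖φ i‖ ≤ C)
    (hG : Tendsto (fun i => φ i (G (φ i))) l (𝓝 0)) :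
    Tendsto (fun i => StrongDual.toWeakDual (φ i)) l (𝓝 0) := by
  refine (WeakDual.isCompact_closedBall 0 C).tendsto_nhds_of_unique_mapClusterPt
    (hbdd.mono fun i hi => by simpa using hi) fun ψ _ hψ => ?_
  obtain ⟨u, hul, hu⟩ := mapClusterPt_iff_ultrafilter.1 hψ
  exact eq_zero_of_tendsto_toWeakDual (ψ := WeakDual.toStrongDual ψ) hsymm hle hpos hu
    (hG.mono_left hul)

theorem tendsto_norm_resolvent_zero (hsymm : ∀ χ ψ : StrongDual ℝ X, χ (G ψ) = ψ (G χ))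
    (hle : ∀ χ ψ : StrongDual ℝ X, 2 * χ (G ψ) ≤ χ (G χ) + ψ (G ψ))
    (hpos : ∀ χ : StrongDual ℝ X, χ ≠ 0 → 0 < χ (G χ)) {J : X → StrongDual ℝ X} {x : X}
    (hJ_id : ∀ y : X, J y y = ‖y‖ ^ 2) (hJ_norm : ∀ y : X, ‖J y‖ = ‖y‖) {z : ℝ → X}
    (hz : ∀ lam : ℝ, 0 < lam → lam • z lam + G (J (z lam)) = lam • x) :
    Tendsto (fun lam => ‖z lam‖) (𝓝[>] 0) (𝓝 0) := by
  have hG (φ : StrongDual ℝ X) : 0 ≤ φ (G φ) := by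
    rcases eq_or_ne φ 0 with rfl | hφ
    exacts [le_rfl, (hpos φ hφ).le]
  have hbdd : ∀ᶠ lam in 𝓝[>] 0, ‖J (z lam)‖ ≤ ‖x‖ :=
    eventually_mem_nhdsWithin.mono fun lam hlam => (hJ_norm _).trans_le
      (norm_le_of_resolvent hlam (hG _) (hJ_id _) (hJ_norm _) (hz lam hlam))
  have hsmall : Tendsto (fun lam => J (z lam) (G (J (z lam)))) (𝓝[>] 0) (𝓝 0) := by
    have hlin : Tendsto (fun lam : ℝ => lam * ‖x‖ ^ 2) (𝓝[>] 0) (𝓝 0) :=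
      tendsto_nhdsWithin_of_tendsto_nhds
        (by simpa using (continuous_mul_const (‖x‖ ^ 2)).tendsto 0)
    exact tendsto_of_tendsto_of_tendsto_of_le_of_le' tendsto_const_nhds hlin
      (Eventually.of_forall fun lam => hG _) (eventually_mem_nhdsWithin.mono fun lam hlam =>
        apply_le_of_resolvent hlam (hG _) (hJ_id _) (hJ_norm _) (hz lam hlam))
  have hweak : Tendsto (fun lam => J (z lam) x) (𝓝[>] 0) (𝓝 0) :=
    ((WeakDual.eval_continuous x).tendsto 0).comp
      (tendsto_toWeakDual_zero hsymm hle hpos hbdd hsmall)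
  have hsq : Tendsto (fun lam => ‖z lam‖ ^ 2) (𝓝[>] 0) (𝓝 0) :=
    tendsto_of_tendsto_of_tendsto_of_le_of_le' tendsto_const_nhds hweak
      (Eventually.of_forall fun lam => sq_nonneg _) (eventually_mem_nhdsWithin.mono fun lam hlam =>
        norm_sq_le_apply_of_resolvent hlam (hG _) (hJ_id _) (hz lam hlam))
  simpa [Real.sqrt_sq (norm_nonneg _)] using hsq.sqrt

end PositiveOperator

theorem stmt_10_general
    {X U : Type*} [NormedAddCommGroup X] [NormedSpace ℝ X] [CompleteSpace X]
    [TopologicalSpace.SeparableSpace X]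
    [NormedAddCommGroup U] [InnerProductSpace ℝ U] [CompleteSpace U]
    [TopologicalSpace.SeparableSpace U]
    (τ : ℝ)
    (B : U →L[ℝ] X)
    (R : ℝ → ℝ → X →L[ℝ] X)
    -- strong continuity of (t,s) ↦ R(t,s)x on the triangle 0 ≤ s ≤ t ≤ τ
    (hR_strong : ∀ x : X, ContinuousOn (fun p : ℝ × ℝ => R p.1 p.2 x)
      {p : ℝ × ℝ | 0 ≤ p.2 ∧ p.2 ≤ p.1 ∧ p.1 ≤ τ})
    -- uniform boundedness in operator norm
    (MR : ℝ) (hMR : ∀ t s : ℝ, 0 ≤ s → s ≤ t → t ≤ τ → ‖R t s‖ ≤ MR)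
    -- J is a duality mapping of X, bijective and demicontinuous
    (J : X → StrongDual ℝ X)
    (hJ_id : ∀ x : X, J x x = ‖x‖ ^ 2)
    (hJ_norm : ∀ x : X, ‖J x‖ = ‖x‖)
    -- B* x* is the Riesz representative of u ↦ ⟨x*, Bu⟩
    (Bstar : StrongDual ℝ X → U)
    (hBstar : ∀ (φ : StrongDual ℝ X) (u : U), ⟪Bstar φ, u⟫ = φ (B u))
    -- the controllability Gramian B_τ
    (Btau : StrongDual ℝ X → X)
    (hBtau : ∀ φ : StrongDual ℝ X,
      Btau φ = ∫ t in Set.Icc (0:ℝ) τ, R τ t (B (Bstar (φ.comp (R τ t)))))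
    -- positivity of the Gramian
    (hpos : ∀ φ : StrongDual ℝ X, φ ≠ 0 → 0 < φ (Btau φ))
    (x : X) (z : ℝ → X)
    -- z lam is the solution of λ z_λ + B_τ(J(z_λ)) = λ x
    (hz : ∀ lam : ℝ, 0 < lam → lam • z lam + Btau (J (z lam)) = lam • x) :
    Filter.Tendsto (fun lam : ℝ => ‖z lam‖) (nhdsWithin 0 (Set.Ioi 0)) (nhds 0) := by
  set μ : Measure ℝ := volume.restrict (Set.Icc 0 τ)
  have hS (v : X) (ψ : StrongDual ℝ X) : AEMeasurable (fun t => ψ (R τ t v)) μ :=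
    (ψ.continuous.comp_continuousOn ((hR_strong v).comp
      (continuousOn_const.prodMk continuousOn_id) fun t ht => ⟨ht.1, ht.2, le_rfl⟩)).aemeasurable
      measurableSet_Icc
  have hS_bdd : ∀ᵐ t ∂μ, ‖R τ t‖ ≤ MR :=
    (ae_restrict_mem measurableSet_Icc).mono fun t ht => hMR τ t ht.1 ht.2 le_rfl
  obtain rfl := eq_dualAdjoint hBstar
  obtain rfl : Btau = gramian μ B (R τ) := funext hBtau
  exact tendsto_norm_resolvent_zero (gramian_symm hS hS_bdd) (two_mul_apply_gramian_le hS hS_bdd)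
    hpos hJ_id hJ_norm hz

/-- with `z_λ` the unique solution of `λ z_λ + B_τ(J(z_λ)) = λ x`,
one has `‖z_λ‖ → 0` as `λ → 0⁺`. -/
theorem stmt_10
    {X U : Type*} [NormedAddCommGroup X] [NormedSpace ℝ X] [CompleteSpace X]
    [TopologicalSpace.SeparableSpace X]
    [StrictConvexSpace ℝ X] [StrictConvexSpace ℝ (StrongDual ℝ X)]
    [NormedAddCommGroup U] [InnerProductSpace ℝ U] [CompleteSpace U]
    [TopologicalSpace.SeparableSpace U]
    -- X is reflexive
    (hrefl : Function.Surjective (NormedSpace.inclusionInDoubleDual ℝ X))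
    (τ : ℝ) (hτ : 0 < τ)
    (B : U →L[ℝ] X)
    (R : ℝ → ℝ → X →L[ℝ] X)
    -- strong continuity of (t,s) ↦ R(t,s)x on the triangle 0 ≤ s ≤ t ≤ τ
    (hR_strong : ∀ x : X, ContinuousOn (fun p : ℝ × ℝ => R p.1 p.2 x)
      {p : ℝ × ℝ | 0 ≤ p.2 ∧ p.2 ≤ p.1 ∧ p.1 ≤ τ})
    -- uniform boundedness in operator norm
    (MR : ℝ) (hMR : ∀ t s : ℝ, 0 ≤ s → s ≤ t → t ≤ τ → ‖R t s‖ ≤ MR)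
    -- J is a duality mapping of X, bijective and demicontinuous
    (J : X → StrongDual ℝ X)
    (hJ_id : ∀ x : X, J x x = ‖x‖ ^ 2)
    (hJ_norm : ∀ x : X, ‖J x‖ = ‖x‖)
    (hJ_bij : Function.Bijective J)
    (hJ_demi : ∀ z : X, Continuous fun x : X => J x z)
    -- B* x* is the Riesz representative of u ↦ ⟨x*, Bu⟩
    (Bstar : StrongDual ℝ X → U)
    (hBstar : ∀ (φ : StrongDual ℝ X) (u : U), ⟪Bstar φ, u⟫ = φ (B u))
    -- the controllability Gramian B_τ
    (Btau : StrongDual ℝ X → X)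
    (hBtau : ∀ φ : StrongDual ℝ X,
      Btau φ = ∫ t in Set.Icc (0:ℝ) τ, R τ t (B (Bstar (φ.comp (R τ t)))))
    -- positivity of the Gramian
    (hpos : ∀ φ : StrongDual ℝ X, φ ≠ 0 → 0 < φ (Btau φ))
    (x : X) (z : ℝ → X)
    -- z lam is the solution of λ z_λ + B_τ(J(z_λ)) = λ x
    (hz : ∀ lam : ℝ, 0 < lam → lam • z lam + Btau (J (z lam)) = lam • x) :
    Filter.Tendsto (fun lam : ℝ => ‖z lam‖) (nhdsWithin 0 (Set.Ioi 0)) (nhds 0) :=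
  stmt_10_general τ B R hR_strong MR hMR J hJ_id hJ_norm Bstar hBstar Btau hBtau hpos x z hz
end

section
/- Let τ > 0, let X be a separable reflexive real Banach space and U a real separable Hilbert space, let B : U → X be a bounded linear operator, let R(t,s) ∈ L(X) (0 ≤ s ≤ t ≤ τ) be a strongly continuous, uniformly bounded family, and fix x₀ ∈ X. Let J : X → X* be a duality mapping and define B_τ : X* → X by B_τ x* = ∫₀^τ R(τ,t) B B* R(τ,t)* x* dt. Assume that for every λ > 0 and every x ∈ X there exists z_λ(x) ∈ X with λ z_λ(x) + B_τ(J(z_λ(x))) = λx, ‖z_λ(x)‖_X ≤ ‖x‖_X, and ‖z_λ(x)‖_X → 0 as λ → 0⁺. Then the linear system is approximately controllable on [0,τ]: the set {R(τ,0)x₀ + ∫₀^τ R(τ,s)Bu(s)ds : u ∈ L²([0,τ];U)} is dense in X. -/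
/-! Given a target `y`, put `x = y - R(τ,0)x₀` and choose `λ > 0` with `‖z_λ(x)‖` small. The control
`u(t) = λ⁻¹ B* (R(τ,t)* J z_λ(x))` reaches `R(τ,0)x₀ + λ⁻¹ B_τ (J z_λ(x))`, which the resolvent
equation turns into `y - z_λ(x)`. The only analytic point is that `u ∈ L²`: it is bounded, and it is
weakly measurable, hence measurable because `U` is separable. -/

open MeasureTheory Set
open scoped RealInnerProductSpace

theorem measurable_of_forall_measurable_dist {α β : Type*} [MeasurableSpace α]
    [PseudoMetricSpace β] [SecondCountableTopology β] [MeasurableSpace β] [BorelSpace β]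
    {f : α → β} (hf : ∀ c, Measurable fun a => dist (f a) c) : Measurable f := by
  refine measurable_of_isOpen fun s hs => ?_
  obtain ⟨T, -, hTc, hT⟩ := TopologicalSpace.isOpen_biUnion_countable
    {p : β × ℝ | Metric.ball p.1 p.2 ⊆ s} (fun p => Metric.ball p.1 p.2)
    (fun _ _ => Metric.isOpen_ball)
  have hs_eq : s = ⋃ p ∈ T, Metric.ball p.1 p.2 := by
    rw [hT]
    refine subset_antisymm (fun x hx => ?_) (iUnion₂_subset fun p hp => hp)
    obtain ⟨r, hr, hball⟩ := Metric.isOpen_iff.1 hs x hx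
    exact mem_biUnion (x := (x, r)) hball (Metric.mem_ball_self hr)
  rw [hs_eq, preimage_iUnion₂]
  exact .biUnion hTc fun p _ => measurableSet_lt (hf p.1) measurable_const

theorem iSup_inner_closedBall_eq_norm {U : Type*} [NormedAddCommGroup U] [InnerProductSpace ℝ U]
    (w : U) : ⨆ v : Metric.closedBall (0 : U) 1, ⟪w, v⟫ = ‖w‖ := by
  have hle : ∀ v : Metric.closedBall (0 : U) 1, ⟪w, v⟫ ≤ ‖w‖ := fun v =>
    (real_inner_le_norm w v).trans <|
      mul_le_of_le_one_right (norm_nonneg w) (mem_closedBall_zero_iff.1 v.2)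
  have hw : ‖w‖⁻¹ • w ∈ Metric.closedBall (0 : U) 1 := by
    rw [mem_closedBall_zero_iff, norm_smul, norm_inv, norm_norm]
    exact inv_mul_le_one
  refine le_antisymm (ciSup_le hle) (le_ciSup_of_le ⟨‖w‖, forall_mem_range.2 hle⟩ ⟨_, hw⟩ ?_)
  rw [real_inner_smul_right, real_inner_self_eq_norm_sq]
  rcases eq_or_ne ‖w‖ 0 with h | h
  · simp [h]
  · rw [sq, ← mul_assoc, inv_mul_cancel₀ h, one_mul]

theorem measurable_of_forall_measurable_inner {α U : Type*} [MeasurableSpace α]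
    [NormedAddCommGroup U] [InnerProductSpace ℝ U] [TopologicalSpace.SeparableSpace U]
    [MeasurableSpace U] [BorelSpace U] {f : α → U}
    (hf : ∀ v, Measurable fun a => ⟪f a, v⟫) : Measurable f := by
  obtain ⟨d, hd⟩ := TopologicalSpace.exists_dense_seq (Metric.closedBall (0 : U) 1)
  refine measurable_of_forall_measurable_dist fun c => ?_
  have hdist : ∀ a, dist (f a) c = ⨆ n, (⟪f a, d n⟫ - ⟪c, d n⟫) := fun a => by
    rw [dist_eq_norm, ← iSup_inner_closedBall_eq_norm,
      ← hd.ciSup' (continuous_const.inner continuous_subtype_val)]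
    exact (iSup_range' (fun v : Metric.closedBall (0 : U) 1 => ⟪f a - c, (v : U)⟫) d).trans
      (by simp only [inner_sub_left])
  simp only [hdist]
  exact .iSup fun n => (hf _).sub_const _

section Adjoint

variable {X Y U : Type*} [NormedAddCommGroup X] [NormedSpace ℝ X]
  [NormedAddCommGroup Y] [NormedSpace ℝ Y]
  [NormedAddCommGroup U] [InnerProductSpace ℝ U] [CompleteSpace U]
  {B : U →L[ℝ] X} {Bstar : StrongDual ℝ X → U}

theorem adjoint_eq_toDual_symm_comp (hBstar : ∀ φ u, ⟪Bstar φ, u⟫ = φ (B u))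
    (φ : StrongDual ℝ X) : Bstar φ = (InnerProductSpace.toDual ℝ U).symm (φ.comp B) :=
  ext_inner_right ℝ fun u => by simp [hBstar]

theorem norm_adjoint_apply_le (hBstar : ∀ φ u, ⟪Bstar φ, u⟫ = φ (B u)) (φ : StrongDual ℝ X) :
    ‖Bstar φ‖ ≤ ‖φ‖ * ‖B‖ := by
  rw [adjoint_eq_toDual_symm_comp hBstar, LinearIsometryEquiv.norm_map]
  exact φ.opNorm_comp_le B

theorem adjoint_smul (hBstar : ∀ φ u, ⟪Bstar φ, u⟫ = φ (B u)) (c : ℝ)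
    (φ : StrongDual ℝ X) : Bstar (c • φ) = c • Bstar φ := by
  simp only [adjoint_eq_toDual_symm_comp hBstar, ContinuousLinearMap.smul_comp, map_smul]

theorem setIntegral_adjoint_smul (hBstar : ∀ φ u, ⟪Bstar φ, u⟫ = φ (B u))
    (S : ℝ → X →L[ℝ] Y) (s : Set ℝ) (c : ℝ) (φ : StrongDual ℝ Y) :
    ∫ t in s, S t (B (Bstar ((c • φ).comp (S t)))) =
      c • ∫ t in s, S t (B (Bstar (φ.comp (S t)))) := by
  simp only [ContinuousLinearMap.smul_comp, adjoint_smul hBstar, map_smul, integral_smul]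

theorem exists_Lp_integral_eq_setIntegral_adjoint [TopologicalSpace.SeparableSpace U]
    (hBstar : ∀ φ u, ⟪Bstar φ, u⟫ = φ (B u)) {S : ℝ → X →L[ℝ] Y} {a b : ℝ} (hab : a ≤ b)
    (hS : ∀ x, ContinuousOn (fun t => S t x) (Icc a b))
    {M : ℝ} (hM : ∀ t ∈ Icc a b, ‖S t‖ ≤ M) (φ : StrongDual ℝ Y) :
    ∃ u : Lp U 2 (volume.restrict (Icc a b)),
      ∫ s, S s (B (u s)) ∂(volume.restrict (Icc a b)) =
        ∫ t in Icc a b, S t (B (Bstar (φ.comp (S t)))) := by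
  borelize U
  set G : ℝ → U := fun t => Bstar (φ.comp (S (projIcc a b hab t)))
  have hG_meas : Measurable G := by
    refine measurable_of_forall_measurable_inner fun v => ?_
    simp only [G, hBstar]
    exact (φ.continuous.comp ((hS (B v)).comp_continuous
      (continuous_subtype_val.comp continuous_projIcc) fun t => (projIcc a b hab t).2)).measurable
  have hG_bound : ∀ t, ‖G t‖ ≤ ‖φ‖ * M * ‖B‖ := fun t =>
    calc ‖G t‖ ≤ ‖φ‖ * ‖S (projIcc a b hab t)‖ * ‖B‖ :=
          (norm_adjoint_apply_le hBstar _).trans <| by gcongr; exact φ.opNorm_comp_le _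
      _ ≤ ‖φ‖ * M * ‖B‖ := by gcongr; exact hM _ (projIcc a b hab t).2
  have hG : MemLp G 2 (volume.restrict (Icc a b)) :=
    .of_bound hG_meas.aestronglyMeasurable _ (.of_forall hG_bound)
  refine ⟨hG.toLp G, integral_congr_ae ?_⟩
  filter_upwards [hG.coeFn_toLp, ae_restrict_mem measurableSet_Icc] with t hu ht
  simp only [hu, G, projIcc_of_mem hab ht]

end Adjoint

theorem stmt_11_general
    {X U : Type*} [NormedAddCommGroup X] [NormedSpace ℝ X]
    [NormedAddCommGroup U] [InnerProductSpace ℝ U] [CompleteSpace U]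
    [TopologicalSpace.SeparableSpace U]
    (τ : ℝ) (hτ : 0 < τ)
    (B : U →L[ℝ] X)
    (R : ℝ → ℝ → X →L[ℝ] X)
    -- strong continuity of (t,s) ↦ R(t,s)x on the triangle 0 ≤ s ≤ t ≤ τ
    (hR_strong : ∀ x : X, ContinuousOn (fun p : ℝ × ℝ => R p.1 p.2 x)
      {p : ℝ × ℝ | 0 ≤ p.2 ∧ p.2 ≤ p.1 ∧ p.1 ≤ τ})
    -- uniform boundedness in operator norm
    (MR : ℝ) (hMR : ∀ t s : ℝ, 0 ≤ s → s ≤ t → t ≤ τ → ‖R t s‖ ≤ MR)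
    (x₀ : X)
    -- J is a duality mapping of X
    (J : X → StrongDual ℝ X)
    -- B* x* is the Riesz representative of u ↦ ⟨x*, Bu⟩
    (Bstar : StrongDual ℝ X → U)
    (hBstar : ∀ (φ : StrongDual ℝ X) (u : U), ⟪Bstar φ, u⟫ = φ (B u))
    -- the controllability Gramian B_τ
    (Btau : StrongDual ℝ X → X)
    (hBtau : ∀ φ : StrongDual ℝ X,
      Btau φ = ∫ t in Set.Icc (0:ℝ) τ, R τ t (B (Bstar (φ.comp (R τ t)))))
    -- the resolvent-type solutions z_λ(x) of λz + B_τ(J z) = λx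
    (z : ℝ → X → X)
    (hz_sol : ∀ lam : ℝ, 0 < lam → ∀ x : X,
      lam • z lam x + Btau (J (z lam x)) = lam • x)
    (hz_tendsto : ∀ x : X,
      Filter.Tendsto (fun lam : ℝ => ‖z lam x‖) (nhdsWithin 0 (Set.Ioi 0)) (nhds 0)) :
    Dense {y : X | ∃ u : Lp U 2 ((volume : Measure ℝ).restrict (Set.Icc 0 τ)),
      y = R τ 0 x₀ +
        ∫ s, R τ s (B (u s)) ∂((volume : Measure ℝ).restrict (Set.Icc 0 τ))} := by
  refine Metric.dense_iff.2 fun y ε hε => ?_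
  set x := y - R τ 0 x₀
  obtain ⟨lam, hz_small, hlam : 0 < lam⟩ :=
    (((hz_tendsto x).eventually (gt_mem_nhds hε)).and self_mem_nhdsWithin).exists
  have hR_cont : ∀ w, ContinuousOn (fun t => R τ t w) (Icc 0 τ) := fun w =>
    (hR_strong w).comp (continuous_const.prodMk continuous_id).continuousOn
      fun t ht => ⟨ht.1, ht.2, le_rfl⟩
  obtain ⟨u, hu⟩ := exists_Lp_integral_eq_setIntegral_adjoint hBstar hτ.le hR_cont
    (fun t ht => hMR τ t ht.1 ht.2 le_rfl) (lam⁻¹ • J (z lam x))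
  have hresolvent : Btau (J (z lam x)) = lam • (x - z lam x) := by
    rw [smul_sub, ← hz_sol lam hlam x, add_sub_cancel_left]
  refine ⟨y - z lam x, by simpa [dist_eq_norm] using hz_small, u, ?_⟩
  rw [hu, setIntegral_adjoint_smul hBstar, ← hBtau, hresolvent, inv_smul_smul₀ hlam.ne']
  simp only [x]
  abel

/-- if for every `λ > 0` and `x ∈ X` there is `z_λ(x)` with
`λ z_λ(x) + B_τ(J(z_λ(x))) = λx`, `‖z_λ(x)‖ ≤ ‖x‖` and `‖z_λ(x)‖ → 0` as `λ → 0⁺`,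
then the linear system is approximately controllable on `[0,τ]`. -/
theorem stmt_11
    {X U : Type*} [NormedAddCommGroup X] [NormedSpace ℝ X] [CompleteSpace X]
    [TopologicalSpace.SeparableSpace X]
    [NormedAddCommGroup U] [InnerProductSpace ℝ U] [CompleteSpace U]
    [TopologicalSpace.SeparableSpace U]
    -- X is reflexive
    (hrefl : Function.Surjective (NormedSpace.inclusionInDoubleDual ℝ X))
    (τ : ℝ) (hτ : 0 < τ)
    (B : U →L[ℝ] X)
    (R : ℝ → ℝ → X →L[ℝ] X)
    -- strong continuity of (t,s) ↦ R(t,s)x on the triangle 0 ≤ s ≤ t ≤ τ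
    (hR_strong : ∀ x : X, ContinuousOn (fun p : ℝ × ℝ => R p.1 p.2 x)
      {p : ℝ × ℝ | 0 ≤ p.2 ∧ p.2 ≤ p.1 ∧ p.1 ≤ τ})
    -- uniform boundedness in operator norm
    (MR : ℝ) (hMR : ∀ t s : ℝ, 0 ≤ s → s ≤ t → t ≤ τ → ‖R t s‖ ≤ MR)
    (x₀ : X)
    -- J is a duality mapping of X
    (J : X → StrongDual ℝ X)
    (hJ_id : ∀ x : X, J x x = ‖x‖ ^ 2)
    (hJ_norm : ∀ x : X, ‖J x‖ = ‖x‖)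
    -- B* x* is the Riesz representative of u ↦ ⟨x*, Bu⟩
    (Bstar : StrongDual ℝ X → U)
    (hBstar : ∀ (φ : StrongDual ℝ X) (u : U), ⟪Bstar φ, u⟫ = φ (B u))
    -- the controllability Gramian B_τ
    (Btau : StrongDual ℝ X → X)
    (hBtau : ∀ φ : StrongDual ℝ X,
      Btau φ = ∫ t in Set.Icc (0:ℝ) τ, R τ t (B (Bstar (φ.comp (R τ t)))))
    -- the resolvent-type solutions z_λ(x) of λz + B_τ(J z) = λx
    (z : ℝ → X → X)
    (hz_sol : ∀ lam : ℝ, 0 < lam → ∀ x : X,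
      lam • z lam x + Btau (J (z lam x)) = lam • x)
    (hz_bound : ∀ lam : ℝ, 0 < lam → ∀ x : X, ‖z lam x‖ ≤ ‖x‖)
    (hz_tendsto : ∀ x : X,
      Filter.Tendsto (fun lam : ℝ => ‖z lam x‖) (nhdsWithin 0 (Set.Ioi 0)) (nhds 0)) :
    Dense {y : X | ∃ u : Lp U 2 ((volume : Measure ℝ).restrict (Set.Icc 0 τ)),
      y = R τ 0 x₀ +
        ∫ s, R τ s (B (u s)) ∂((volume : Measure ℝ).restrict (Set.Icc 0 τ))} :=
  stmt_11_general τ hτ B R hR_strong MR hMR x₀ J Bstar hBstar Btau hBtau z hz_sol hz_tendsto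
end

section
/- Let X be a real separable Hilbert space with a Hilbert (orthonormal) basis (e_n)_{n ≥ 1} indexed by the positive integers, and let b : ℝ → ℝ satisfy b(r) < −1 for every r. Let 0 < α < β < 1 and t, s ∈ ℝ. Then the diagonal map D : X → X defined by D w = Σ_{n ≥ 1} ((n² − b(t))^{α} / (n² − b(s))^{β}) ⟨w, e_n⟩ e_n is a well-defined bounded linear operator, and ‖D w‖ ≤ C_{α,β} ‖w‖ for all w ∈ X, where C_{α,β} = sup_{n ≥ 1} ((n² − b(t)) / (n² + 1))^{β} is finite. -/
open scoped RealInnerProductSpace ENNReal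

/-!
The multiplier `(n² - b t)^α / (n² - b s)^β` is at most `((n² - b t) / (n² + 1))^β`, since
`n² - b t ≥ 1`, `α ≤ β` and `n² - b s ≥ n² + 1`; the quotient is at most `-b t`, so the
multipliers form a bounded sequence `c`. Read through the isometry `X ≃ ℓ²` given by the Hilbert
basis, the map is pointwise multiplication by `c` on `ℓ²`, whose norm is at most `‖c‖_∞`.
-/

namespace lp

variable {ι 𝕜 : Type*} [NontriviallyNormedField 𝕜] {p : ℝ≥0∞} [Fact (1 ≤ p)]

theorem sum_norm_mul_rpow_le (hp : 0 < p.toReal) (c : lp (fun _ : ι => 𝕜) ∞)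
    (f : lp (fun _ : ι => 𝕜) p) (s : Finset ι) :
    ∑ i ∈ s, ‖c i * f i‖ ^ p.toReal ≤ (‖c‖ * ‖f‖) ^ p.toReal := by
  have hc : ∀ i, ‖c i‖ ≤ ‖c‖ := norm_apply_le_norm ENNReal.top_ne_zero c
  calc ∑ i ∈ s, ‖c i * f i‖ ^ p.toReal
      ≤ ∑ i ∈ s, ‖c‖ ^ p.toReal * ‖f i‖ ^ p.toReal := by
        gcongr with i
        rw [norm_mul, ← Real.mul_rpow (norm_nonneg _) (norm_nonneg _)]
        gcongr
        exact hc i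
    _ = ‖c‖ ^ p.toReal * ∑ i ∈ s, ‖f i‖ ^ p.toReal := by rw [Finset.mul_sum]
    _ ≤ ‖c‖ ^ p.toReal * ‖f‖ ^ p.toReal := by gcongr; exact sum_rpow_le_norm_rpow hp f s
    _ = (‖c‖ * ‖f‖) ^ p.toReal := (Real.mul_rpow (norm_nonneg _) (norm_nonneg _)).symm

theorem memℓp_mul (hp : 0 < p.toReal) (c : lp (fun _ : ι => 𝕜) ∞)
    (f : lp (fun _ : ι => 𝕜) p) : Memℓp (fun i => c i * f i) p :=
  memℓp_gen' (sum_norm_mul_rpow_le hp c f)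

noncomputable def diagonal (hp : 0 < p.toReal) (c : lp (fun _ : ι => 𝕜) ∞) :
    lp (fun _ : ι => 𝕜) p →L[𝕜] lp (fun _ : ι => 𝕜) p :=
  LinearMap.mkContinuous
    { toFun f := ⟨fun i => c i * f i, memℓp_mul hp c f⟩
      map_add' f g := by ext i; simp only [coeFn_add, Pi.add_apply, mul_add]
      map_smul' a f := by ext i; simp [mul_left_comm] }
    ‖c‖ fun f => norm_le_of_forall_sum_le hp (by positivity) (sum_norm_mul_rpow_le hp c f)

@[simp]
theorem diagonal_apply (hp : 0 < p.toReal) (c : lp (fun _ : ι => 𝕜) ∞)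
    (f : lp (fun _ : ι => 𝕜) p) (i : ι) : diagonal hp c f i = c i * f i := rfl

theorem norm_diagonal_le (hp : 0 < p.toReal) (c : lp (fun _ : ι => 𝕜) ∞) :
    ‖diagonal (p := p) hp c‖ ≤ ‖c‖ :=
  LinearMap.mkContinuous_norm_le _ (norm_nonneg c) _

end lp

namespace HilbertBasis

variable {ι 𝕜 X : Type*} [RCLike 𝕜] [NormedAddCommGroup X] [InnerProductSpace 𝕜 X]

noncomputable def diagonal (e : HilbertBasis ι 𝕜 X) (c : lp (fun _ : ι => 𝕜) ∞) : X →L[𝕜] X :=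
  (e.repr.symm : lp (fun _ : ι => 𝕜) 2 →L[𝕜] X) ∘L lp.diagonal (by norm_num) c ∘L
    (e.repr : X →L[𝕜] lp (fun _ : ι => 𝕜) 2)

theorem hasSum_diagonal (e : HilbertBasis ι 𝕜 X) (c : lp (fun _ : ι => 𝕜) ∞) (w : X) :
    HasSum (fun i => (c i * inner 𝕜 (e i) w) • e i) (e.diagonal c w) := by
  simpa [diagonal, e.repr_apply_apply] using e.hasSum_repr_symm (lp.diagonal _ c (e.repr w))

theorem norm_diagonal_apply_le (e : HilbertBasis ι 𝕜 X) (c : lp (fun _ : ι => 𝕜) ∞) (w : X) :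
    ‖e.diagonal c w‖ ≤ ‖c‖ * ‖w‖ := by
  rw [← e.repr.norm_map w]
  exact (e.repr.symm.norm_map _).trans_le
    ((lp.diagonal _ c).le_of_opNorm_le (lp.norm_diagonal_le (by norm_num) c) _)

end HilbertBasis

theorem rpow_div_rpow_le_div_rpow {a d d' α β : ℝ} (ha : 1 ≤ a) (hd : 0 < d) (hdd' : d ≤ d')
    (hαβ : α ≤ β) (hβ : 0 ≤ β) : a ^ α / d' ^ β ≤ (a / d) ^ β := by
  rw [Real.div_rpow (by linarith) hd.le]
  gcongr

theorem sub_div_add_one_le_neg {x a : ℝ} (hx : 0 ≤ x) (ha : a ≤ -1) :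
    (x - a) / (x + 1) ≤ -a := by
  rw [div_le_iff₀ (by linarith)]
  nlinarith

theorem stmt_13_general
    {X : Type*} [NormedAddCommGroup X] [InnerProductSpace ℝ X]
    (e : HilbertBasis ℕ+ ℝ X)
    (b : ℝ → ℝ) (hb : ∀ r : ℝ, b r < -1)
    (α β : ℝ) (hα : 0 < α) (hαβ : α < β)
    (t s : ℝ) :
    BddAbove (Set.range fun n : ℕ+ => (((n : ℝ) ^ 2 - b t) / ((n : ℝ) ^ 2 + 1)) ^ β) ∧
    (∀ w : X, Summable fun n : ℕ+ =>
      ((((n : ℝ) ^ 2 - b t) ^ α / ((n : ℝ) ^ 2 - b s) ^ β) * ⟪w, e n⟫) • e n) ∧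
    IsBoundedLinearMap ℝ (fun w : X => ∑' n : ℕ+,
      ((((n : ℝ) ^ 2 - b t) ^ α / ((n : ℝ) ^ 2 - b s) ^ β) * ⟪w, e n⟫) • e n) ∧
    (∀ w : X,
      ‖∑' n : ℕ+, ((((n : ℝ) ^ 2 - b t) ^ α / ((n : ℝ) ^ 2 - b s) ^ β) * ⟪w, e n⟫) • e n‖ ≤
        (⨆ n : ℕ+, (((n : ℝ) ^ 2 - b t) / ((n : ℝ) ^ 2 + 1)) ^ β) * ‖w‖) := by
  set c : ℕ+ → ℝ := fun n => ((n : ℝ) ^ 2 - b t) ^ α / ((n : ℝ) ^ 2 - b s) ^ β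
  set ratio : ℕ+ → ℝ := fun n => (((n : ℝ) ^ 2 - b t) / ((n : ℝ) ^ 2 + 1)) ^ β
  have hβ : 0 ≤ β := by linarith
  have hratio : BddAbove (Set.range ratio) := by
    refine ⟨(-b t) ^ β, Set.forall_mem_range.2 fun n => ?_⟩
    exact Real.rpow_le_rpow (div_nonneg (by nlinarith [hb t]) (by positivity))
      (sub_div_add_one_le_neg (by positivity) (hb t).le) hβ
  have hc : ∀ n, ‖c n‖ ≤ ⨆ n, ratio n := fun n => by
    have hct : 1 ≤ (n : ℝ) ^ 2 - b t := by nlinarith [hb t]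
    have hcs : (n : ℝ) ^ 2 + 1 ≤ (n : ℝ) ^ 2 - b s := by linarith [hb s]
    calc ‖c n‖ = c n := Real.norm_of_nonneg <| div_nonneg
          (Real.rpow_nonneg (by linarith) _) (Real.rpow_nonneg (by nlinarith) _)
      _ ≤ ratio n := rpow_div_rpow_le_div_rpow hct (by positivity) hcs hαβ.le hβ
      _ ≤ ⨆ n, ratio n := le_ciSup hratio n
  let c' : lp (fun _ : ℕ+ => ℝ) ∞ := ⟨c, memℓp_infty ⟨_, Set.forall_mem_range.2 hc⟩⟩
  have hc' : ‖c'‖ ≤ ⨆ n, ratio n := lp.norm_le_of_forall_le ((norm_nonneg _).trans (hc 1)) hc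
  have hsum : ∀ w, HasSum (fun n => (c n * ⟪w, e n⟫) • e n) (e.diagonal c' w) := fun w => by
    simpa only [real_inner_comm] using e.hasSum_diagonal c' w
  have hD : (fun w => ∑' n, (c n * ⟪w, e n⟫) • e n) = e.diagonal c' :=
    funext fun w => (hsum w).tsum_eq
  refine ⟨hratio, fun w => (hsum w).summable, hD ▸ (e.diagonal c').isBoundedLinearMap,
    fun w => ?_⟩
  rw [(hsum w).tsum_eq]
  exact (e.norm_diagonal_apply_le c' w).trans (mul_le_mul_of_nonneg_right hc' (norm_nonneg w))

/-- the diagonal map `D w = Σ ((n²−b(t))^α/(n²−b(s))^β)⟨w,e_n⟩e_n`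
is a well-defined bounded linear operator with
`‖Dw‖ ≤ C_{α,β}‖w‖`, `C_{α,β} = sup_n ((n²−b(t))/(n²+1))^β < ∞`. -/
theorem stmt_13
    {X : Type*} [NormedAddCommGroup X] [InnerProductSpace ℝ X] [CompleteSpace X]
    (e : HilbertBasis ℕ+ ℝ X)
    (b : ℝ → ℝ) (hb : ∀ r : ℝ, b r < -1)
    (α β : ℝ) (hα : 0 < α) (hαβ : α < β) (hβ : β < 1)
    (t s : ℝ) :
    BddAbove (Set.range fun n : ℕ+ => (((n : ℝ) ^ 2 - b t) / ((n : ℝ) ^ 2 + 1)) ^ β) ∧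
    (∀ w : X, Summable fun n : ℕ+ =>
      ((((n : ℝ) ^ 2 - b t) ^ α / ((n : ℝ) ^ 2 - b s) ^ β) * ⟪w, e n⟫) • e n) ∧
    IsBoundedLinearMap ℝ (fun w : X => ∑' n : ℕ+,
      ((((n : ℝ) ^ 2 - b t) ^ α / ((n : ℝ) ^ 2 - b s) ^ β) * ⟪w, e n⟫) • e n) ∧
    (∀ w : X,
      ‖∑' n : ℕ+, ((((n : ℝ) ^ 2 - b t) ^ α / ((n : ℝ) ^ 2 - b s) ^ β) * ⟪w, e n⟫) • e n‖ ≤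
        (⨆ n : ℕ+, (((n : ℝ) ^ 2 - b t) / ((n : ℝ) ^ 2 + 1)) ^ β) * ‖w‖) :=
  stmt_13_general e b hb α β hα hαβ t s
end

section
/- Let 0 ≤ a₁ < a₂ ≤ π, τ > 0, and let b : [0,τ] → ℝ be continuous. Let (c_n)_{n ≥ 1} be a square-summable sequence of real numbers. Suppose that for all 0 ≤ s < t ≤ τ and all ξ ∈ (a₁, a₂), Σ_{n ≥ 1} exp(−n²(t−s) + ∫ₛᵗ b(r)dr) · c_n · sin(nξ) = 0 (the series converges absolutely since t − s > 0). Then c_n = 0 for every n ≥ 1. -/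
/-!
Fix `n` and pick `ξ ∈ (a₁, a₂)` with `sin (n ξ) ≠ 0` (the zero set of `sin (n ·)` is countable).
Taking `s = 0` and dividing by `exp (∫₀ᵗ b) ≠ 0`, the bounded sequence `dₘ = cₘ sin (m ξ)`
satisfies `∑ₘ exp (-m² t) dₘ = 0` for `t ∈ (0, τ]`. With `u = exp (-t)` this says that the
lacunary power series `∑ₘ dₘ u^(m²)`, whose radius of convergence is at least `1`, vanishes on
`[exp (-τ), 1)`; by the identity theorem it vanishes on `(-1, 1)`, so all its coefficients vanish.
-/

open Set Filter Function Topology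

theorem Real.exists_mem_Ioo_sin_mul_ne_zero {x : ℝ} (hx : x ≠ 0) {a₁ a₂ : ℝ} (ha : a₁ < a₂) :
    ∃ ξ ∈ Ioo a₁ a₂, Real.sin (x * ξ) ≠ 0 := by
  by_contra! h
  have hsub : Ioo a₁ a₂ ⊆ range fun k : ℤ => k * Real.pi / x := by
    intro ξ hξ
    obtain ⟨k, hk⟩ := Real.sin_eq_zero_iff.mp (h ξ hξ)
    exact ⟨k, by field_simp; linarith⟩
  exact ha.not_ge (Cardinal.Real.Ioo_countable_iff.mp ((countable_range _).mono hsub))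

theorem eq_zero_of_tsum_mul_pow_eventually_eq_zero {a : ℕ → ℝ} {C : ℝ} (ha : ∀ k, |a k| ≤ C)
    {u₀ : ℝ} (hu₀ : u₀ ∈ Ioo (-1) 1) (h : ∀ᶠ u in 𝓝 u₀, ∑' k, a k * u ^ k = 0) : a = 0 := by
  set p := FormalMultilinearSeries.ofScalars ℝ a
  have hrad : 1 ≤ p.radius := by
    simpa using p.le_radius_of_bound C (r := 1) fun k => by
      simpa [p, FormalMultilinearSeries.ofScalars_norm] using ha k
  have hp : HasFPowerSeriesOnBall p.sum p 0 p.radius :=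
    p.hasFPowerSeriesOnBall (zero_lt_one.trans_le hrad)
  have hsum : p.sum = fun u => ∑' k, a k * u ^ k :=
    FormalMultilinearSeries.ofScalarsSum_eq_tsum a
  have hana : AnalyticOnNhd ℝ p.sum (Ioo (-1) 1) := fun u hu =>
    hp.analyticAt_of_mem <| Metric.eball_subset_eball hrad <| by
      simpa [Real.enorm_eq_ofReal_abs, abs_lt] using hu
  have hzero : EqOn p.sum 0 (Ioo (-1) 1) :=
    hana.eqOn_zero_of_preconnected_of_eventuallyEq_zero isPreconnected_Ioo hu₀ (hsum ▸ h)
  have hp0 : p = 0 := hp.hasFPowerSeriesAt.eq_zero_of_eventually <|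
    eventually_of_mem (Ioo_mem_nhds (by norm_num) (by norm_num)) hzero
  ext k
  exact (FormalMultilinearSeries.ofScalars_eq_zero ℝ k).mp (congrFun hp0 k)

theorem tsum_extend_zero_mul_pow {ι : Type*} {e : ι → ℕ} (he : Injective e) (d : ι → ℝ) (u : ℝ) :
    ∑' k, extend e d 0 k * u ^ k = ∑' i, d i * u ^ e i := by
  rw [← tsum_extend_zero he]
  congr 1
  ext k
  by_cases hk : ∃ i, e i = k
  · obtain ⟨i, rfl⟩ := hk
    simp only [he.extend_apply]
  · simp [extend_apply' _ _ _ hk]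

theorem eq_zero_of_tsum_exp_mul_eq_zero {ι : Type*} {e : ι → ℕ} (he : Injective e) {d : ι → ℝ}
    {C : ℝ} (hd : ∀ i, |d i| ≤ C) {τ : ℝ} (hτ : 0 < τ)
    (h : ∀ t ∈ Ioc 0 τ, ∑' i, Real.exp (-(e i : ℝ) * t) * d i = 0) : d = 0 := by
  have hbound : ∀ k, |extend e d 0 k| ≤ max C 0 := by
    intro k
    by_cases hk : ∃ i, e i = k
    · obtain ⟨i, rfl⟩ := hk
      simpa only [he.extend_apply] using le_max_of_le_left (hd i)
    · simp [extend_apply' _ _ _ hk]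
  have hvanish : ∀ u ∈ Ioo (Real.exp (-τ)) 1, ∑' k, extend e d 0 k * u ^ k = 0 := by
    intro u ⟨hτu, hu1⟩
    have hu0 : 0 < u := (Real.exp_pos _).trans hτu
    have ht : -Real.log u ∈ Ioc 0 τ :=
      ⟨neg_pos.mpr (Real.log_neg hu0 hu1), by linarith [(Real.le_log_iff_exp_le hu0).mpr hτu.le]⟩
    rw [tsum_extend_zero_mul_pow he, ← h _ ht]
    refine tsum_congr fun i => ?_
    rw [neg_mul_neg, Real.exp_nat_mul, Real.exp_log hu0, mul_comm]
  obtain ⟨u₀, hτu₀, hu₀1⟩ := exists_between (Real.exp_lt_one_iff.mpr (neg_lt_zero.mpr hτ))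
  have hext : extend e d 0 = 0 :=
    eq_zero_of_tsum_mul_pow_eventually_eq_zero hbound
      ⟨by linarith [Real.exp_pos (-τ)], hu₀1⟩
      (eventually_of_mem (Ioo_mem_nhds hτu₀ hu₀1) hvanish)
  ext i
  simpa only [he.extend_apply, Pi.zero_apply] using congrFun hext (e i)

theorem stmt_14_general
    (a₁ a₂ : ℝ) (ha : a₁ < a₂)
    (τ : ℝ) (hτ : 0 < τ)
    (b : ℝ → ℝ)
    (c : ℕ+ → ℝ) (hc : Summable fun n : ℕ+ => (c n) ^ 2)
    (hvanish : ∀ s t : ℝ, 0 ≤ s → s < t → t ≤ τ → ∀ ξ ∈ Set.Ioo a₁ a₂,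
      ∑' n : ℕ+, Real.exp (-(n : ℝ) ^ 2 * (t - s) + ∫ r in s..t, b r) * c n *
        Real.sin ((n : ℝ) * ξ) = 0) :
    ∀ n : ℕ+, c n = 0 := by
  intro n
  obtain ⟨ξ, hξ, hsin⟩ := Real.exists_mem_Ioo_sin_mul_ne_zero (x := n) (by positivity) ha
  set d : ℕ+ → ℝ := fun m => c m * Real.sin (m * ξ)
  have hd : ∀ m, |d m| ≤ √(∑' k, c k ^ 2) := fun m =>
    calc |d m| ≤ |c m| := by
          simpa [d, abs_mul] using mul_le_of_le_one_right (abs_nonneg _) (Real.abs_sin_le_one _)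
      _ ≤ √(∑' k, c k ^ 2) := Real.abs_le_sqrt (hc.le_tsum m fun _ _ => sq_nonneg _)
  have hheat : ∀ t ∈ Ioc 0 τ, ∑' m : ℕ+, Real.exp (-(((m : ℕ) ^ 2 : ℕ) : ℝ) * t) * d m = 0 := by
    intro t ⟨ht0, htτ⟩
    have h := hvanish 0 t le_rfl ht0 htτ ξ hξ
    have hterm : ∀ m : ℕ+, Real.exp (-(m : ℝ) ^ 2 * (t - 0) + ∫ r in (0 : ℝ)..t, b r) * c m *
        Real.sin (m * ξ) = Real.exp (∫ r in (0 : ℝ)..t, b r) *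
          (Real.exp (-(((m : ℕ) ^ 2 : ℕ) : ℝ) * t) * d m) := fun m => by
      simp only [d, sub_zero, Real.exp_add]; push_cast; ring
    rw [tsum_congr hterm, tsum_mul_left] at h
    exact (mul_eq_zero.mp h).resolve_left (Real.exp_ne_zero _)
  have hdn := congrFun (eq_zero_of_tsum_exp_mul_eq_zero
    (fun m m' h => PNat.coe_injective (Nat.pow_left_injective two_ne_zero h)) hd hτ hheat) n
  exact (mul_eq_zero.mp hdn).resolve_right hsin

/-- unique continuation for the heat series: if
`Σ exp(−n²(t−s) + ∫ₛᵗ b) · c_n · sin(nξ) = 0` for all `0 ≤ s < t ≤ τ` and all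
`ξ ∈ (a₁,a₂)`, then `c_n = 0` for every `n ≥ 1`. -/
theorem stmt_14
    (a₁ a₂ : ℝ) (ha₁ : 0 ≤ a₁) (ha : a₁ < a₂) (ha₂ : a₂ ≤ Real.pi)
    (τ : ℝ) (hτ : 0 < τ)
    (b : ℝ → ℝ) (hb : ContinuousOn b (Set.Icc 0 τ))
    (c : ℕ+ → ℝ) (hc : Summable fun n : ℕ+ => (c n) ^ 2)
    (hvanish : ∀ s t : ℝ, 0 ≤ s → s < t → t ≤ τ → ∀ ξ ∈ Set.Ioo a₁ a₂,
      ∑' n : ℕ+, Real.exp (-(n : ℝ) ^ 2 * (t - s) + ∫ r in s..t, b r) * c n *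
        Real.sin ((n : ℝ) * ξ) = 0) :
    ∀ n : ℕ+, c n = 0 :=
  stmt_14_general a₁ a₂ ha τ hτ b c hc hvanish
end

section
/- Let X be a real Banach space, 0 ≤ s ≤ τ, and let R(t,r) ∈ L(X) for s ≤ r ≤ t ≤ τ be a family of bounded linear operators with (t,r) ↦ R(t,r)x continuous for every x ∈ X and uniformly bounded in operator norm. Let u : [s,τ] → X be continuous and set H(v) = ∫ₛᵛ u(w) dw. Suppose given, for each r ∈ [s,τ] and v ∈ [s,r], linear maps G(r,v) and G'(r,v) (defined on a subspace of X containing all relevant elements) such that: (i) for each r, the map v ↦ G(r,v)(H(v)) is differentiable on [s,r] with derivative G'(r,v)(H(v)) + G(r,v)(u(v)); (ii) the maps (r,v) ↦ G(r,v)(u(v)) and (r,v) ↦ G'(r,v)(H(v)) are continuous, so that all iterated integrals below exist. Assume moreover the variation-of-constants identity u(t) = R(t,s)y − ∫ₛᵗ R(t,r)(∫ₛʳ G(r,v)(u(v)) dv) dr holds for all t ∈ [s,τ], where y = u(s). Then for all t ∈ [s,τ]: u(t) = R(t,s)y + ∫ₛᵗ R(t,r) P(r) dr, where P(r) = −G(r,r)(∫ₛʳ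 u(v) dv) + ∫ₛʳ G'(r,v)(∫ₛᵛ u(w) dw) dv. -/
/-!
Integrating by parts in the inner variable, `∫ₛʳ G(r,v) u(v) dv = G(r,r) H(r) − ∫ₛʳ G'(r,v) H(v) dv`
with `H(v) = ∫ₛᵛ u`, since `H(s) = 0`. Substituting this into the variation-of-constants
identity and pulling the sign through the linear maps `R(t,r)` gives the representation.
-/

open MeasureTheory Set

theorem intervalIntegral.integral_eq_sub_sub_integral_of_hasDerivWithinAt_add
    {E : Type*} [NormedAddCommGroup E] [NormedSpace ℝ E] [CompleteSpace E]
    {F f g : ℝ → E} {a b : ℝ} (hab : a ≤ b)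
    (hF : ∀ v ∈ Icc a b, HasDerivWithinAt F (f v + g v) (Icc a b) v)
    (hf : ContinuousOn f (Icc a b)) (hg : ContinuousOn g (Icc a b)) :
    ∫ v in a..b, g v = F b - F a - ∫ v in a..b, f v := by
  have hfi : IntervalIntegrable f volume a b := hf.intervalIntegrable_of_Icc hab
  have hgi : IntervalIntegrable g volume a b := hg.intervalIntegrable_of_Icc hab
  have hftc : ∫ v in a..b, (f v + g v) = F b - F a :=
    intervalIntegral.integral_eq_sub_of_hasDerivAt_of_le hab
      (fun v hv => (hF v hv).continuousWithinAt)
      (fun v hv => (hF v (Ioo_subset_Icc_self hv)).hasDerivAt (Icc_mem_nhds hv.1 hv.2))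
      (hfi.add hgi)
  rw [← hftc, intervalIntegral.integral_add hfi hgi]
  abel

theorem integral_apply_eq_apply_primitive_sub_integral
    {E : Type*} [NormedAddCommGroup E] [NormedSpace ℝ E] [CompleteSpace E]
    {G G' : ℝ → E →ₗ[ℝ] E} {u : ℝ → E} {s r : ℝ} (hsr : s ≤ r)
    (hderiv : ∀ v ∈ Icc s r,
      HasDerivWithinAt (fun v' => G v' (∫ w in s..v', u w))
        (G' v (∫ w in s..v, u w) + G v (u v)) (Icc s r) v)
    (hG : ContinuousOn (fun v => G v (u v)) (Icc s r))
    (hG' : ContinuousOn (fun v => G' v (∫ w in s..v, u w)) (Icc s r)) :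
    ∫ v in s..r, G v (u v) = G r (∫ w in s..r, u w) - ∫ v in s..r, G' v (∫ w in s..v, u w) := by
  rw [intervalIntegral.integral_eq_sub_sub_integral_of_hasDerivWithinAt_add hsr hderiv hG' hG,
    intervalIntegral.integral_same, map_zero, sub_zero]

theorem ContinuousOn.comp_prodMk_of_triangle
    {E : Type*} [TopologicalSpace E] {f : ℝ × ℝ → E} {s r τ : ℝ}
    (hf : ContinuousOn f {p : ℝ × ℝ | s ≤ p.2 ∧ p.2 ≤ p.1 ∧ p.1 ≤ τ}) (hrτ : r ≤ τ) :
    ContinuousOn (fun v => f (r, v)) (Icc s r) :=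
  hf.comp (Continuous.prodMk_right r).continuousOn fun _ hv => ⟨hv.1, hv.2, hrτ⟩

theorem stmt_15_general
    {X : Type*} [NormedAddCommGroup X] [NormedSpace ℝ X] [CompleteSpace X]
    (s τ : ℝ)
    (R : ℝ → ℝ → X →L[ℝ] X)
    (u : ℝ → X)
    (G G' : ℝ → ℝ → X →ₗ[ℝ] X)
    -- (i) differentiability: d/dv [G(r,v)(H(v))] = G'(r,v)(H(v)) + G(r,v)(u(v))
    (hderiv : ∀ r ∈ Set.Icc s τ, ∀ v ∈ Set.Icc s r,
      HasDerivWithinAt (fun v' : ℝ => G r v' (∫ w in s..v', u w))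
        (G' r v (∫ w in s..v, u w) + G r v (u v)) (Set.Icc s r) v)
    -- (ii) continuity of (r,v) ↦ G(r,v)(u(v)) and (r,v) ↦ G'(r,v)(H(v))
    (hG_cont : ContinuousOn (fun p : ℝ × ℝ => G p.1 p.2 (u p.2))
      {p : ℝ × ℝ | s ≤ p.2 ∧ p.2 ≤ p.1 ∧ p.1 ≤ τ})
    (hG'_cont : ContinuousOn (fun p : ℝ × ℝ => G' p.1 p.2 (∫ w in s..p.2, u w))
      {p : ℝ × ℝ | s ≤ p.2 ∧ p.2 ≤ p.1 ∧ p.1 ≤ τ})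
    -- the variation-of-constants identity
    (hvoc : ∀ t ∈ Set.Icc s τ,
      u t = R t s (u s) - ∫ r in s..t, R t r (∫ v in s..r, G r v (u v))) :
    ∀ t ∈ Set.Icc s τ,
      u t = R t s (u s) + ∫ r in s..t, R t r
        (-(G r r (∫ v in s..r, u v)) +
          ∫ v in s..r, G' r v (∫ w in s..v, u w)) := by
  intro t ht
  rw [hvoc t ht, sub_eq_add_neg, ← intervalIntegral.integral_neg]
  congr 1
  refine intervalIntegral.integral_congr fun r hr => ?_
  rw [uIcc_of_le ht.1] at hr
  have hrτ : r ≤ τ := hr.2.trans ht.2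
  have hparts := integral_apply_eq_apply_primitive_sub_integral hr.1
    (hderiv r ⟨hr.1, hrτ⟩) (hG_cont.comp_prodMk_of_triangle hrτ)
    (hG'_cont.comp_prodMk_of_triangle hrτ)
  rw [hparts, ← map_neg, neg_sub, sub_eq_neg_add]

/-- from the variation-of-constants identity
`u(t) = R(t,s)y − ∫ₛᵗ R(t,r)(∫ₛʳ G(r,v)u(v)dv)dr` one deduces
`u(t) = R(t,s)y + ∫ₛᵗ R(t,r)P(r)dr` with
`P(r) = −G(r,r)(∫ₛʳ u) + ∫ₛʳ G'(r,v)(∫ₛᵛ u)dv`. -/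
theorem stmt_15
    {X : Type*} [NormedAddCommGroup X] [NormedSpace ℝ X] [CompleteSpace X]
    (s τ : ℝ) (hs : 0 ≤ s) (hsτ : s ≤ τ)
    (R : ℝ → ℝ → X →L[ℝ] X)
    -- strong continuity of (t,r) ↦ R(t,r)x on the triangle s ≤ r ≤ t ≤ τ
    (hR_strong : ∀ x : X, ContinuousOn (fun p : ℝ × ℝ => R p.1 p.2 x)
      {p : ℝ × ℝ | s ≤ p.2 ∧ p.2 ≤ p.1 ∧ p.1 ≤ τ})
    -- uniform boundedness in operator norm
    (MR : ℝ) (hMR : ∀ t r : ℝ, s ≤ r → r ≤ t → t ≤ τ → ‖R t r‖ ≤ MR)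
    (u : ℝ → X) (hu : ContinuousOn u (Set.Icc s τ))
    (G G' : ℝ → ℝ → X →ₗ[ℝ] X)
    -- (i) differentiability: d/dv [G(r,v)(H(v))] = G'(r,v)(H(v)) + G(r,v)(u(v))
    (hderiv : ∀ r ∈ Set.Icc s τ, ∀ v ∈ Set.Icc s r,
      HasDerivWithinAt (fun v' : ℝ => G r v' (∫ w in s..v', u w))
        (G' r v (∫ w in s..v, u w) + G r v (u v)) (Set.Icc s r) v)
    -- (ii) continuity of (r,v) ↦ G(r,v)(u(v)) and (r,v) ↦ G'(r,v)(H(v))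
    (hG_cont : ContinuousOn (fun p : ℝ × ℝ => G p.1 p.2 (u p.2))
      {p : ℝ × ℝ | s ≤ p.2 ∧ p.2 ≤ p.1 ∧ p.1 ≤ τ})
    (hG'_cont : ContinuousOn (fun p : ℝ × ℝ => G' p.1 p.2 (∫ w in s..p.2, u w))
      {p : ℝ × ℝ | s ≤ p.2 ∧ p.2 ≤ p.1 ∧ p.1 ≤ τ})
    -- the variation-of-constants identity
    (hvoc : ∀ t ∈ Set.Icc s τ,
      u t = R t s (u s) - ∫ r in s..t, R t r (∫ v in s..r, G r v (u v))) :
    ∀ t ∈ Set.Icc s τ,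
      u t = R t s (u s) + ∫ r in s..t, R t r
        (-(G r r (∫ v in s..r, u v)) +
          ∫ v in s..r, G' r v (∫ w in s..v, u w)) :=
  stmt_15_general s τ R u G G' hderiv hG_cont hG'_cont hvoc
end
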